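/- arXiv:2205.07115 — 13 statements merged into one kernel-verified Lean document; each statement's English description precedes it below -/
import Mathlib

section
/- Let n ≥ 2 be an integer, Ω > 0, σ > 0, m_min > 0. Let y_1, ..., y_n ∈ ℝ² be pairwise distinct points with ‖y_j‖_∞ < (n−1)π/(6Ω) for all j, and let a_1, ..., a_n ∈ ℂ with |a_j| ≥ m_min for all j. Let W : [0,Ω]² → ℂ satisfy |W(ω)| < σ for all ω ∈ [0,Ω]². Assume the separation condition min_{p≠j} ‖y_p − y_j‖₁ ≥ (16.6π(n−1)/Ω)·(σ/m_min)^{1/(2n−2)}. Then for every integer q with 1 ≤ q < n, every choice of complex amplitudes â_1, ..., â_q ∈ ℂ and points ŷ_1, ..., ŷ_q ∈ ℝ², there exists ω ∈ [0,Ω]² such that |Σ_{j=1}^q â_j e^{i ŷ_j·ω} − (Σ_{j=1}^n a_j e^{i y_j·ω} + W(ω))| ≥ σ. That is, no σ-admissible measure of the measurement Y(ω) = Σ_{j=1}^n a_j e^{i y_j·ω} + W(ω) has fewer than n supports. -/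
set_option maxHeartbeats 1000000

open Finset

noncomputable def dot2 (x y : ℝ × ℝ) : ℝ := x.1 * y.1 + x.2 * y.2
noncomputable def norm1 (x : ℝ × ℝ) : ℝ := |x.1| + |x.2|
noncomputable def normInf (x : ℝ × ℝ) : ℝ := max |x.1| |x.2|

lemma abs_exp_I_sub_one (θ : ℝ) :
    norm (Complex.exp (Complex.I * θ) - 1) = 2 * |Real.sin (θ/2)| := by
  have h : Complex.exp (Complex.I * θ) - 1 = Complex.mk (Real.cos θ - 1) (Real.sin θ) := by
    rw [mul_comm, Complex.exp_mul_I]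
    apply Complex.ext <;> simp [Complex.cos_ofReal_re, Complex.sin_ofReal_re]
  rw [h, Complex.norm_def, Complex.normSq_mk]
  have h2 : (Real.cos θ - 1) * (Real.cos θ - 1) + Real.sin θ * Real.sin θ
      = (2 * |Real.sin (θ/2)|) ^ 2 := by
    have := Real.sin_sq_eq_half_sub (θ/2)
    have hpyth := Real.sin_sq_add_cos_sq θ
    have habs : |Real.sin (θ/2)| ^ 2 = Real.sin (θ/2) ^ 2 := sq_abs _
    have h3 : (2:ℝ) * (θ/2) = θ := by ring
    rw [h3] at this
    nlinarith [this, hpyth, habs]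
  rw [h2, Real.sqrt_sq (by positivity)]

lemma chord_lb (θ : ℝ) (hθ : |θ| ≤ Real.pi) :
    2 / Real.pi * |θ| ≤ norm (Complex.exp (Complex.I * θ) - 1) := by
  rw [abs_exp_I_sub_one]
  have h1 : |θ| / 2 ≤ Real.pi / 2 := by linarith
  have h2 : 2 / Real.pi * (|θ|/2) ≤ Real.sin (|θ|/2) :=
    Real.mul_le_sin (by positivity) h1
  have h3 : Real.sin (|θ|/2) ≤ |Real.sin (θ/2)| := by
    rcases abs_cases θ with ⟨h, _⟩ | ⟨h, _⟩
    · rw [h]; exact le_abs_self _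
    · rw [h]
      rw [show -θ/2 = -(θ/2) by ring, Real.sin_neg]
      exact neg_le_abs _
  nlinarith [h2, h3]

lemma chord_diff (η x x' : ℝ) (h : η * |x - x'| ≤ Real.pi) (hη : 0 ≤ η) :
    2 / Real.pi * (η * |x - x'|) ≤
      norm (Complex.exp (Complex.I * (η * x : ℝ)) - Complex.exp (Complex.I * (η * x' : ℝ))) := by
  have key : Complex.exp (Complex.I * (η * x : ℝ)) - Complex.exp (Complex.I * (η * x' : ℝ))
      = Complex.exp (Complex.I * (η * x' : ℝ)) * (Complex.exp (Complex.I * (η * (x - x') : ℝ)) - 1) := by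
    rw [mul_sub, mul_one, ← Complex.exp_add]
    congr 1
    push_cast
    ring
  rw [key, norm_mul]
  have habs : norm (Complex.exp (Complex.I * (η * x' : ℝ))) = 1 := by
    rw [mul_comm]
    exact Complex.norm_exp_ofReal_mul_I _
  rw [habs, one_mul]
  have h4 : |(η * (x - x') : ℝ)| = η * |x - x'| := by
    rw [abs_mul, abs_of_nonneg hη]
  calc 2 / Real.pi * (η * |x - x'|) = 2 / Real.pi * |(η * (x - x') : ℝ)| := by rw [h4]
    _ ≤ _ := chord_lb _ (by rw [h4]; exact h)


theorem stmt0 (n : ℕ) (hn : 2 ≤ n) (Ω σ mmin : ℝ) (hΩ : 0 < Ω) (hσ : 0 < σ)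
    (hmmin : 0 < mmin) (y : Fin n → ℝ × ℝ) (a : Fin n → ℂ)
    (hy_distinct : Function.Injective y)
    (hy : ∀ j, normInf (y j) < ((n : ℝ) - 1) * Real.pi / (6 * Ω))
    (ha : ∀ j, mmin ≤ norm (a j))
    (W : ℝ × ℝ → ℂ)
    (hW : ∀ ω : ℝ × ℝ, ω.1 ∈ Set.Icc 0 Ω → ω.2 ∈ Set.Icc 0 Ω → norm (W ω) < σ)
    (hsep : ∀ p j, p ≠ j →
      16.6 * Real.pi * ((n : ℝ) - 1) / Ω * (σ / mmin) ^ ((1 : ℝ) / (2 * (n : ℝ) - 2)) ≤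
        norm1 (y p - y j)) :
    ∀ q : ℕ, 1 ≤ q → q < n → ∀ (ahat : Fin q → ℂ) (yhat : Fin q → ℝ × ℝ),
      ∃ ω : ℝ × ℝ, ω.1 ∈ Set.Icc 0 Ω ∧ ω.2 ∈ Set.Icc 0 Ω ∧
        σ ≤ norm
          ((∑ j, ahat j * Complex.exp (Complex.I * (dot2 (yhat j) ω : ℝ))) -
            ((∑ j, a j * Complex.exp (Complex.I * (dot2 (y j) ω : ℝ))) + W ω)) := by
  intro q hq hqn ahat yhat
  by_contra hcon
  push_neg at hcon
  -- basic numeric facts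
  have hπ := Real.pi_pos
  have hn2 : (2:ℝ) ≤ (n:ℝ) := by exact_mod_cast hn
  have hn1 : (1:ℝ) ≤ (n:ℝ) - 1 := by linarith
  have hden : (0:ℝ) < 2 * (n:ℝ) - 2 := by linarith
  set r : ℝ := (σ / mmin) ^ ((1 : ℝ) / (2 * (n : ℝ) - 2)) with hr_def
  have hr : 0 < r := Real.rpow_pos_of_pos (by positivity) _
  set η : ℝ := Ω / (2 * (n:ℝ) - 2) with hη_def
  have hη : 0 < η := by positivity
  set D : ℝ := 16.6 * Real.pi * ((n : ℝ) - 1) / Ω * r with hD_def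
  have hD : 0 < D := by positivity
  set ρ : ℝ := η * D / Real.pi with hρ_def
  have hρ : 0 < ρ := by positivity
  have hρval : ρ = 8.3 * r := by
    rw [hρ_def, hη_def, hD_def]
    field_simp
    ring
  -- the combined atoms
  set pt : Fin q ⊕ Fin n → ℝ × ℝ := Sum.elim yhat y with hpt
  set b : Fin q ⊕ Fin n → ℂ := Sum.elim ahat (fun j => -a j) with hb
  set μ1 : Fin q ⊕ Fin n → ℂ := fun t => Complex.exp (Complex.I * ((η * (pt t).1 : ℝ) : ℂ)) with hμ1
  set μ2 : Fin q ⊕ Fin n → ℂ := fun t => Complex.exp (Complex.I * ((η * (pt t).2 : ℝ) : ℂ)) with hμ2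
  have habsμ1 : ∀ t : Fin q ⊕ Fin n, norm (μ1 t) = 1 := by
    intro t; rw [hμ1]; simp [Complex.norm_exp, Complex.mul_re]
  have habsμ2 : ∀ t : Fin q ⊕ Fin n, norm (μ2 t) = 1 := by
    intro t; rw [hμ2]; simp [Complex.norm_exp, Complex.mul_re]
  set k : ℕ := 2 * n - 2 with hk_def
  have hkcast : (k : ℝ) = 2 * (n:ℝ) - 2 := by
    rw [hk_def]
    have : 2 ≤ 2 * n := by omega
    push_cast [Nat.cast_sub this]
    ring
  -- the sampled error function on the exponent grid
  set g : ℕ × ℕ → ℂ := fun l => ∑ t : Fin q ⊕ Fin n, b t * (μ1 t ^ l.1 * μ2 t ^ l.2) with hg_def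
  have hg : ∀ l : ℕ × ℕ, l.1 + l.2 ≤ k → norm (g l) < 2 * σ := by
    intro l hl
    set ω : ℝ × ℝ := ((l.1 : ℝ) * η, (l.2 : ℝ) * η) with hω_def
    have hmem : ∀ m : ℕ, m ≤ k → (m : ℝ) * η ∈ Set.Icc 0 Ω := by
      intro m hm
      constructor
      · positivity
      · have h1 : (m : ℝ) ≤ (k : ℝ) := by exact_mod_cast hm
        have h2 : (m : ℝ) * η ≤ (k : ℝ) * η :=
          mul_le_mul_of_nonneg_right h1 hη.le
        have h3 : (k : ℝ) * η = Ω := by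
          rw [hkcast, hη_def]; field_simp
        linarith
    have hω1 : ω.1 ∈ Set.Icc 0 Ω := hmem l.1 (by omega)
    have hω2 : ω.2 ∈ Set.Icc 0 Ω := hmem l.2 (by omega)
    have hE : ∀ p : ℝ × ℝ,
        Complex.exp (Complex.I * ((η * p.1 : ℝ) : ℂ)) ^ l.1 *
          Complex.exp (Complex.I * ((η * p.2 : ℝ) : ℂ)) ^ l.2
        = Complex.exp (Complex.I * ((dot2 p ω : ℝ) : ℂ)) := by
      intro p
      rw [← Complex.exp_nat_mul, ← Complex.exp_nat_mul, ← Complex.exp_add]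
      congr 1
      rw [hω_def]
      simp only [dot2]
      push_cast
      ring
    have hgeq : g l = (∑ j, ahat j * Complex.exp (Complex.I * (dot2 (yhat j) ω : ℝ))) -
        (∑ j, a j * Complex.exp (Complex.I * (dot2 (y j) ω : ℝ))) := by
      rw [hg_def]
      simp only [Fintype.sum_sum_type]
      rw [sub_eq_add_neg, ← Finset.sum_neg_distrib]
      congr 1
      · apply Finset.sum_congr rfl
        intro j _
        rw [hμ1, hμ2, hb, hpt]
        simp only [Sum.elim_inl]
        rw [hE (yhat j)]
      · apply Finset.sum_congr rfl
        intro j _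
        rw [hμ1, hμ2, hb, hpt]
        simp only [Sum.elim_inr]
        rw [hE (y j)]
        ring
    have h1 := hcon ω hω1 hω2
    have h2 := hW ω hω1 hω2
    have h3 : g l = ((∑ j, ahat j * Complex.exp (Complex.I * (dot2 (yhat j) ω : ℝ))) -
        ((∑ j, a j * Complex.exp (Complex.I * (dot2 (y j) ω : ℝ))) + W ω)) + W ω := by
      rw [hgeq]; ring
    calc norm (g l) ≤ _ + norm (W ω) := by
          rw [h3]; exact norm_add_le _ _
      _ < σ + σ := by exact add_lt_add h1 h2
      _ = 2 * σ := by ring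
  -- chordal separation of true nodes
  set Rb : ℝ := ((n:ℝ) - 1) * Real.pi / (6 * Ω) with hRb_def
  have hRb : 0 < Rb := by positivity
  have hηRb : η * (2 * Rb) ≤ Real.pi := by
    rw [hη_def, hRb_def]
    rw [div_mul_eq_mul_div, div_le_iff₀ hden]
    have : Ω * (2 * (((n:ℝ) - 1) * Real.pi / (6 * Ω))) = Real.pi * (((n:ℝ)-1)/3) := by
      field_simp; ring
    rw [this]
    nlinarith [hπ, hn1]
  have hchordC : ∀ x x' : ℝ, |x| < Rb → |x'| < Rb → D/2 ≤ |x - x'| →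
      ρ ≤ norm (Complex.exp (Complex.I * ((η * x : ℝ) : ℂ)) -
            Complex.exp (Complex.I * ((η * x' : ℝ) : ℂ))) := by
    intro x x' hx hx' hd
    have hxx : |x - x'| ≤ 2 * Rb := by
      have := abs_sub_abs_le_abs_sub x x'
      have h1 : |x - x'| ≤ |x| + |x'| := abs_sub _ x'
      linarith
    have hbound : η * |x - x'| ≤ Real.pi := by
      have := mul_le_mul_of_nonneg_left hxx hη.le
      linarith
    have := chord_diff η x x' hbound hη.le
    have h2 : ρ ≤ 2 / Real.pi * (η * |x - x'|) := by
      have h3 : η * (D/2) ≤ η * |x - x'| := mul_le_mul_of_nonneg_left hd hη.le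
      calc ρ = 2 / Real.pi * (η * (D/2)) := by rw [hρ_def]; field_simp
        _ ≤ 2 / Real.pi * (η * |x - x'|) :=
          mul_le_mul_of_nonneg_left h3 (by positivity)
    linarith
  have hTrueSep : ∀ p j : Fin n, p ≠ j →
      ρ ≤ max (norm (μ1 (Sum.inr p) - μ1 (Sum.inr j)))
            (norm (μ2 (Sum.inr p) - μ2 (Sum.inr j))) := by
    intro p j hpj
    have hs := hsep p j hpj
    have hN : D / 2 ≤ normInf (y p - y j) := by
      have h1 : norm1 (y p - y j) ≤ 2 * normInf (y p - y j) := by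
        simp only [norm1, normInf]
        have := le_max_left |(y p - y j).1| |(y p - y j).2|
        have := le_max_right |(y p - y j).1| |(y p - y j).2|
        linarith
      simp only [hD_def] at hs ⊢
      linarith
    have hyp := hy p
    have hyj := hy j
    simp only [normInf] at hN hyp hyj
    rcases le_max_iff.mp hN with h1 | h2
    · refine le_trans ?_ (le_max_left _ _)
      rw [hμ1, hpt]
      simp only [Sum.elim_inr]
      have := hchordC (y p).1 (y j).1 (lt_of_le_of_lt (le_max_left _ _) hyp)
        (lt_of_le_of_lt (le_max_left _ _) hyj) (by
          have : (y p - y j).1 = (y p).1 - (y j).1 := rfl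
          rw [this] at h1; exact h1)
      exact this
    · refine le_trans ?_ (le_max_right _ _)
      rw [hμ2, hpt]
      simp only [Sum.elim_inr]
      have := hchordC (y p).2 (y j).2 (lt_of_le_of_lt (le_max_right _ _) hyp)
        (lt_of_le_of_lt (le_max_right _ _) hyj) (by
          have : (y p - y j).2 = (y p).2 - (y j).2 := rfl
          rw [this] at h2; exact h2)
      exact this
  -- pigeonhole: a true node far from all spurious nodes
  have hpig : ∃ j0 : Fin n, ∀ s : Fin q,
      ρ/2 ≤ max (norm (μ1 (Sum.inr j0) - μ1 (Sum.inl s)))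
               (norm (μ2 (Sum.inr j0) - μ2 (Sum.inl s))) := by
    by_contra hc
    push_neg at hc
    choose f hf using hc
    have hcard : Fintype.card (Fin q) < Fintype.card (Fin n) := by simpa using hqn
    obtain ⟨p, j, hpj, hfeq⟩ := Fintype.exists_ne_map_eq_of_card_lt f hcard
    have h1 := hf p
    have h2 := hf j
    rw [hfeq] at h1
    have hT := hTrueSep p j hpj
    have tri : ∀ A B C : ℂ, norm (A - B) ≤ norm (A - C) + norm (C - B) :=
      fun A B C => norm_sub_le_norm_sub_add_norm_sub A C B
    rw [← hfeq] at h2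
    have h1' := hf p
    have hA : norm (μ1 (Sum.inr p) - μ1 (Sum.inr j)) < ρ := by
      calc norm (μ1 (Sum.inr p) - μ1 (Sum.inr j))
          ≤ norm (μ1 (Sum.inr p) - μ1 (Sum.inl (f p))) +
            norm (μ1 (Sum.inl (f p)) - μ1 (Sum.inr j)) := tri _ _ _
        _ = norm (μ1 (Sum.inr p) - μ1 (Sum.inl (f p))) +
            norm (μ1 (Sum.inr j) - μ1 (Sum.inl (f p))) := by
            rw [norm_sub_rev (μ1 (Sum.inl (f p)))]
        _ < ρ/2 + ρ/2 := add_lt_add (lt_of_le_of_lt (le_max_left _ _) h1')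
            (lt_of_le_of_lt (le_max_left _ _) h2)
        _ = ρ := by ring
    have hB : norm (μ2 (Sum.inr p) - μ2 (Sum.inr j)) < ρ := by
      calc norm (μ2 (Sum.inr p) - μ2 (Sum.inr j))
          ≤ norm (μ2 (Sum.inr p) - μ2 (Sum.inl (f p))) +
            norm (μ2 (Sum.inl (f p)) - μ2 (Sum.inr j)) := tri _ _ _
        _ = norm (μ2 (Sum.inr p) - μ2 (Sum.inl (f p))) +
            norm (μ2 (Sum.inr j) - μ2 (Sum.inl (f p))) := by
            rw [norm_sub_rev (μ2 (Sum.inl (f p)))]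
        _ < ρ/2 + ρ/2 := add_lt_add (lt_of_le_of_lt (le_max_right _ _) h1')
            (lt_of_le_of_lt (le_max_right _ _) h2)
        _ = ρ := by ring
    exact absurd hT (not_le.mpr (max_lt hA hB))
  obtain ⟨j0, hj0⟩ := hpig
  classical
  set cnd : Fin q ⊕ Fin n → Prop := fun s =>
    norm (μ2 (Sum.inr j0) - μ2 s) ≤ norm (μ1 (Sum.inr j0) - μ1 s) with hcnd_def
  set m : (Fin q ⊕ Fin n) → (Fin q ⊕ Fin n) → ℂ :=
    fun s t => if cnd s then μ1 t - μ1 s else μ2 t - μ2 s with hm_def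
  set cc : (Fin q ⊕ Fin n) → ℂ := fun s => if cnd s then μ1 s else μ2 s with hcc_def
  set sh : (Fin q ⊕ Fin n) → ℕ × ℕ → ℕ × ℕ :=
    fun s l => if cnd s then (l.1+1, l.2) else (l.1, l.2+1) with hsh_def
  set G : Finset (Fin q ⊕ Fin n) → ℕ × ℕ → ℂ :=
    fun O l => ∑ t, b t * ((∏ s ∈ O, m s t) * (μ1 t ^ l.1 * μ2 t ^ l.2)) with hG_def
  have hG0 : ∀ l, G ∅ l = g l := by
    intro l; rw [hG_def, hg_def]; simp
  have hGrec : ∀ s O, s ∉ O → ∀ l, G (insert s O) l = G O (sh s l) - cc s * G O l := by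
    intro s O hs l
    rw [hG_def]
    dsimp only
    rw [Finset.mul_sum, ← Finset.sum_sub_distrib]
    apply Finset.sum_congr rfl
    intro t _
    rw [Finset.prod_insert hs]
    rw [hm_def, hcc_def, hsh_def]
    dsimp only
    by_cases hc : cnd s
    · rw [if_pos hc, if_pos hc, if_pos hc]
      dsimp only
      rw [pow_succ]
      ring
    · rw [if_neg hc, if_neg hc, if_neg hc]
      dsimp only
      rw [pow_succ]
      ring
  have hGbound : ∀ O : Finset (Fin q ⊕ Fin n), ∀ l : ℕ × ℕ,
      l.1 + l.2 + O.card ≤ k → norm (G O l) ≤ 2 * σ * 2 ^ O.card := by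
    intro O
    induction O using Finset.induction_on with
    | empty =>
      intro l hl
      rw [hG0]
      simpa using (hg l (by simpa using hl)).le
    | @insert s O hs ih =>
      intro l hl
      rw [hGrec s O hs]
      rw [Finset.card_insert_of_notMem hs] at hl ⊢
      have hshsum : (sh s l).1 + (sh s l).2 = l.1 + l.2 + 1 := by
        rw [hsh_def]; dsimp only; split_ifs <;> dsimp only <;> omega
      have hb1 : norm (G O (sh s l)) ≤ 2*σ*2^O.card := ih (sh s l) (by omega)
      have hb2 : norm (G O l) ≤ 2*σ*2^O.card := ih l (by omega)
      have habsc : norm (cc s) = 1 := by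
        rw [hcc_def]; dsimp only; split_ifs
        exacts [habsμ1 _, habsμ2 _]
      have htri : norm (G O (sh s l) - cc s * G O l) ≤
          norm (G O (sh s l)) + norm (cc s * G O l) := by
        have := norm_sub_le (G O (sh s l)) (cc s * G O l)
        simpa using this
      rw [norm_mul, habsc, one_mul] at htri
      have hps : (2:ℝ)^(O.card+1) = 2^O.card * 2 := pow_succ 2 O.card
      calc norm (G O (sh s l) - cc s * G O l)
          ≤ 2*σ*2^O.card + 2*σ*2^O.card := by linarith
        _ = 2*σ*2^(O.card+1) := by rw [hps]; ring
  -- the main estimate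
  set OO := (Finset.univ : Finset (Fin q ⊕ Fin n)).erase (Sum.inr j0) with hOO_def
  have hcardOO : OO.card = q + n - 1 := by
    rw [hOO_def, Finset.card_erase_of_mem (Finset.mem_univ _)]
    simp
  have hcardk : OO.card ≤ k := by rw [hcardOO, hk_def]; omega
  have hmzero : ∀ t, m t t = 0 := by
    intro t; rw [hm_def]; dsimp only; split_ifs <;> exact sub_self _
  have hGOO : G OO (0,0) = b (Sum.inr j0) * ∏ s ∈ OO, m s (Sum.inr j0) := by
    rw [hG_def]
    dsimp only
    rw [← Finset.sum_erase_add _ _ (Finset.mem_univ (Sum.inr j0)), ← hOO_def]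
    have hz : ∀ t ∈ OO, b t * ((∏ s ∈ OO, m s t) * (μ1 t ^ (0:ℕ) * μ2 t ^ (0:ℕ))) = 0 := by
      intro t ht
      rw [Finset.prod_eq_zero (f := fun s => m s t) ht (hmzero t)]
      ring
    rw [Finset.sum_eq_zero hz]
    simp
  have hfac : ∀ s ∈ OO, ρ/2 ≤ norm (m s (Sum.inr j0)) := by
    intro s hs
    have hmax : ρ/2 ≤ max (norm (μ1 (Sum.inr j0) - μ1 s))
        (norm (μ2 (Sum.inr j0) - μ2 s)) := by
      rcases s with t | p
      · exact hj0 t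
      · have hp : p ≠ j0 := by
          intro h
          rw [hOO_def, Finset.mem_erase] at hs
          exact hs.1 (by rw [h])
        have := hTrueSep j0 p (Ne.symm hp)
        linarith [this]
    rw [hm_def]
    dsimp only
    by_cases hc : cnd s
    · rw [if_pos hc]
      have hc2 : norm (μ2 (Sum.inr j0) - μ2 s) ≤
          norm (μ1 (Sum.inr j0) - μ1 s) := by
        rw [hcnd_def] at hc; exact hc
      rw [max_eq_left hc2] at hmax
      exact hmax
    · rw [if_neg hc]
      have hc2 : norm (μ1 (Sum.inr j0) - μ1 s) ≤
          norm (μ2 (Sum.inr j0) - μ2 s) := by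
        rw [hcnd_def] at hc; exact (le_of_not_ge hc)
      rw [max_eq_right hc2] at hmax
      exact hmax
  have hprod : (ρ/2) ^ OO.card ≤ norm (∏ s ∈ OO, m s (Sum.inr j0)) := by
    rw [norm_prod]
    calc (ρ/2)^OO.card = ∏ _s ∈ OO, (ρ/2) := (Finset.prod_const _).symm
      _ ≤ ∏ s ∈ OO, norm (m s (Sum.inr j0)) :=
        Finset.prod_le_prod (fun i _ => by positivity) hfac
  have hbj0 : mmin ≤ norm (b (Sum.inr j0)) := by
    rw [hb]
    simp only [Sum.elim_inr, norm_neg]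
    exact ha j0
  have hkey : mmin * (ρ/2) ^ OO.card ≤ 2 * σ * 2 ^ OO.card := by
    calc mmin * (ρ/2)^OO.card
        ≤ norm (b (Sum.inr j0)) * norm (∏ s ∈ OO, m s (Sum.inr j0)) :=
          mul_le_mul hbj0 hprod (by positivity) (norm_nonneg _)
      _ = norm (G OO (0,0)) := by rw [hGOO, norm_mul]
      _ ≤ 2*σ*2^OO.card := hGbound OO (0,0) (by simpa using hcardk)
  have hkey2 : mmin * (ρ/4) ^ OO.card ≤ 2 * σ := by
    have h2p : (0:ℝ) < 2 ^ OO.card := by positivity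
    have heq : (ρ/2)^OO.card = (ρ/4)^OO.card * 2^OO.card := by
      rw [← mul_pow]; congr 1; ring
    rw [heq, ← mul_assoc] at hkey
    exact le_of_mul_le_mul_right hkey h2p
  -- ρ is small
  have hρsmall : ρ < 1/3 := by
    have h1n : 1 < n := by omega
    have hne : (⟨0, by omega⟩ : Fin n) ≠ ⟨1, by omega⟩ := by
      intro h
      have := congrArg Fin.val h
      simp at this
    have hs := hsep (⟨0, by omega⟩ : Fin n) ⟨1, by omega⟩ hne
    set u := y ⟨0, by omega⟩
    set v := y (⟨1, by omega⟩ : Fin n)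
    have hb1 : norm1 (u - v) ≤ 2 * normInf u + 2 * normInf v := by
      simp only [norm1, normInf]
      have e1 : (u - v).1 = u.1 - v.1 := rfl
      have e2 : (u - v).2 = u.2 - v.2 := rfl
      rw [e1, e2]
      have t1 : |u.1 - v.1| ≤ |u.1| + |v.1| := by
        calc |u.1 - v.1| = |u.1 + -v.1| := by ring_nf
          _ ≤ |u.1| + |(-v.1)| := abs_add_le _ _
          _ = |u.1| + |v.1| := by rw [abs_neg]
      have t2 : |u.2 - v.2| ≤ |u.2| + |v.2| := by
        calc |u.2 - v.2| = |u.2 + -v.2| := by ring_nf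
          _ ≤ |u.2| + |(-v.2)| := abs_add_le _ _
          _ = |u.2| + |v.2| := by rw [abs_neg]
      have m1 := le_max_left |u.1| |u.2|
      have m2 := le_max_right |u.1| |u.2|
      have m3 := le_max_left |v.1| |v.2|
      have m4 := le_max_right |v.1| |v.2|
      linarith
    have hD4 : D < 4 * Rb := by
      have h1 := hy (⟨0, by omega⟩ : Fin n)
      have h2 := hy (⟨1, by omega⟩ : Fin n)
      have : D ≤ norm1 (u - v) := hs
      linarith
    have hval : η * (4*Rb) / Real.pi = 1/3 := by
      rw [hη_def, hRb_def]
      have hn1ne : (n:ℝ) - 1 ≠ 0 := by linarith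
      have hΩne : Ω ≠ 0 := ne_of_gt hΩ
      rw [div_eq_div_iff (ne_of_gt hπ) (by norm_num : (3:ℝ) ≠ 0)]
      field_simp
      ring
    calc ρ = η * D / Real.pi := hρ_def
      _ < η * (4*Rb) / Real.pi := by
          apply div_lt_div_of_pos_right ?_ hπ
          exact mul_lt_mul_of_pos_left hD4 hη
      _ = 1/3 := hval
  have hρ4 : ρ/4 < 1 := by linarith
  have hmono : (ρ/4)^k ≤ (ρ/4)^OO.card :=
    pow_le_pow_of_le_one (by positivity) (by linarith) hcardk
  have hfin1 : mmin * (ρ/4)^k ≤ 2*σ :=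
    le_trans (mul_le_mul_of_nonneg_left hmono hmmin.le) hkey2
  have hrk : r ^ k = σ / mmin := by
    rw [hr_def, ← Real.rpow_natCast ((σ/mmin) ^ ((1:ℝ)/(2*(n:ℝ)-2))) k,
      ← Real.rpow_mul (by positivity : (0:ℝ) ≤ σ/mmin), hkcast]
    rw [one_div, inv_mul_cancel₀ (ne_of_gt hden), Real.rpow_one]
  have hρ4r : ρ/4 = 83/40 * r := by rw [hρval]; norm_num; ring
  have hfinal : (83/40:ℝ)^k * σ ≤ 2*σ := by
    have h6 : mmin * ((83/40:ℝ)^k * (σ/mmin)) ≤ 2*σ := by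
      rw [← hrk, ← mul_pow, ← hρ4r]; exact hfin1
    calc (83/40:ℝ)^k * σ = mmin * ((83/40:ℝ)^k * (σ/mmin)) := by
          field_simp
      _ ≤ 2*σ := h6
  have hk2 : 2 ≤ k := by rw [hk_def]; omega
  have hgr : ((83:ℝ)/40)^2 ≤ ((83:ℝ)/40)^k := pow_le_pow_right₀ (by norm_num) hk2
  have h5 : ((83:ℝ)/40)^2 * σ ≤ ((83:ℝ)/40)^k * σ := mul_le_mul_of_nonneg_right hgr hσ.le
  nlinarith [h5, hfinal, hσ]
end

section
/- Let n ≥ 2, Ω > 0, m_min > 0, and 0 < σ ≤ m_min. Let y_1, ..., y_n ∈ ℝ² be pairwise distinct with ‖y_j‖_∞ < (2n−1)π/(12Ω), and a_1, ..., a_n ∈ ℂ with |a_j| ≥ m_min. Let W : [0,Ω]² → ℂ with |W(ω)| < σ for all ω ∈ [0,Ω]², and set Y(ω) = Σ_{j=1}^n a_j e^{i y_j·ω} + W(ω). Set D_min = min_{p≠j} ‖y_p − y_j‖₁ and assume D_min ≥ (15.3π(n−1/2)/Ω)·(σ/m_min)^{1/(2n−1)}. Then: (1) every σ-admissible measure of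 Y supported in {x ∈ ℝ² : ‖x‖_∞ < (n−1)π/(6Ω)} has at least n supports, so any minimizer of the number of supports among σ-admissible measures supported in that region has exactly n supports; and (2) for any such minimizer μ̂ = Σ_{j=1}^n â_j δ_{ŷ_j}, there exists a permutation π of {1,...,n} such that ‖ŷ_{π(j)} − y_j‖₁ < D_min/2 and ‖ŷ_{π(j)} − y_j‖₁ ≤ (C(n)/Ω)·SRF^{2n−2}·(σ/m_min) for all j, where SRF = π/(D_min·Ω) and C(n) = (1+√3)^{2n−1}·2^{5n−1}·(2n−1)^{2n−1}·π / 3^{2n−0.5}. -/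
open Finset

lemma norm1_nonneg (v : ℝ × ℝ) : 0 ≤ norm1 v := by
  unfold norm1; positivity

lemma norm1_comm (u v : ℝ × ℝ) : norm1 (u - v) = norm1 (v - u) := by
  simp [norm1, Prod.fst_sub, Prod.snd_sub, abs_sub_comm]

lemma norm1_tri (u v w : ℝ × ℝ) : norm1 (u - w) ≤ norm1 (u - v) + norm1 (v - w) := by
  simp only [norm1, Prod.fst_sub, Prod.snd_sub]
  have h1 := abs_sub_le u.1 v.1 w.1
  have h2 := abs_sub_le u.2 v.2 w.2
  linarith

lemma norm1_pos {u v : ℝ × ℝ} (h : u ≠ v) : 0 < norm1 (u - v) := by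
  have h1 : u.1 ≠ v.1 ∨ u.2 ≠ v.2 := by
    by_contra hc
    push_neg at hc
    exact h (Prod.ext hc.1 hc.2)
  simp only [norm1, Prod.fst_sub, Prod.snd_sub]
  rcases h1 with h1 | h1
  · have := abs_pos.mpr (sub_ne_zero.mpr h1)
    have := abs_nonneg (u.2 - v.2)
    linarith
  · have := abs_pos.mpr (sub_ne_zero.mpr h1)
    have := abs_nonneg (u.1 - v.1)
    linarith

lemma sin_abs_lb {t : ℝ} (ht : |t| ≤ Real.pi / 12) : 2 / Real.pi * |t| ≤ |Real.sin t| := by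
  have hπ1 := Real.pi_gt_d6
  have hπ2 := Real.pi_lt_d2
  have key : ∀ u : ℝ, 0 ≤ u → u ≤ Real.pi / 12 → 2 / Real.pi * u ≤ Real.sin u := by
    intro u hu0 hu
    rcases eq_or_lt_of_le hu0 with h | h
    · simp [← h]
    · have h1 : u ≤ 1 := by nlinarith
      have h2 := Real.sin_gt_sub_cube h
      have h3 : u ^ 2 ≤ (Real.pi / 12) ^ 2 := by nlinarith
      rw [div_mul_eq_mul_div, div_le_iff₀ Real.pi_pos]
      have h4 : u ^ 3 ≤ u * (3.15 / 12) ^ 2 := by nlinarith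
      nlinarith [mul_lt_mul_of_pos_left h2 Real.pi_pos, h4, mul_pos h h, pow_pos h 3]
  rcases le_or_gt 0 t with h | h
  · have := key t h (by rwa [abs_of_nonneg h] at ht)
    rw [abs_of_nonneg h]
    exact le_trans this (le_abs_self _)
  · have habs : |t| = -t := abs_of_neg h
    have := key (-t) (by linarith) (by rwa [habs] at ht)
    rw [habs]
    calc 2 / Real.pi * (-t) ≤ Real.sin (-t) := this
    _ ≤ |Real.sin (-t)| := le_abs_self _
    _ = |Real.sin t| := by rw [Real.sin_neg, abs_neg]

lemma abs_exp_I_mul (r : ℝ) : ‖Complex.exp (Complex.I * (r : ℂ))‖ = 1 := by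
  rw [mul_comm]; exact Complex.norm_exp_ofReal_mul_I r

lemma abs_exp_sub (A B : ℝ) :
    ‖Complex.exp (Complex.I * (A : ℂ)) - Complex.exp (Complex.I * (B : ℂ))‖
      = 2 * |Real.sin ((A - B) / 2)| := by
  have key : Complex.exp (Complex.I * (A : ℂ)) - Complex.exp (Complex.I * (B : ℂ))
      = Complex.exp (Complex.I * (((A + B) / 2 : ℝ) : ℂ)) *
        (2 * Complex.sin (((A - B) / 2 : ℝ) : ℂ) * Complex.I) := by
    have e1 : Complex.I * (A : ℂ) =
        Complex.I * (((A + B) / 2 : ℝ) : ℂ) + (((A - B) / 2 : ℝ) : ℂ) * Complex.I := by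
      push_cast; ring
    have e2 : Complex.I * (B : ℂ) =
        Complex.I * (((A + B) / 2 : ℝ) : ℂ) + (-(((A - B) / 2 : ℝ) : ℂ)) * Complex.I := by
      push_cast; ring
    rw [e1, e2, Complex.exp_add, Complex.exp_add, Complex.exp_mul_I, Complex.exp_mul_I]
    rw [Complex.cos_neg, Complex.sin_neg]
    ring
  rw [key, norm_mul, norm_mul, norm_mul, abs_exp_I_mul, Complex.norm_I, Complex.norm_two]
  rw [← Complex.ofReal_sin, Complex.norm_real, Real.norm_eq_abs]
  ring

lemma factor_lb (h θ0 θ1 M : ℝ) (hh : 0 < h) (hθ0 : |θ0| ≤ M) (hθ1 : |θ1| ≤ M)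
    (hM : h * M ≤ Real.pi / 12) :
    2 / Real.pi * (h * |θ0 - θ1|) ≤
      ‖Complex.exp (Complex.I * ((h * θ0 : ℝ) : ℂ))
        - Complex.exp (Complex.I * ((h * θ1 : ℝ) : ℂ))‖ := by
  rw [abs_exp_sub]
  set t := (h * θ0 - h * θ1) / 2 with htdef
  have habs : |t| = h * |θ0 - θ1| / 2 := by
    rw [htdef, abs_div, abs_of_pos (by norm_num : (0:ℝ) < 2)]
    rw [show h * θ0 - h * θ1 = h * (θ0 - θ1) by ring, abs_mul, abs_of_pos hh]
  have hM0 : 0 ≤ M := le_trans (abs_nonneg _) hθ0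
  have ht : |t| ≤ Real.pi / 12 := by
    rw [habs]
    have : |θ0 - θ1| ≤ 2 * M := by
      calc |θ0 - θ1| ≤ |θ0| + |θ1| := abs_sub _ _
      _ ≤ 2 * M := by linarith
    nlinarith
  have := sin_abs_lb ht
  rw [habs] at this
  linarith

lemma quadrature {ι : Type*} [Fintype ι] [DecidableEq ι]
    (x : ι → ℝ × ℝ) (c : ι → ℂ) (k0 : ι) (h M ε : ℝ)
    (hh : 0 < h) (hM1 : ∀ k, |(x k).1| ≤ M) (hM2 : ∀ k, |(x k).2| ≤ M)
    (hMpi : h * M ≤ Real.pi / 12) (hε : 0 < ε)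
    (hG : ∀ a b : ℕ, a + b ≤ Fintype.card ι - 1 →
      ‖∑ k, c k * Complex.exp (Complex.I *
        ((dot2 (x k) ((a : ℝ) * h, (b : ℝ) * h) : ℝ) : ℂ))‖ < ε) :
    ‖c k0‖ * ∏ k ∈ Finset.univ.erase k0, (h / Real.pi * norm1 (x k0 - x k))
      < ε * 2 ^ (Fintype.card ι - 1) := by
  classical
  have hπ : (0:ℝ) < Real.pi := Real.pi_pos
  set T : Finset ι := Finset.univ.erase k0 with hTdef
  have hTcard : T.card = Fintype.card ι - 1 := by
    rw [hTdef, Finset.card_erase_of_mem (Finset.mem_univ k0), Finset.card_univ]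
  set p : ι → Prop := fun k => |(x k0).2 - (x k).2| ≤ |(x k0).1 - (x k).1| with hpdef
  set cf : ι → (ℝ × ℝ) → ℝ := fun k v => if p k then v.1 else v.2 with hcf
  set F : ι → (ℝ × ℝ) → ℂ :=
    fun k v => Complex.exp (Complex.I * ((h * cf k v : ℝ) : ℂ)) with hF
  set P : (ℝ × ℝ) → ℂ := fun v => ∏ k ∈ T, (F k v - F k (x k)) with hP
  -- expansion of P v over subsets
  have hPsum : ∀ v : ℝ × ℝ, P v = ∑ S ∈ T.powerset,
      (∏ k ∈ T \ S, (-(F k (x k)))) *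
        Complex.exp (Complex.I * ((dot2 v
          (((S.filter p).card : ℝ) * h, ((S.filter (fun k => ¬ p k)).card : ℝ) * h) : ℝ) : ℂ)) := by
    intro v
    have e0 : P v = ∏ k ∈ T, (F k v + (-(F k (x k)))) := by
      rw [hP]; simp only [sub_eq_add_neg]
    rw [e0, Finset.prod_add]
    refine Finset.sum_congr rfl fun S hS => ?_
    rw [mul_comm]
    congr 1
    have e1 : ∀ k ∈ S, F k v = Complex.exp (Complex.I * ((h * cf k v : ℝ) : ℂ)) := by
      intro k _; rw [hF]
    rw [Finset.prod_congr rfl e1, ← Complex.exp_sum]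
    congr 1
    rw [← Finset.mul_sum, ← Complex.ofReal_sum]
    congr 1
    rw [← Finset.sum_filter_add_sum_filter_not S p]
    have e2 : ∑ k ∈ S.filter p, h * cf k v = ((S.filter p).card : ℝ) * (h * v.1) := by
      rw [Finset.sum_congr rfl (fun k hk => by
        simp [hcf, (Finset.mem_filter.mp hk).2] : ∀ k ∈ S.filter p, h * cf k v = h * v.1),
        Finset.sum_const, nsmul_eq_mul]
    have e3 : ∑ k ∈ S.filter (fun k => ¬ p k), h * cf k v
        = ((S.filter (fun k => ¬ p k)).card : ℝ) * (h * v.2) := by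
      rw [Finset.sum_congr rfl (fun k hk => by
        simp [hcf, (Finset.mem_filter.mp hk).2] :
          ∀ k ∈ S.filter (fun k => ¬ p k), h * cf k v = h * v.2),
        Finset.sum_const, nsmul_eq_mul]
    rw [e2, e3]
    simp only [dot2]
    ring
  -- vanishing at the nodes other than k0
  have hvanish : ∀ j ∈ T, P (x j) = 0 := by
    intro j hj
    exact Finset.prod_eq_zero hj (by simp)
  have hsingle : ∑ j, c j * P (x j) = c k0 * P (x k0) :=
    Fintype.sum_eq_single k0 (fun j hj => by
      rw [hvanish j (Finset.mem_erase.mpr ⟨hj, Finset.mem_univ j⟩), mul_zero])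
  -- swap sums
  have hswap : ∑ j, c j * P (x j) = ∑ S ∈ T.powerset,
      (∏ k ∈ T \ S, (-(F k (x k)))) * ∑ j, c j * Complex.exp (Complex.I *
        ((dot2 (x j) (((S.filter p).card : ℝ) * h,
          ((S.filter (fun k => ¬ p k)).card : ℝ) * h) : ℝ) : ℂ)) := by
    calc ∑ j, c j * P (x j)
        = ∑ j, ∑ S ∈ T.powerset, (∏ k ∈ T \ S, (-(F k (x k)))) *
            (c j * Complex.exp (Complex.I * ((dot2 (x j)
              (((S.filter p).card : ℝ) * h,
                ((S.filter (fun k => ¬ p k)).card : ℝ) * h) : ℝ) : ℂ))) := by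
          refine Finset.sum_congr rfl fun j _ => ?_
          rw [hPsum (x j), Finset.mul_sum]
          exact Finset.sum_congr rfl fun S _ => by ring
      _ = ∑ S ∈ T.powerset, ∑ j, (∏ k ∈ T \ S, (-(F k (x k)))) *
            (c j * Complex.exp (Complex.I * ((dot2 (x j)
              (((S.filter p).card : ℝ) * h,
                ((S.filter (fun k => ¬ p k)).card : ℝ) * h) : ℝ) : ℂ))) := Finset.sum_comm
      _ = _ := by
          refine Finset.sum_congr rfl fun S _ => ?_
          rw [← Finset.mul_sum]
  -- coefficient moduli are 1
  have hcoef : ∀ S : Finset ι, ‖∏ k ∈ T \ S, (-(F k (x k)))‖ = 1 := by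
    intro S
    rw [norm_prod]
    apply Finset.prod_eq_one
    intro k _
    rw [norm_neg, hF]
    exact abs_exp_I_mul _
  -- final bound on the sum
  have hfinal : ‖∑ j, c j * P (x j)‖ < ε * 2 ^ (Fintype.card ι - 1) := by
    rw [hswap]
    calc ‖∑ S ∈ T.powerset, _‖
        ≤ ∑ S ∈ T.powerset, ‖(∏ k ∈ T \ S, (-(F k (x k)))) *
            ∑ j, c j * Complex.exp (Complex.I * ((dot2 (x j)
              (((S.filter p).card : ℝ) * h,
                ((S.filter (fun k => ¬ p k)).card : ℝ) * h) : ℝ) : ℂ))‖ :=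
          norm_sum_le _ _
      _ < ∑ _S ∈ T.powerset, ε := by
          refine Finset.sum_lt_sum_of_nonempty (Finset.powerset_nonempty T) fun S hS => ?_
          rw [norm_mul, hcoef S, one_mul]
          refine hG _ _ ?_
          calc (S.filter p).card + (S.filter (fun k => ¬ p k)).card = S.card :=
              Finset.card_filter_add_card_filter_not p
            _ ≤ T.card := Finset.card_le_card (Finset.mem_powerset.mp hS)
            _ = Fintype.card ι - 1 := hTcard
      _ = ε * 2 ^ (Fintype.card ι - 1) := by
          rw [Finset.sum_const, Finset.card_powerset, hTcard, nsmul_eq_mul]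
          push_cast
          ring
  -- lower bound on the product
  have hfac : ∀ k ∈ T, h / Real.pi * norm1 (x k0 - x k)
      ≤ ‖F k (x k0) - F k (x k)‖ := by
    intro k _
    by_cases hpk : p k
    · have habs := factor_lb h ((x k0).1) ((x k).1) M hh (hM1 k0) (hM1 k) hMpi
      have e1 : F k (x k0) = Complex.exp (Complex.I * ((h * (x k0).1 : ℝ) : ℂ)) := by
        simp [hF, hcf, hpk]
      have e2 : F k (x k) = Complex.exp (Complex.I * ((h * (x k).1 : ℝ) : ℂ)) := by
        simp [hF, hcf, hpk]
      rw [e1, e2]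
      refine le_trans ?_ habs
      have hn1 : norm1 (x k0 - x k) ≤ 2 * |(x k0).1 - (x k).1| := by
        have hp' : |(x k0).2 - (x k).2| ≤ |(x k0).1 - (x k).1| := hpk
        simp only [norm1, Prod.fst_sub, Prod.snd_sub]
        linarith
      have h2π : 0 ≤ h / Real.pi := by positivity
      calc h / Real.pi * norm1 (x k0 - x k) ≤ h / Real.pi * (2 * |(x k0).1 - (x k).1|) :=
          mul_le_mul_of_nonneg_left hn1 h2π
        _ = 2 / Real.pi * (h * |(x k0).1 - (x k).1|) := by ring
    · have habs := factor_lb h ((x k0).2) ((x k).2) M hh (hM2 k0) (hM2 k) hMpi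
      have e1 : F k (x k0) = Complex.exp (Complex.I * ((h * (x k0).2 : ℝ) : ℂ)) := by
        simp [hF, hcf, hpk]
      have e2 : F k (x k) = Complex.exp (Complex.I * ((h * (x k).2 : ℝ) : ℂ)) := by
        simp [hF, hcf, hpk]
      rw [e1, e2]
      refine le_trans ?_ habs
      have hn1 : norm1 (x k0 - x k) ≤ 2 * |(x k0).2 - (x k).2| := by
        have hp' : |(x k0).1 - (x k).1| ≤ |(x k0).2 - (x k).2| := le_of_not_ge hpk
        simp only [norm1, Prod.fst_sub, Prod.snd_sub]
        linarith
      have h2π : 0 ≤ h / Real.pi := by positivity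
      calc h / Real.pi * norm1 (x k0 - x k) ≤ h / Real.pi * (2 * |(x k0).2 - (x k).2|) :=
          mul_le_mul_of_nonneg_left hn1 h2π
        _ = 2 / Real.pi * (h * |(x k0).2 - (x k).2|) := by ring
  have hPlow : ∏ k ∈ T, (h / Real.pi * norm1 (x k0 - x k)) ≤ ‖P (x k0)‖ := by
    rw [hP]; simp only
    rw [norm_prod]
    exact Finset.prod_le_prod
      (fun k _ => mul_nonneg (by positivity) (norm1_nonneg _)) hfac
  calc ‖c k0‖ * ∏ k ∈ T, (h / Real.pi * norm1 (x k0 - x k))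
      ≤ ‖c k0‖ * ‖P (x k0)‖ :=
        mul_le_mul_of_nonneg_left hPlow (norm_nonneg _)
    _ = ‖c k0 * P (x k0)‖ := (norm_mul _ _).symm
    _ = ‖∑ j, c j * P (x j)‖ := by rw [hsingle]
    _ < ε * 2 ^ (Fintype.card ι - 1) := hfinal

lemma const_ineq (n : ℕ) (hn : 2 ≤ n) :
    (2:ℝ)^(4*n-2) * (3:ℝ)^(2*(n:ℝ)-0.5) ≤ (1 + Real.sqrt 3)^(2*n-1) * 2^(5*n-1) := by
  have hq0 : (0:ℝ) ≤ Real.sqrt 3 := Real.sqrt_nonneg 3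
  have hq2 : Real.sqrt 3 ^ 2 = 3 := Real.sq_sqrt (by norm_num)
  have hq17 : (1.7:ℝ) ≤ Real.sqrt 3 := by nlinarith [hq2, hq0]
  have hqpos : (0:ℝ) < Real.sqrt 3 := by linarith
  have h3cast : (3:ℝ)^(2*(n:ℝ)-0.5) = 3^(2*n) / Real.sqrt 3 := by
    rw [show 2*(n:ℝ)-0.5 = ((2*n : ℕ):ℝ) - (1/2 : ℝ) by push_cast; norm_num,
        Real.rpow_sub (by norm_num : (0:ℝ) < 3), Real.rpow_natCast,
        ← Real.sqrt_eq_rpow]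
  rw [h3cast, ← mul_div_assoc, div_le_iff₀ hqpos]
  obtain ⟨p, rfl⟩ : ∃ p, n = p + 2 := ⟨n - 2, by omega⟩
  have e1 : 4*(p+2)-2 = 4*p+6 := by omega
  have e2 : 2*(p+2) = 2*p+4 := by omega
  have e3 : 2*(p+2)-1 = 2*p+3 := by omega
  have e4 : 5*(p+2)-1 = 5*p+9 := by omega
  rw [e1, e3, e4, e2]
  have a1 : (2:ℝ)^(4*p+6) = 16^p * 64 := by rw [pow_add, pow_mul]; norm_num
  have a2 : (3:ℝ)^(2*p+4) = 9^p * 81 := by rw [pow_add, pow_mul]; norm_num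
  have a3 : (2:ℝ)^(5*p+9) = 32^p * 512 := by rw [pow_add, pow_mul]; norm_num
  have a4 : (1+Real.sqrt 3)^(2*p+3)
      = ((1+Real.sqrt 3)^2)^p * (1+Real.sqrt 3)^3 := by rw [pow_add, pow_mul]
  have a5 : ((1+Real.sqrt 3)^2) = 4 + 2*Real.sqrt 3 := by linear_combination hq2
  have a6 : (1+Real.sqrt 3)^3 * Real.sqrt 3 = 10*Real.sqrt 3 + 18 := by
    linear_combination (Real.sqrt 3^2 + 3*Real.sqrt 3 + 6) * hq2
  rw [a1, a2, a3, a4, a5]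
  have h144 : (144:ℝ)^p ≤ (128+64*Real.sqrt 3)^p := by
    apply pow_le_pow_left₀ (by norm_num)
    linarith
  have hcoef : (5184:ℝ) ≤ 512*(10*Real.sqrt 3+18) := by linarith
  calc (16:ℝ)^p * 64 * (9^p * 81) = 5184 * 144^p := by
        rw [show (144:ℝ) = 16*9 by norm_num, mul_pow]; ring
    _ ≤ 5184 * (128+64*Real.sqrt 3)^p :=
        mul_le_mul_of_nonneg_left h144 (by norm_num)
    _ ≤ (512*(10*Real.sqrt 3+18)) * (128+64*Real.sqrt 3)^p :=
        mul_le_mul_of_nonneg_right hcoef (by positivity)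
    _ = (4+2*Real.sqrt 3)^p * (1+Real.sqrt 3)^3 * (32^p*512) * Real.sqrt 3 := by
        rw [show (128:ℝ)+64*Real.sqrt 3 = (4+2*Real.sqrt 3)*32 by ring, mul_pow, ← a6]
        ring

set_option maxHeartbeats 2000000 in
theorem stmt2 (n : ℕ) (hn : 2 ≤ n) (Ω σ mmin : ℝ) (hΩ : 0 < Ω) (hσ : 0 < σ)
    (hmmin : 0 < mmin) (hσm : σ ≤ mmin)
    (y : Fin n → ℝ × ℝ) (a : Fin n → ℂ)
    (hy_distinct : Function.Injective y)
    (hy : ∀ j, normInf (y j) < (2 * (n : ℝ) - 1) * Real.pi / (12 * Ω))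
    (ha : ∀ j, mmin ≤ ‖a j‖)
    (W : ℝ × ℝ → ℂ)
    (hW : ∀ ω : ℝ × ℝ, ω.1 ∈ Set.Icc 0 Ω → ω.2 ∈ Set.Icc 0 Ω → ‖W ω‖ < σ)
    (Dmin : ℝ)
    (hDmin : IsLeast {r : ℝ | ∃ p j, p ≠ j ∧ r = norm1 (y p - y j)} Dmin)
    (hsep : 15.3 * Real.pi * ((n : ℝ) - 1 / 2) / Ω *
        (σ / mmin) ^ ((1 : ℝ) / (2 * (n : ℝ) - 1)) ≤ Dmin) :
    -- (1) every σ-admissible measure of Y supported in the region has at least n supports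
    (∀ (m : ℕ) (ahat : Fin m → ℂ) (yhat : Fin m → ℝ × ℝ),
      Function.Injective yhat → (∀ j, ahat j ≠ 0) →
      (∀ j, normInf (yhat j) < ((n : ℝ) - 1) * Real.pi / (6 * Ω)) →
      (∀ ω : ℝ × ℝ, ω.1 ∈ Set.Icc 0 Ω → ω.2 ∈ Set.Icc 0 Ω →
        ‖((∑ j, ahat j * Complex.exp (Complex.I * (dot2 (yhat j) ω : ℝ))) -
            ((∑ j, a j * Complex.exp (Complex.I * (dot2 (y j) ω : ℝ))) + W ω))‖ < σ) →
      n ≤ m) ∧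
    -- (2) any σ-admissible measure with exactly n supports in the region (in particular any
    -- minimizer of the number of supports) approximates the true locations
    (∀ (ahat : Fin n → ℂ) (yhat : Fin n → ℝ × ℝ),
      Function.Injective yhat → (∀ j, ahat j ≠ 0) →
      (∀ j, normInf (yhat j) < ((n : ℝ) - 1) * Real.pi / (6 * Ω)) →
      (∀ ω : ℝ × ℝ, ω.1 ∈ Set.Icc 0 Ω → ω.2 ∈ Set.Icc 0 Ω →
        ‖((∑ j, ahat j * Complex.exp (Complex.I * (dot2 (yhat j) ω : ℝ))) -
            ((∑ j, a j * Complex.exp (Complex.I * (dot2 (y j) ω : ℝ))) + W ω))‖ < σ) →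
      ∃ perm : Equiv.Perm (Fin n), ∀ j,
        norm1 (yhat (perm j) - y j) < Dmin / 2 ∧
        norm1 (yhat (perm j) - y j) ≤
          ((1 + Real.sqrt 3) ^ (2 * n - 1) * 2 ^ (5 * n - 1) * (2 * (n : ℝ) - 1) ^ (2 * n - 1) *
              Real.pi / (3 : ℝ) ^ (2 * (n : ℝ) - 0.5)) / Ω *
            (Real.pi / (Dmin * Ω)) ^ (2 * n - 2) * (σ / mmin)) := by
  have hπ : (0:ℝ) < Real.pi := Real.pi_pos
  have hn2 : (2:ℝ) ≤ (n:ℝ) := by exact_mod_cast hn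
  have hA : (0:ℝ) < 2*(n:ℝ)-1 := by linarith
  set h : ℝ := Ω / (2*(n:ℝ)-1) with hhdef
  have hh : 0 < h := div_pos hΩ hA
  set M : ℝ := (2 * (n : ℝ) - 1) * Real.pi / (12 * Ω) with hMdef
  have hMpi : h * M ≤ Real.pi / 12 := by
    rw [hhdef, hMdef]
    rw [show Ω / (2*(n:ℝ)-1) * ((2*(n:ℝ)-1) * Real.pi / (12*Ω)) = Real.pi/12 by
      field_simp]
  -- Dmin facts
  obtain ⟨⟨p0, q0, hpq0, hDeq⟩, hDlb'⟩ := hDmin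
  have hDlb : ∀ p q : Fin n, p ≠ q → Dmin ≤ norm1 (y p - y q) := by
    intro p q hpq
    exact hDlb' ⟨p, q, hpq, rfl⟩
  have hDpos : 0 < Dmin := by
    rw [hDeq]
    exact norm1_pos (fun hc => hpq0 (hy_distinct hc))
  have hDub : Dmin < 4 * M := by
    rw [hDeq]
    have h1 := hy p0
    have h2 := hy q0
    simp only [normInf] at h1 h2
    have b1 : |(y p0).1| ≤ max |(y p0).1| |(y p0).2| := le_max_left _ _
    have b2 : |(y p0).2| ≤ max |(y p0).1| |(y p0).2| := le_max_right _ _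
    have b3 : |(y q0).1| ≤ max |(y q0).1| |(y q0).2| := le_max_left _ _
    have b4 : |(y q0).2| ≤ max |(y q0).1| |(y q0).2| := le_max_right _ _
    have t1 : |(y p0).1 - (y q0).1| ≤ |(y p0).1| + |(y q0).1| := abs_sub _ _
    have t2 : |(y p0).2 - (y q0).2| ≤ |(y p0).2| + |(y q0).2| := abs_sub _ _
    simp only [norm1, Prod.fst_sub, Prod.snd_sub]
    linarith
  -- the quantity s
  set s : ℝ := (σ / mmin) ^ ((1 : ℝ) / (2 * (n : ℝ) - 1)) with hsdef
  have hs0 : 0 < s := Real.rpow_pos_of_pos (div_pos hσ hmmin) _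
  have hsk : s ^ (2*n-1) = σ / mmin := by
    rw [hsdef, ← Real.rpow_natCast ((σ/mmin) ^ ((1:ℝ)/(2*(n:ℝ)-1))) (2*n-1),
        ← Real.rpow_mul (le_of_lt (div_pos hσ hmmin))]
    rw [show ((2*n-1 : ℕ) : ℝ) = 2*(n:ℝ)-1 by
      rw [Nat.cast_sub (by omega : 1 ≤ 2*n)]; push_cast; ring]
    rw [one_div_mul_cancel hA.ne', Real.rpow_one]
  have hσs : σ = mmin * s ^ (2*n-1) := by
    rw [hsk]; field_simp
  -- the quantity β
  set β : ℝ := h / Real.pi * (Dmin / 2) with hβdef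
  have hβ0 : 0 < β := by rw [hβdef]; positivity
  have hβs : 3.825 * s ≤ β := by
    have h1 : h / Real.pi * ((15.3 * Real.pi * ((n:ℝ) - 1/2) / Ω * s)/2) = 3.825 * s := by
      rw [hhdef]; field_simp; ring
    rw [hβdef, ← h1]
    have hX : 15.3 * Real.pi * ((n:ℝ) - 1/2) / Ω * s ≤ Dmin := hsep
    gcongr
  have hβ6 : β < 1/6 := by
    have h2 : h / Real.pi * ((4 * M)/2) = 1/6 := by
      rw [hhdef, hMdef]; field_simp; ring
    rw [hβdef, ← h2]
    have : Dmin / 2 < 4 * M / 2 := by linarith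
    exact mul_lt_mul_of_pos_left this (by positivity)
  have hs225 : 22.95 * s < 1 := by nlinarith
  have hsle1 : s ≤ 1 := by linarith
  have h2s : 2 * s ≤ β := by nlinarith
  -- coordinate bounds for the true nodes
  have hMy1 : ∀ j : Fin n, |(y j).1| ≤ M := by
    intro j
    have h1 := hy j
    simp only [normInf] at h1
    exact le_of_lt (lt_of_le_of_lt (le_max_left _ _) h1)
  have hMy2 : ∀ j : Fin n, |(y j).2| ≤ M := by
    intro j
    have h1 := hy j
    simp only [normInf] at h1
    exact le_of_lt (lt_of_le_of_lt (le_max_right _ _) h1)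
  have hyhatM : ((n:ℝ)-1)*Real.pi/(6*Ω) ≤ M := by
    rw [hMdef, div_le_div_iff₀ (by positivity) (by positivity)]
    nlinarith
  -- the key quadrature estimate
  have key : ∀ (m : ℕ) (ahat : Fin m → ℂ) (yhat : Fin m → ℝ × ℝ), m ≤ n →
      (∀ l, normInf (yhat l) < ((n : ℝ) - 1) * Real.pi / (6 * Ω)) →
      (∀ ω : ℝ × ℝ, ω.1 ∈ Set.Icc 0 Ω → ω.2 ∈ Set.Icc 0 Ω →
        ‖(∑ l, ahat l * Complex.exp (Complex.I * (dot2 (yhat l) ω : ℝ))) -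
            ((∑ j, a j * Complex.exp (Complex.I * (dot2 (y j) ω : ℝ))) + W ω)‖ < σ) →
      ∀ (j0 : Fin n) (lb : Fin m → ℝ), (∀ l, 0 ≤ lb l) →
      (∀ l, lb l ≤ norm1 (yhat l - y j0)) →
      mmin * ((∏ l, (h / Real.pi * lb l)) * β ^ (n - 1)) < 2 * σ * 2 ^ (m + n - 1) := by
    intro m ahat yhat hmn hregion happrox j0 lb hlb0 hlble
    have hx1 : ∀ k : Fin m ⊕ Fin n, |((Sum.elim yhat y) k).1| ≤ M := by
      intro k
      rcases k with l | j
      · have h1 := hregion l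
        simp only [normInf] at h1
        have h2 : |(yhat l).1| ≤ max |(yhat l).1| |(yhat l).2| := le_max_left _ _
        simp only [Sum.elim_inl]
        linarith
      · simpa using hMy1 j
    have hx2 : ∀ k : Fin m ⊕ Fin n, |((Sum.elim yhat y) k).2| ≤ M := by
      intro k
      rcases k with l | j
      · have h1 := hregion l
        simp only [normInf] at h1
        have h2 : |(yhat l).2| ≤ max |(yhat l).1| |(yhat l).2| := le_max_right _ _
        simp only [Sum.elim_inl]
        linarith
      · simpa using hMy2 j
    have hGrid : ∀ a' b' : ℕ, a' + b' ≤ Fintype.card (Fin m ⊕ Fin n) - 1 →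
        ‖∑ k, (Sum.elim ahat (fun j => -(a j))) k * Complex.exp (Complex.I *
          ((dot2 ((Sum.elim yhat y) k) ((a' : ℝ) * h, (b' : ℝ) * h) : ℝ) : ℂ))‖ < 2*σ := by
      intro a' b' hab
      simp only [Fintype.card_sum, Fintype.card_fin] at hab
      have hcast : ∀ c' : ℕ, c' + 0 ≤ m + n - 1 → ((c' : ℝ)) ≤ 2*(n:ℝ)-1 := by
        intro c' hc'
        have h1 : c' ≤ 2*n-1 := by omega
        calc (c' : ℝ) ≤ ((2*n-1 : ℕ) : ℝ) := by exact_mod_cast h1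
          _ = 2*(n:ℝ)-1 := by rw [Nat.cast_sub (by omega : 1 ≤ 2*n)]; push_cast; ring
      have ha' : (a' : ℝ) ≤ 2*(n:ℝ)-1 := hcast a' (by omega)
      have hb' : (b' : ℝ) ≤ 2*(n:ℝ)-1 := hcast b' (by omega)
      have hhΩ : (2*(n:ℝ)-1) * h = Ω := by
        rw [hhdef]; field_simp
      have hmem1 : ((a' : ℝ) * h) ∈ Set.Icc (0:ℝ) Ω := by
        constructor
        · positivity
        · calc (a':ℝ)*h ≤ (2*(n:ℝ)-1)*h := mul_le_mul_of_nonneg_right ha' hh.le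
            _ = Ω := hhΩ
      have hmem2 : ((b' : ℝ) * h) ∈ Set.Icc (0:ℝ) Ω := by
        constructor
        · positivity
        · calc (b':ℝ)*h ≤ (2*(n:ℝ)-1)*h := mul_le_mul_of_nonneg_right hb' hh.le
            _ = Ω := hhΩ
      set ω : ℝ × ℝ := ((a':ℝ)*h, (b':ℝ)*h) with hωdef
      have hsum : ∑ k, (Sum.elim ahat (fun j => -(a j))) k * Complex.exp (Complex.I *
          ((dot2 ((Sum.elim yhat y) k) ω : ℝ) : ℂ))
          = ((∑ l, ahat l * Complex.exp (Complex.I * (dot2 (yhat l) ω : ℝ))) -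
              ((∑ j, a j * Complex.exp (Complex.I * (dot2 (y j) ω : ℝ))) + W ω)) + W ω := by
        rw [Fintype.sum_sum_type]
        simp only [Sum.elim_inl, Sum.elim_inr, neg_mul]
        rw [Finset.sum_neg_distrib]
        ring
      rw [hsum]
      calc ‖_‖
          ≤ ‖(∑ l, ahat l * Complex.exp (Complex.I * (dot2 (yhat l) ω : ℝ))) -
              ((∑ j, a j * Complex.exp (Complex.I * (dot2 (y j) ω : ℝ))) + W ω)‖
            + ‖W ω‖ := norm_add_le _ _
        _ < σ + σ := add_lt_add (happrox ω hmem1 hmem2) (hW ω hmem1 hmem2)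
        _ = 2*σ := by ring
    have hq := quadrature (Sum.elim yhat y) (Sum.elim ahat (fun j => -(a j))) (Sum.inr j0)
        h M (2*σ) hh hx1 hx2 hMpi (by linarith) hGrid
    simp only [Fintype.card_sum, Fintype.card_fin] at hq
    set g : Fin m ⊕ Fin n → ℝ := Sum.elim (fun l => h / Real.pi * lb l) (fun _ => β) with hgdef
    have hg0 : ∀ k, 0 ≤ g k := by
      intro k
      rcases k with l | j
      · simp only [hgdef, Sum.elim_inl]
        exact mul_nonneg (by positivity) (hlb0 l)
      · simp only [hgdef, Sum.elim_inr]
        exact hβ0.le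
    have hgle : ∀ k ∈ Finset.univ.erase (Sum.inr j0 : Fin m ⊕ Fin n), g k ≤
        h / Real.pi * norm1 ((Sum.elim yhat y) (Sum.inr j0) - (Sum.elim yhat y) k) := by
      intro k hk
      rcases k with l | j
      · simp only [hgdef, Sum.elim_inl, Sum.elim_inr]
        rw [norm1_comm]
        exact mul_le_mul_of_nonneg_left (hlble l) (by positivity)
      · have hjne : j ≠ j0 := by
          intro hc
          rw [hc] at hk
          exact (Finset.mem_erase.mp hk).1 rfl
        simp only [hgdef, Sum.elim_inr]
        rw [hβdef]
        have h1 := hDlb j0 j (Ne.symm hjne)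
        have h2 : Dmin / 2 ≤ norm1 (y j0 - y j) := by linarith
        exact mul_le_mul_of_nonneg_left h2 (by positivity)
    have hprodle : ∏ k ∈ Finset.univ.erase (Sum.inr j0 : Fin m ⊕ Fin n), g k ≤
        ∏ k ∈ Finset.univ.erase (Sum.inr j0 : Fin m ⊕ Fin n),
          (h / Real.pi * norm1 ((Sum.elim yhat y) (Sum.inr j0) - (Sum.elim yhat y) k)) :=
      Finset.prod_le_prod (fun k _ => hg0 k) hgle
    have hgprod : ∏ k ∈ Finset.univ.erase (Sum.inr j0 : Fin m ⊕ Fin n), g k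
        = (∏ l, (h / Real.pi * lb l)) * β ^ (n - 1) := by
      have h1 : g (Sum.inr j0) * ∏ k ∈ Finset.univ.erase (Sum.inr j0 : Fin m ⊕ Fin n), g k
          = ∏ k, g k := Finset.mul_prod_erase _ g (Finset.mem_univ _)
      have h2 : ∏ k, g k = (∏ l, (h / Real.pi * lb l)) * β ^ n := by
        rw [Fintype.prod_sum_type]
        simp only [hgdef, Sum.elim_inl, Sum.elim_inr]
        rw [Finset.prod_const, Finset.card_univ, Fintype.card_fin]
      have h3 : g (Sum.inr j0) = β := by simp [hgdef]
      have h4 : β ^ n = β * β ^ (n-1) := by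
        conv_lhs => rw [show n = (n-1)+1 by omega]
        exact pow_succ' β (n-1)
      rw [h3] at h1
      apply mul_left_cancel₀ hβ0.ne'
      rw [h1, h2, h4]
      ring
    have hmabs : mmin ≤ ‖(Sum.elim ahat (fun j => -(a j))) (Sum.inr j0)‖ := by
      simp only [Sum.elim_inr]
      rw [norm_neg]
      exact ha j0
    have hfin : mmin * ((∏ l, (h / Real.pi * lb l)) * β ^ (n - 1)) ≤
        ‖(Sum.elim ahat (fun j => -(a j))) (Sum.inr j0)‖ *
          ∏ k ∈ Finset.univ.erase (Sum.inr j0 : Fin m ⊕ Fin n),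
            (h / Real.pi * norm1 ((Sum.elim yhat y) (Sum.inr j0) - (Sum.elim yhat y) k)) := by
      refine mul_le_mul hmabs ?_ ?_ (norm_nonneg _)
      · rw [← hgprod]; exact hprodle
      · rw [← hgprod]; exact Finset.prod_nonneg (fun k _ => hg0 k)
    calc mmin * ((∏ l, (h / Real.pi * lb l)) * β ^ (n - 1)) ≤ _ := hfin
      _ < 2*σ * 2 ^ (m + n - 1) := hq
  constructor
  · -- part (1)
    intro m ahat yhat hinj hne0 hregion happrox
    by_contra hcon
    push_neg at hcon
    have hpig : ∃ j0 : Fin n, ∀ l : Fin m, Dmin/2 ≤ norm1 (yhat l - y j0) := by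
      by_contra hno
      push_neg at hno
      choose f hf using hno
      have hfinj : Function.Injective f := by
        intro i j hij
        by_contra hij'
        have h1 := hf i
        rw [hij] at h1
        have h2 := hf j
        have h3 := hDlb i j hij'
        have h4 : norm1 (y i - y j) ≤ norm1 (y i - yhat (f j)) + norm1 (yhat (f j) - y j) :=
          norm1_tri _ _ _
        rw [norm1_comm (y i) (yhat (f j))] at h4
        linarith
      have h5 := Fintype.card_le_of_injective f hfinj
      simp only [Fintype.card_fin] at h5
      omega
    obtain ⟨j0, hj0⟩ := hpig
    have hk := key m ahat yhat (by omega) hregion happrox j0 (fun _ => Dmin/2)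
        (fun _ => by linarith) hj0
    simp only [Finset.prod_const, Finset.card_univ, Fintype.card_fin] at hk
    rw [← hβdef, ← pow_add] at hk
    rw [show m + (n-1) = m+n-1 by omega] at hk
    -- numeric contradiction
    set k := m + n - 1 with hkdef
    have hk1 : 1 ≤ k := by omega
    have he1 : 1 ≤ 2*n-1-k := by omega
    set e := 2*n-1-k with hedef
    have hse : s ^ e ≤ s := by
      calc s ^ e ≤ s ^ 1 := pow_le_pow_of_le_one hs0.le hsle1 he1
        _ = s := pow_one s
    have hstep : 2 * σ * 2^k ≤ mmin * β^k := by
      have e1 : σ = mmin * (s^k * s^e) := by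
        rw [hσs, ← pow_add, show k + e = 2*n-1 by omega]
      calc 2*σ*2^k = mmin * ((2*s^e) * (2^k * s^k)) := by rw [e1]; ring
        _ ≤ mmin * (1 * (2^k*s^k)) := by
            refine mul_le_mul_of_nonneg_left ?_ hmmin.le
            refine mul_le_mul_of_nonneg_right ?_ (by positivity)
            nlinarith
        _ = mmin * (2*s)^k := by rw [mul_pow]; ring
        _ ≤ mmin * β^k :=
            mul_le_mul_of_nonneg_left (pow_le_pow_left₀ (by positivity) h2s k) hmmin.le
    linarith
  · -- part (2)
    intro ahat yhat hinj hne0 hregion happrox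
    have hcoarse : ∀ j0 : Fin n, ∃ l, norm1 (yhat l - y j0) < Dmin/2 := by
      intro j0
      by_contra hno
      push_neg at hno
      have hk := key n ahat yhat le_rfl hregion happrox j0 (fun _ => Dmin/2)
          (fun _ => by linarith) hno
      simp only [Finset.prod_const, Finset.card_univ, Fintype.card_fin] at hk
      rw [← hβdef, ← pow_add] at hk
      rw [show n + (n-1) = 2*n-1 by omega, show n + n - 1 = 2*n-1 by omega] at hk
      have h1 : 2*σ*2^(2*n-1) ≤ mmin * β^(2*n-1) := by
        have h3 : ((3.825:ℝ)*s)^(2*n-1) ≤ β^(2*n-1) := pow_le_pow_left₀ (by positivity) hβs _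
        have h4 : (1.9125:ℝ)^3 ≤ 1.9125^(2*n-1) :=
          pow_le_pow_right₀ (by norm_num) (by omega)
        have h6 : (2:ℝ) ≤ 1.9125^(2*n-1) := le_trans (by norm_num : (2:ℝ) ≤ 1.9125^3) h4
        have h5 : (2:ℝ)*2^(2*n-1)*s^(2*n-1) ≤ β^(2*n-1) := by
          calc (2:ℝ)*2^(2*n-1)*s^(2*n-1)
              ≤ 1.9125^(2*n-1) * 2^(2*n-1) * s^(2*n-1) := by
                refine mul_le_mul_of_nonneg_right (mul_le_mul_of_nonneg_right h6 (by positivity))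
                  (by positivity)
            _ = (3.825*s)^(2*n-1) := by
                rw [mul_pow, show (3.825:ℝ) = 1.9125*2 by norm_num, mul_pow]
            _ ≤ β^(2*n-1) := h3
        calc 2*σ*2^(2*n-1) = mmin * (2*2^(2*n-1)*s^(2*n-1)) := by rw [hσs]; ring
          _ ≤ mmin * β^(2*n-1) := mul_le_mul_of_nonneg_left h5 hmmin.le
      linarith
    choose f hf using hcoarse
    have hfinj : Function.Injective f := by
      intro i j hij
      by_contra hij'
      have h1 := hf i
      rw [hij] at h1
      have h2 := hf j
      have h3 := hDlb i j hij'
      have h4 : norm1 (y i - y j) ≤ norm1 (y i - yhat (f j)) + norm1 (yhat (f j) - y j) :=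
        norm1_tri _ _ _
      rw [norm1_comm (y i) (yhat (f j))] at h4
      linarith
    have hfbij : Function.Bijective f := Finite.injective_iff_bijective.mp hfinj
    refine ⟨Equiv.ofBijective f hfbij, fun j => ?_⟩
    have hperm : (Equiv.ofBijective f hfbij) j = f j := rfl
    rw [hperm]
    refine ⟨hf j, ?_⟩
    -- the fine bound
    set r : ℝ := norm1 (yhat (f j) - y j) with hrdef
    set lb : Fin n → ℝ := fun l => if l = f j then r else Dmin/2 with hlbdef
    have hlb0 : ∀ l, 0 ≤ lb l := by
      intro l
      simp only [hlbdef]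
      split
      · rw [hrdef]; exact norm1_nonneg _
      · linarith
    have hlble : ∀ l, lb l ≤ norm1 (yhat l - y j) := by
      intro l
      simp only [hlbdef]
      split
      · rename_i hl
        rw [hl, hrdef]
      · rename_i hl
        obtain ⟨j', hj'⟩ := hfbij.2 l
        have hjj : j' ≠ j := by
          intro hc
          rw [hc] at hj'
          exact hl hj'.symm
        have h4 : norm1 (y j' - y j) ≤ norm1 (y j' - yhat l) + norm1 (yhat l - y j) :=
          norm1_tri _ _ _
        have h5 := hf j'
        rw [hj'] at h5
        rw [norm1_comm (y j') (yhat l)] at h4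
        have h6 := hDlb j' j hjj
        linarith
    have hk := key n ahat yhat le_rfl hregion happrox j lb hlb0 hlble
    have hsplit : ∏ l, (h / Real.pi * lb l) = (h / Real.pi * r) * β ^ (n-1) := by
      rw [← Finset.mul_prod_erase Finset.univ _ (Finset.mem_univ (f j))]
      congr 1
      · simp [hlbdef]
      · have hconst : ∀ l ∈ Finset.univ.erase (f j), h / Real.pi * lb l = β := by
          intro l hl
          simp only [hlbdef, hβdef]
          rw [if_neg (Finset.mem_erase.mp hl).1]
        rw [Finset.prod_congr rfl hconst, Finset.prod_const,
          Finset.card_erase_of_mem (Finset.mem_univ _), Finset.card_univ, Fintype.card_fin]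
    rw [hsplit] at hk
    have hk' : mmin * ((h / Real.pi * r) * β ^ (2*n-2)) < 2 * σ * 2 ^ (2*n-1) := by
      have e1 : (h / Real.pi * r) * β ^ (n-1) * β ^ (n-1)
          = (h / Real.pi * r) * β ^ (2*n-2) := by
        rw [mul_assoc, ← pow_add, show (n-1)+(n-1) = 2*n-2 by omega]
      rw [← e1]
      rw [show n + n - 1 = 2*n-1 by omega] at hk
      exact hk
    -- now conclude r ≤ E
    have hD3 : (0:ℝ) < (3:ℝ)^(2*(n:ℝ)-0.5) := Real.rpow_pos_of_pos (by norm_num) _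
    have hC0 : (0:ℝ) < mmin * (h/Real.pi) * β^(2*n-2) := by positivity
    have u1 : (Real.pi/(Dmin*Ω)) * β = 1/(2*(2*(n:ℝ)-1)) := by
      rw [hβdef, hhdef]
      field_simp
    have epow : (2*(n:ℝ)-1)^(2*n-1) = (2*(n:ℝ)-1)^(2*n-2) * (2*(n:ℝ)-1) := by
      rw [← pow_succ]
      congr 1
      omega
    have powsplit : (Real.pi/(Dmin*Ω))^(2*n-2) * β^(2*n-2)
        = 1 / ((2:ℝ)^(2*n-2) * (2*(n:ℝ)-1)^(2*n-2)) := by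
      rw [← mul_pow, u1, div_pow, one_pow, mul_pow]
    have hrw : (((1 + Real.sqrt 3) ^ (2*n-1) * 2 ^ (5*n-1) * (2*(n:ℝ)-1) ^ (2*n-1) *
          Real.pi / (3:ℝ) ^ (2*(n:ℝ)-0.5)) / Ω * (Real.pi/(Dmin*Ω)) ^ (2*n-2) * (σ/mmin))
        * (mmin * (h/Real.pi) * β^(2*n-2))
        = σ * ((1 + Real.sqrt 3) ^ (2*n-1) * 2 ^ (5*n-1)) /
            ((3:ℝ)^(2*(n:ℝ)-0.5) * 2^(2*n-2)) := by
      calc (((1 + Real.sqrt 3) ^ (2*n-1) * 2 ^ (5*n-1) * (2*(n:ℝ)-1) ^ (2*n-1) *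
          Real.pi / (3:ℝ) ^ (2*(n:ℝ)-0.5)) / Ω * (Real.pi/(Dmin*Ω)) ^ (2*n-2) * (σ/mmin))
        * (mmin * (h/Real.pi) * β^(2*n-2))
          = (((1 + Real.sqrt 3) ^ (2*n-1) * 2 ^ (5*n-1) * (2*(n:ℝ)-1) ^ (2*n-1) *
              Real.pi / (3:ℝ) ^ (2*(n:ℝ)-0.5)) / Ω * (σ/mmin) * (mmin * (h/Real.pi)))
            * ((Real.pi/(Dmin*Ω)) ^ (2*n-2) * β^(2*n-2)) := by ring
        _ = _ := by
            rw [powsplit, epow, hhdef]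
            field_simp
    have hEC : 2*σ*2^(2*n-1) ≤ (((1 + Real.sqrt 3) ^ (2*n-1) * 2 ^ (5*n-1) *
          (2*(n:ℝ)-1) ^ (2*n-1) * Real.pi / (3:ℝ) ^ (2*(n:ℝ)-0.5)) / Ω *
          (Real.pi/(Dmin*Ω)) ^ (2*n-2) * (σ/mmin)) * (mmin * (h/Real.pi) * β^(2*n-2)) := by
      rw [hrw, le_div_iff₀ (by positivity)]
      have hc := const_ineq n hn
      have h2pow : (2:ℝ)*2^(2*n-1)*2^(2*n-2) = 2^(4*n-2) := by
        rw [← pow_succ' 2 (2*n-1), ← pow_add]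
        congr 1
        omega
      calc 2*σ*2^(2*n-1)*((3:ℝ)^(2*(n:ℝ)-0.5) * 2^(2*n-2))
          = σ * (2^(4*n-2) * (3:ℝ)^(2*(n:ℝ)-0.5)) := by rw [← h2pow]; ring
        _ ≤ σ * ((1 + Real.sqrt 3) ^ (2*n-1) * 2 ^ (5*n-1)) :=
            mul_le_mul_of_nonneg_left hc hσ.le
        _ = σ * ((1 + Real.sqrt 3) ^ (2*n-1) * 2 ^ (5*n-1)) := rfl
    have hrC : r * (mmin * (h/Real.pi) * β^(2*n-2)) <
        (((1 + Real.sqrt 3) ^ (2*n-1) * 2 ^ (5*n-1) * (2*(n:ℝ)-1) ^ (2*n-1) *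
          Real.pi / (3:ℝ) ^ (2*(n:ℝ)-0.5)) / Ω * (Real.pi/(Dmin*Ω)) ^ (2*n-2) * (σ/mmin))
        * (mmin * (h/Real.pi) * β^(2*n-2)) := by
      calc r * (mmin * (h/Real.pi) * β^(2*n-2))
          = mmin * ((h/Real.pi * r) * β^(2*n-2)) := by ring
        _ < 2*σ*2^(2*n-1) := hk'
        _ ≤ _ := hEC
    exact le_of_lt (lt_of_mul_lt_mul_right hrC hC0.le)
end

section
/- Let Ω > 0, δ > 0, and let q, n be positive integers. Let â_1, ..., â_q, a_1, ..., a_n ∈ ℂ and ŷ_1, ..., ŷ_q, y_1, ..., y_n ∈ ℝ². Assume |Σ_{j=1}^q â_j e^{i ŷ_j·ω} − Σ_{j=1}^n a_j e^{i y_j·ω}| < δ for all ω ∈ [0,Ω]². Then for any integer t ≥ 0, any real τ with 0 ≤ τ and τ·t ≤ Ω, and any r₁, r₂ ∈ ℝ, one has |Σ_{j=1}^q â_j (e^{ir₁} e^{iτ ŷ_{j,1}} + e^{ir₂} e^{iτ ŷ_{j,2}})^t − Σ_{j=1}^n a_j (e^{ir₁} e^{iτ y_{j,1}} + e^{ir₂}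 e^{iτ y_{j,2}})^t| < 2^t·δ. -/
open Finset

lemma exp_pow_aux (x : ℝ) (k : ℕ) :
    (Complex.exp (Complex.I * (x : ℝ))) ^ k = Complex.exp (Complex.I * (((k : ℝ) * x : ℝ))) := by
  rw [← Complex.exp_nat_mul]
  congr 1
  push_cast
  ring

lemma expand_aux (t : ℕ) (τ r₁ r₂ : ℝ) {m : ℕ} (c : Fin m → ℂ) (z : Fin m → ℝ × ℝ) :
    ∑ j, c j *
        (Complex.exp (Complex.I * (r₁ : ℝ)) * Complex.exp (Complex.I * (τ * (z j).1 : ℝ)) +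
          Complex.exp (Complex.I * (r₂ : ℝ)) *
            Complex.exp (Complex.I * (τ * (z j).2 : ℝ))) ^ t
      = ∑ k ∈ Finset.range (t + 1), (t.choose k : ℂ) *
          Complex.exp (Complex.I * (((k : ℝ) * r₁ + ((t - k : ℕ) : ℝ) * r₂ : ℝ))) *
          ∑ j, c j *
            Complex.exp (Complex.I * (dot2 (z j) ((k : ℝ) * τ, ((t - k : ℕ) : ℝ) * τ) : ℝ)) := by
  simp only [add_pow, Finset.mul_sum]
  rw [Finset.sum_comm]
  refine Finset.sum_congr rfl fun k hk => ?_
  refine Finset.sum_congr rfl fun j _ => ?_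
  rw [mul_pow, mul_pow, exp_pow_aux, exp_pow_aux, exp_pow_aux, exp_pow_aux,
    ← Complex.exp_add, ← Complex.exp_add, ← Complex.exp_add]
  have harg : Complex.I * (((k : ℝ) * r₁ : ℝ) : ℂ) + Complex.I * (((k : ℝ) * (τ * (z j).1) : ℝ) : ℂ) +
      (Complex.I * ((((t - k : ℕ) : ℝ) * r₂ : ℝ) : ℂ) +
        Complex.I * ((((t - k : ℕ) : ℝ) * (τ * (z j).2) : ℝ) : ℂ)) =
      Complex.I * (((k : ℝ) * r₁ + ((t - k : ℕ) : ℝ) * r₂ : ℝ) : ℂ) +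
        Complex.I * ((dot2 (z j) ((k : ℝ) * τ, ((t - k : ℕ) : ℝ) * τ) : ℝ) : ℂ) := by
    simp only [dot2]
    push_cast
    ring
  rw [harg, Complex.exp_add]
  ring

theorem stmt3 (Ω δ : ℝ) (hΩ : 0 < Ω) (hδ : 0 < δ) (q n : ℕ) (hq : 0 < q) (hn : 0 < n)
    (ahat : Fin q → ℂ) (a : Fin n → ℂ) (yhat : Fin q → ℝ × ℝ) (y : Fin n → ℝ × ℝ)
    (hclose : ∀ ω : ℝ × ℝ, ω.1 ∈ Set.Icc 0 Ω → ω.2 ∈ Set.Icc 0 Ω →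
      Norm.norm
        ((∑ j, ahat j * Complex.exp (Complex.I * (dot2 (yhat j) ω : ℝ))) -
          (∑ j, a j * Complex.exp (Complex.I * (dot2 (y j) ω : ℝ)))) < δ)
    (t : ℕ) (τ : ℝ) (hτ : 0 ≤ τ) (hτt : τ * t ≤ Ω) (r₁ r₂ : ℝ) :
    Norm.norm
      ((∑ j, ahat j *
          (Complex.exp (Complex.I * (r₁ : ℝ)) * Complex.exp (Complex.I * (τ * (yhat j).1 : ℝ)) +
            Complex.exp (Complex.I * (r₂ : ℝ)) *
              Complex.exp (Complex.I * (τ * (yhat j).2 : ℝ))) ^ t) -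
        (∑ j, a j *
          (Complex.exp (Complex.I * (r₁ : ℝ)) * Complex.exp (Complex.I * (τ * (y j).1 : ℝ)) +
            Complex.exp (Complex.I * (r₂ : ℝ)) *
              Complex.exp (Complex.I * (τ * (y j).2 : ℝ))) ^ t)) < 2 ^ t * δ := by
  rw [expand_aux t τ r₁ r₂ ahat yhat, expand_aux t τ r₁ r₂ a y, ← Finset.sum_sub_distrib]
  have hbound : ∀ k ∈ Finset.range (t + 1),
      Norm.norm ((t.choose k : ℂ) *
          Complex.exp (Complex.I * (((k : ℝ) * r₁ + ((t - k : ℕ) : ℝ) * r₂ : ℝ))) *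
          (∑ j, ahat j * Complex.exp
            (Complex.I * (dot2 (yhat j) ((k : ℝ) * τ, ((t - k : ℕ) : ℝ) * τ) : ℝ))) -
        (t.choose k : ℂ) *
          Complex.exp (Complex.I * (((k : ℝ) * r₁ + ((t - k : ℕ) : ℝ) * r₂ : ℝ))) *
          (∑ j, a j * Complex.exp
            (Complex.I * (dot2 (y j) ((k : ℝ) * τ, ((t - k : ℕ) : ℝ) * τ) : ℝ))))
        < (t.choose k : ℝ) * δ := by
    intro k hk
    rw [Finset.mem_range] at hk
    have hk' : k ≤ t := Nat.lt_succ_iff.mp hk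
    rw [← mul_sub, norm_mul, norm_mul]
    have habs1 : Norm.norm (t.choose k : ℂ) = (t.choose k : ℝ) := by
      simp
    have habs2 : Norm.norm
        (Complex.exp (Complex.I * (((k : ℝ) * r₁ + ((t - k : ℕ) : ℝ) * r₂ : ℝ)))) = 1 := by
      rw [mul_comm]
      exact Complex.norm_exp_ofReal_mul_I _
    rw [habs1, habs2, mul_one]
    have hpos : 0 < (t.choose k : ℝ) := by
      exact_mod_cast Nat.choose_pos hk'
    refine (mul_lt_mul_iff_right₀ hpos).mpr ?_
    apply hclose
    · constructor
      · positivity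
      · calc (k : ℝ) * τ ≤ (t : ℝ) * τ := by
              apply mul_le_mul_of_nonneg_right _ hτ; exact_mod_cast hk'
          _ ≤ Ω := by linarith [hτt]
    · constructor
      · positivity
      · calc ((t - k : ℕ) : ℝ) * τ ≤ (t : ℝ) * τ := by
              apply mul_le_mul_of_nonneg_right _ hτ
              exact_mod_cast Nat.sub_le t k
          _ ≤ Ω := by linarith [hτt]
  calc Norm.norm _ ≤ ∑ k ∈ Finset.range (t + 1), Norm.norm _ :=
        norm_sum_le _ _
    _ < ∑ k ∈ Finset.range (t + 1), (t.choose k : ℝ) * δ :=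
        Finset.sum_lt_sum_of_nonempty (by simp) hbound
    _ = 2 ^ t * δ := by
        rw [← Finset.sum_mul]
        norm_cast
        rw [Nat.sum_range_choose]
end

section
/- Let θ_1, θ_2 ∈ [0, 2π/3]² ⊂ ℝ² be two distinct vectors such that π/3 ≤ θ_{j,2} − θ_{j,1} ≤ 2π/3 for j = 1, 2. If ‖θ_1 − θ_2‖₁ ≥ Δ for some Δ > 0, then |e^{i θ_{1,1}} + e^{i θ_{1,2}} − (e^{i θ_{2,1}} + e^{i θ_{2,2}})| ≥ (3/(2π))·Δ. -/
open Real

private lemma sin_chord {x : ℝ} (h0 : 0 ≤ x) (h1 : x ≤ π/6) : 3/π * x ≤ Real.sin x := by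
  have hπ := Real.pi_pos
  have h6 : (0:ℝ) < π/6 := by linarith
  have ht0 : 0 ≤ x / (π/6) := div_nonneg h0 h6.le
  have ht1 : x / (π/6) ≤ 1 := (div_le_one h6).2 h1
  have hc := strictConcaveOn_sin_Icc.concaveOn.2 (Set.mem_Icc.2 ⟨le_rfl, hπ.le⟩)
    (Set.mem_Icc.2 ⟨h6.le, by linarith⟩) (by linarith : (0:ℝ) ≤ 1 - x/(π/6)) ht0 (by ring)
  rw [smul_eq_mul, smul_eq_mul, smul_eq_mul, smul_eq_mul, Real.sin_zero, Real.sin_pi_div_six] at hc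
  have hx : (1 - x/(π/6)) * 0 + x/(π/6) * (π/6) = x := by field_simp; ring
  rw [hx] at hc
  have h2 : x/(π/6) * (1/2) = 3/π * x := by field_simp; ring
  linarith [hc, h2.ge]

private lemma cos_chord {a b : ℝ} (ha : π/6 ≤ a) (hab : a ≤ b) (hb : b ≤ π/3) :
    3/(2*π) * (b - a) ≤ Real.cos a - Real.cos b := by
  have hπ := Real.pi_pos
  rw [Real.cos_sub_cos]
  have h1 : Real.sin (π/6) ≤ Real.sin ((a+b)/2) := by
    apply Real.strictMonoOn_sin.monotoneOn (Set.mem_Icc.2 ⟨by linarith, by linarith⟩)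
      (Set.mem_Icc.2 ⟨by linarith, by linarith⟩) (by linarith)
  rw [Real.sin_pi_div_six] at h1
  have h2 : 3/π * ((b-a)/2) ≤ Real.sin ((b-a)/2) := sin_chord (by linarith) (by linarith)
  have h3 : Real.sin ((a-b)/2) = - Real.sin ((b-a)/2) := by
    rw [show (a-b)/2 = -((b-a)/2) by ring, Real.sin_neg]
  rw [h3]
  have h4 : 0 ≤ 3/π * ((b-a)/2) := mul_nonneg (by positivity) (by linarith)
  have h5 : 3/(2*π) * (b-a) = 3/π * ((b-a)/2) := by ring
  nlinarith [mul_nonneg (by linarith : (0:ℝ) ≤ Real.sin ((a+b)/2) - 1/2) (h4.trans h2)]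

private lemma two_cos_exp (t m : ℝ) :
    ((2 * Real.cos t : ℝ) : ℂ) * Complex.exp (Complex.I * ((m:ℝ):ℂ))
      = Complex.exp (Complex.I * (((m+t : ℝ)):ℂ)) + Complex.exp (Complex.I * (((m-t : ℝ)):ℂ)) := by
  have h1 : ((2 * Real.cos t : ℝ) : ℂ) = 2 * Complex.cos t := by
    push_cast [Complex.ofReal_cos]; ring
  rw [h1, Complex.two_cos, add_mul, ← Complex.exp_add, ← Complex.exp_add]
  congr 2 <;> push_cast <;> ring

private lemma sum_exp (a b : ℝ) :
    Complex.exp (Complex.I * ((a:ℝ):ℂ)) + Complex.exp (Complex.I * ((b:ℝ):ℂ))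
      = ((2 * Real.cos ((b-a)/2) : ℝ) : ℂ) * Complex.exp (Complex.I * ((((a+b)/2 : ℝ)):ℂ)) := by
  rw [two_cos_exp]
  rw [show (a+b)/2 + (b-a)/2 = b by ring, show (a+b)/2 - (b-a)/2 = a by ring]
  ring

private lemma absSq (r₁ r₂ m₁ m₂ : ℝ) :
    (‖(r₁:ℂ) * Complex.exp (Complex.I * ((m₁:ℝ):ℂ)) -
      (r₂:ℂ) * Complex.exp (Complex.I * ((m₂:ℝ):ℂ))‖)^2
      = r₁^2 + r₂^2 - 2*r₁*r₂*Real.cos (m₁ - m₂) := by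
  rw [mul_comm Complex.I ((m₁:ℝ):ℂ), mul_comm Complex.I ((m₂:ℝ):ℂ)]
  rw [Complex.sq_norm, Complex.normSq_apply]
  simp only [Complex.sub_re, Complex.sub_im, Complex.mul_re, Complex.mul_im,
    Complex.ofReal_re, Complex.ofReal_im, Complex.exp_ofReal_mul_I_re,
    Complex.exp_ofReal_mul_I_im, Real.cos_sub]
  nlinarith [Real.sin_sq_add_cos_sq m₁, Real.sin_sq_add_cos_sq m₂]


private lemma sqrt_step {x E : ℝ} (hx : 0 ≤ x) (hE : 0 ≤ E) (h : x^2 ≤ E^2) : x ≤ E := by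
  nlinarith

private lemma quadE {r₁ r₂ s c : ℝ} (h1 : 1 ≤ r₁) (h2 : 1 ≤ r₂) (hpy : s^2 + c^2 = 1) :
    4*s^2 ≤ r₁^2 + r₂^2 - 2*r₁*r₂*(2*c^2 - 1) := by
  have h3 : (0:ℝ) ≤ r₁*r₂ - 1 := by nlinarith
  nlinarith [sq_nonneg (r₁ - r₂), mul_nonneg (sq_nonneg s) h3]

private lemma chainE {x t s R : ℝ} (hx : 0 ≤ x) (hxt : x ≤ 2*t) (ht : 0 ≤ t) (hts : t ≤ s)
    (hR : 4*s^2 ≤ R) : x^2 ≤ R := by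
  nlinarith

private lemma chainR {x r₁ r₂ c : ℝ} (hx : 0 ≤ x) (h : x ≤ |r₁ - r₂|) (hc : c ≤ 1)
    (h1 : 1 ≤ r₁) (h2 : 1 ≤ r₂) : x^2 ≤ r₁^2 + r₂^2 - 2*r₁*r₂*c := by
  have h3 : x^2 ≤ (r₁ - r₂)^2 := by
    nlinarith [abs_nonneg (r₁ - r₂), sq_abs (r₁ - r₂)]
  nlinarith [mul_nonneg (by linarith : (0:ℝ) ≤ r₁) (by linarith : (0:ℝ) ≤ r₂)]

set_option maxHeartbeats 1000000 in
theorem stmt4 (θ₁ θ₂ : ℝ × ℝ) (hne : θ₁ ≠ θ₂)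
    (h₁₁ : θ₁.1 ∈ Set.Icc 0 (2 * Real.pi / 3)) (h₁₂ : θ₁.2 ∈ Set.Icc 0 (2 * Real.pi / 3))
    (h₂₁ : θ₂.1 ∈ Set.Icc 0 (2 * Real.pi / 3)) (h₂₂ : θ₂.2 ∈ Set.Icc 0 (2 * Real.pi / 3))
    (hgap₁ : Real.pi / 3 ≤ θ₁.2 - θ₁.1 ∧ θ₁.2 - θ₁.1 ≤ 2 * Real.pi / 3)
    (hgap₂ : Real.pi / 3 ≤ θ₂.2 - θ₂.1 ∧ θ₂.2 - θ₂.1 ≤ 2 * Real.pi / 3)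
    (Δ : ℝ) (hΔ : 0 < Δ) (hsep : Δ ≤ norm1 (θ₁ - θ₂)) :
    3 / (2 * Real.pi) * Δ ≤
      ‖(Complex.exp (Complex.I * (θ₁.1 : ℝ)) + Complex.exp (Complex.I * (θ₁.2 : ℝ)) -
          (Complex.exp (Complex.I * (θ₂.1 : ℝ)) + Complex.exp (Complex.I * (θ₂.2 : ℝ))))‖ := by
  obtain ⟨ha10, ha1u⟩ := h₁₁
  obtain ⟨hb10, hb1u⟩ := h₁₂
  obtain ⟨ha20, ha2u⟩ := h₂₁
  obtain ⟨hb20, hb2u⟩ := h₂₂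
  obtain ⟨hg1l, hg1u⟩ := hgap₁
  obtain ⟨hg2l, hg2u⟩ := hgap₂
  have hπ := Real.pi_pos
  set a₁ := θ₁.1 with ha₁
  set b₁ := θ₁.2 with hb₁
  set a₂ := θ₂.1 with ha₂
  set b₂ := θ₂.2 with hb₂
  rw [sum_exp a₁ b₁, sum_exp a₂ b₂]
  set r₁ := 2 * Real.cos ((b₁ - a₁)/2) with hr₁
  set r₂ := 2 * Real.cos ((b₂ - a₂)/2) with hr₂
  set m₁ := (a₁ + b₁)/2 with hm₁
  set m₂ := (a₂ + b₂)/2 with hm₂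
  have habs2 := absSq r₁ r₂ m₁ m₂
  set E := ‖(r₁:ℂ) * Complex.exp (Complex.I * ((m₁:ℝ):ℂ)) -
      (r₂:ℂ) * Complex.exp (Complex.I * ((m₂:ℝ):ℂ))‖ with hE
  have hE0 : 0 ≤ E := norm_nonneg _
  clear_value E
  -- bounds on r
  have hcos_mono : ∀ x : ℝ, π/6 ≤ x → x ≤ π/3 → 1/2 ≤ Real.cos x := by
    intro x hx1 hx2
    have := Real.cos_le_cos_of_nonneg_of_le_pi (by linarith : (0:ℝ) ≤ x) (by linarith) hx2
    rwa [Real.cos_pi_div_three] at this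
  have hr1l : 1 ≤ r₁ := by
    have := hcos_mono ((b₁-a₁)/2) (by linarith) (by linarith); linarith
  have hr2l : 1 ≤ r₂ := by
    have := hcos_mono ((b₂-a₂)/2) (by linarith) (by linarith); linarith
  have hcosδ : Real.cos (m₁ - m₂) ≤ 1 := Real.cos_le_one _
  clear_value r₁ r₂ m₁ m₂
  -- separation
  have hN : Δ ≤ |a₁ - a₂| + |b₁ - b₂| := by
    simpa [norm1, ha₁, hb₁, ha₂, hb₂] using hsep
  have hΔpos : 0 ≤ 3 / (2*π) * Δ := by positivity
  clear hne hsep hE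
  have key : |a₁-a₂| + |b₁-b₂| ≤ |(a₁-a₂) + (b₁-b₂)| ∨
      |a₁-a₂| + |b₁-b₂| ≤ |(b₁-b₂) - (a₁-a₂)| := by
    rcases le_total 0 (a₁-a₂) with h1|h1 <;> rcases le_total 0 (b₁-b₂) with h2|h2
    · left; rw [abs_of_nonneg h1, abs_of_nonneg h2]; exact le_abs_self _
    · right; rw [abs_of_nonneg h1, abs_of_nonpos h2]
      exact le_abs.mpr (Or.inr (by linarith))
    · right; rw [abs_of_nonpos h1, abs_of_nonneg h2]
      exact le_abs.mpr (Or.inl (by linarith))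
    · left; rw [abs_of_nonpos h1, abs_of_nonpos h2]
      exact le_abs.mpr (Or.inr (by linarith))
  rcases key with hcase | hcase
  · -- angular case : Δ ≤ 2|δ|
    have h2δ : (a₁-a₂) + (b₁-b₂) = 2*(m₁-m₂) := by rw [hm₁, hm₂]; ring
    have hδΔ : Δ ≤ 2 * |m₁ - m₂| := by
      calc Δ ≤ |a₁-a₂| + |b₁-b₂| := hN
        _ ≤ |(a₁-a₂) + (b₁-b₂)| := hcase
        _ = 2 * |m₁ - m₂| := by rw [h2δ, abs_mul]; simp
    -- |δ| ≤ π/3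
    have hδu : |m₁ - m₂| ≤ π/3 := by
      rw [abs_le, hm₁, hm₂]; constructor <;> linarith
    set d := |m₁ - m₂| with hd
    clear_value d
    have hd0 : 0 ≤ d := by rw [hd]; exact abs_nonneg _
    have hsin : 3/π * (d/2) ≤ Real.sin (d/2) := sin_chord (by linarith) (by linarith)
    have hc0 : 0 ≤ 3/π * (d/2) := mul_nonneg (by positivity) (by linarith)
    have hcabs : Real.cos (m₁ - m₂) = Real.cos d := by rw [hd]; exact (Real.cos_abs _).symm
    have hcd : Real.cos d = 2 * Real.cos (d/2)^2 - 1 := by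
      have := Real.cos_two_mul (d/2)
      rwa [show 2*(d/2) = d by ring] at this
    have hpy := Real.sin_sq_add_cos_sq (d/2)
    apply sqrt_step hΔpos hE0
    rw [habs2]
    have hE2 : 4 * Real.sin (d/2)^2 ≤ r₁^2 + r₂^2 - 2*r₁*r₂*Real.cos (m₁-m₂) := by
      rw [hcabs, hcd]
      exact quadE hr1l hr2l hpy
    have hΔd : 3/(2*π)*Δ ≤ 2 * (3/π * (d/2)) := by
      have h1 : 3/(2*π)*Δ ≤ 3/(2*π)*(2*d) :=
        mul_le_mul_of_nonneg_left hδΔ (by positivity)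
      have h2 : 3/(2*π)*(2*d) = 2 * (3/π * (d/2)) := by
        field_simp
      linarith
    exact chainE hΔpos hΔd hc0 hsin hE2
  · -- modulus case : Δ ≤ |g₁ - g₂|
    have hgΔ : Δ ≤ |(b₁-a₁) - (b₂-a₂)| := by
      calc Δ ≤ |a₁-a₂| + |b₁-b₂| := hN
        _ ≤ |(b₁-b₂) - (a₁-a₂)| := hcase
        _ = |(b₁-a₁) - (b₂-a₂)| := by ring_nf
    have hrdiff : 3/(2*π)*Δ ≤ |r₁ - r₂| := by
      rcases le_total (b₁-a₁) (b₂-a₂) with h | h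
      · have := cos_chord (a := (b₁-a₁)/2) (b := (b₂-a₂)/2) (by linarith) (by linarith) (by linarith)
        have habs : |(b₁-a₁) - (b₂-a₂)| = (b₂-a₂) - (b₁-a₁) := by
          rw [abs_of_nonpos (by linarith)]; ring
        have : 3/(2*π)*Δ ≤ r₁ - r₂ := by
          rw [hr₁, hr₂]
          have hmul : 3/(2*π)*Δ ≤ 3/(2*π)*((b₂-a₂) - (b₁-a₁)) := by
            apply mul_le_mul_of_nonneg_left _ (by positivity)
            rw [← habs]; exact hgΔ
          linarith [this, hmul]
        exact le_trans this (le_abs_self _)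
      · have := cos_chord (a := (b₂-a₂)/2) (b := (b₁-a₁)/2) (by linarith) (by linarith) (by linarith)
        have habs : |(b₁-a₁) - (b₂-a₂)| = (b₁-a₁) - (b₂-a₂) := abs_of_nonneg (by linarith)
        have h2 : 3/(2*π)*Δ ≤ r₂ - r₁ := by
          rw [hr₁, hr₂]
          have hmul : 3/(2*π)*Δ ≤ 3/(2*π)*((b₁-a₁) - (b₂-a₂)) := by
            apply mul_le_mul_of_nonneg_left _ (by positivity)
            rw [← habs]; exact hgΔ
          linarith [this, hmul]
        rw [abs_sub_comm]
        exact le_trans h2 (le_abs_self _)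
    apply sqrt_step hΔpos hE0
    rw [habs2]
    exact chainR hΔpos hrdiff hcosδ hr1l hr2l
end

section
/- Let x_1, x_2 ∈ [0, π/2] × [π/2, π] ⊂ ℝ² be two distinct vectors with ‖x_1 − x_2‖₁ ≥ C for some constant C > 0. Then |e^{i x_{1,1}} + e^{i x_{1,2}} − (e^{i x_{2,1}} + e^{i x_{2,2}})| ≥ 2C²/π². -/
open Real

lemma sin_sq_lb (t : ℝ) (h0 : 0 ≤ t) (h1 : t ≤ π/4) :
    8 * t^2 / π^2 ≤ (Real.sin t)^2 := by
  have hπ := Real.pi_pos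
  have hb0 : (0:ℝ) ≤ 4*t/π := by positivity
  have hb1 : 4*t/π ≤ 1 := by rw [div_le_one hπ]; linarith
  have h := strictConcaveOn_sin_Icc.concaveOn.2
      (show (0:ℝ) ∈ Set.Icc (0:ℝ) π from ⟨le_refl 0, by positivity⟩)
      (show π/4 ∈ Set.Icc (0:ℝ) π from ⟨by positivity, by linarith⟩)
      (show (0:ℝ) ≤ 1 - 4*t/π by linarith) hb0 (by ring)
  simp only [smul_eq_mul, mul_zero, Real.sin_zero, zero_add] at h
  rw [Real.sin_pi_div_four, show 4*t/π * (π/4) = t by field_simp] at h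
  have hk : Real.sqrt 2 ^ 2 = 2 := Real.sq_sqrt (by norm_num)
  have hk0 : (0:ℝ) ≤ Real.sqrt 2 := Real.sqrt_nonneg 2
  rw [div_le_iff₀ (by positivity)]
  have hs : 4*t/π * (Real.sqrt 2 / 2) ≤ Real.sin t := h
  have hs0 : (0:ℝ) ≤ 4*t/π * (Real.sqrt 2 / 2) := by positivity
  have hmul := mul_le_mul hs hs hs0 (le_trans hs0 hs)
  have h2 : (4*t/π * (Real.sqrt 2 / 2))^2 * π^2 = 8 * t^2 := by
    have h22 : (4*t*Real.sqrt 2)^2 = 32*t^2 := by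
      rw [mul_pow, hk]; ring
    field_simp
    rw [hk]; ring
  nlinarith [hmul, sq_nonneg (Real.sin t), sq_nonneg π, hπ]

lemma key_lb (u : ℝ) (h0 : 0 ≤ u) (h : u ≤ π/2) :
    4*u^2/π^2 ≤ 2 * Real.sin (u/2)^2 := by
  have hπ := Real.pi_pos
  have := sin_sq_lb (u/2) (by linarith) (by linarith)
  have heq : 8 * (u/2)^2 / π^2 = 2*u^2/π^2 := by ring
  rw [heq] at this
  have h4 : 4*u^2/π^2 = 2*(2*u^2/π^2) := by ring
  rw [h4]
  linarith

lemma cos_gap (a c : ℝ) (ha0 : 0 ≤ a) (ha1 : a ≤ π/2) (hc0 : 0 ≤ c) (hc1 : c ≤ π/2)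
    (h : c ≤ a) : 2 * Real.sin ((a-c)/2)^2 ≤ Real.cos c - Real.cos a := by
  have hπ := Real.pi_pos
  have hid := Real.cos_sub_cos a c
  have hm : Real.sin ((a-c)/2) ≤ Real.sin ((a+c)/2) :=
    Real.strictMonoOn_sin.monotoneOn ⟨by linarith, by linarith⟩ ⟨by linarith, by linarith⟩
      (by linarith)
  have hs : 0 ≤ Real.sin ((a-c)/2) := Real.sin_nonneg_of_nonneg_of_le_pi (by linarith) (by linarith)
  nlinarith [hid, hm, hs]

lemma sin_gap (a c : ℝ) (ha0 : 0 ≤ a) (ha1 : a ≤ π/2) (hc0 : 0 ≤ c) (hc1 : c ≤ π/2)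
    (h : c ≤ a) : 2 * Real.sin ((a-c)/2)^2 ≤ Real.sin a - Real.sin c := by
  have hπ := Real.pi_pos
  have hid := Real.sin_sub_sin a c
  have hcos : Real.cos ((a+c)/2) = Real.sin (π/2 - (a+c)/2) := (Real.sin_pi_div_two_sub _).symm
  have hm : Real.sin ((a-c)/2) ≤ Real.sin (π/2 - (a+c)/2) :=
    Real.strictMonoOn_sin.monotoneOn ⟨by linarith, by linarith⟩ ⟨by linarith, by linarith⟩
      (by linarith)
  have hs : 0 ≤ Real.sin ((a-c)/2) := Real.sin_nonneg_of_nonneg_of_le_pi (by linarith) (by linarith)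
  nlinarith [hid, hm, hs, hcos]

set_option maxHeartbeats 1600000 in
theorem stmt7 (x₁ x₂ : ℝ × ℝ) (hne : x₁ ≠ x₂)
    (h₁₁ : x₁.1 ∈ Set.Icc 0 (Real.pi / 2)) (h₁₂ : x₁.2 ∈ Set.Icc (Real.pi / 2) Real.pi)
    (h₂₁ : x₂.1 ∈ Set.Icc 0 (Real.pi / 2)) (h₂₂ : x₂.2 ∈ Set.Icc (Real.pi / 2) Real.pi)
    (C : ℝ) (hC : 0 < C) (hsep : C ≤ norm1 (x₁ - x₂)) :
    2 * C ^ 2 / Real.pi ^ 2 ≤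
      ‖Complex.exp (Complex.I * (x₁.1 : ℝ)) + Complex.exp (Complex.I * (x₁.2 : ℝ)) -
          (Complex.exp (Complex.I * (x₂.1 : ℝ)) + Complex.exp (Complex.I * (x₂.2 : ℝ)))‖ := by
  have hπ := Real.pi_pos
  obtain ⟨ha0, ha1⟩ := h₁₁
  obtain ⟨hb0, hb1⟩ := h₁₂
  obtain ⟨hc0, hc1⟩ := h₂₁
  obtain ⟨hd0, hd1⟩ := h₂₂
  set a := x₁.1 with hadef; set b := x₁.2 with hbdef
  set c := x₂.1 with hcdef; set d := x₂.2 with hddef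
  set E : ℂ := Complex.exp (Complex.I * (a : ℝ)) + Complex.exp (Complex.I * (b : ℝ)) -
      (Complex.exp (Complex.I * (c : ℝ)) + Complex.exp (Complex.I * (d : ℝ))) with hE
  have hsep' : C ≤ |a - c| + |b - d| := by
    simpa [norm1, Prod.fst_sub, Prod.snd_sub, ← hadef, ← hbdef, ← hcdef, ← hddef] using hsep
  clear_value a b c d
  clear hsep hne hadef hbdef hcdef hddef
  have hre : E.re = Real.cos a + Real.cos b - (Real.cos c + Real.cos d) := by
    simp [hE, mul_comm Complex.I, Complex.sub_re, Complex.add_re,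
      Complex.exp_ofReal_mul_I_re]
  have him : E.im = Real.sin a + Real.sin b - (Real.sin c + Real.sin d) := by
    simp [hE, mul_comm Complex.I, Complex.sub_im, Complex.add_im,
      Complex.exp_ofReal_mul_I_im]
  have hRe := Complex.abs_re_le_norm E
  have hIm := Complex.abs_im_le_norm E
  rcases le_total c a with h1 | h1 <;> rcases le_total d b with h2 | h2
  · -- c ≤ a, d ≤ b : use real part, negative
    have g1 := cos_gap a c ha0 ha1 hc0 hc1 h1
    have g2 : 2 * Real.sin ((b-d)/2)^2 ≤ Real.cos d - Real.cos b := by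
      have := cos_gap (π-d) (π-b) (by linarith) (by linarith) (by linarith) (by linarith)
        (by linarith)
      rw [Real.cos_pi_sub, Real.cos_pi_sub, show ((π-d)-(π-b))/2 = (b-d)/2 by ring] at this
      linarith
    have k1 := key_lb (a-c) (by linarith) (by linarith)
    have k2 := key_lb (b-d) (by linarith) (by linarith)
    have hC2 : 2*C^2/π^2 ≤ 4*(a-c)^2/π^2 + 4*(b-d)^2/π^2 := by
      have habs1 : |a-c| = a-c := abs_of_nonneg (by linarith)
      have habs2 : |b-d| = b-d := abs_of_nonneg (by linarith)
      rw [habs1, habs2] at hsep'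
      have hsq : C^2 ≤ ((a-c)+(b-d))^2 := pow_le_pow_left₀ hC.le hsep' 2
      have hnum : 2*C^2 ≤ 4*(a-c)^2 + 4*(b-d)^2 := by
        nlinarith [hsq, sq_nonneg ((a-c)-(b-d))]
      rw [← add_div]
      gcongr
    have hneg : -E.re ≤ ‖E‖ := (neg_le_abs _).trans hRe
    rw [hre] at hneg
    linarith
  · -- c ≤ a, b ≤ d : use imaginary part, positive
    have g1 := sin_gap a c ha0 ha1 hc0 hc1 h1
    have g2 : 2 * Real.sin ((d-b)/2)^2 ≤ Real.sin b - Real.sin d := by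
      have := sin_gap (π-b) (π-d) (by linarith) (by linarith) (by linarith) (by linarith)
        (by linarith)
      rw [Real.sin_pi_sub, Real.sin_pi_sub, show ((π-b)-(π-d))/2 = (d-b)/2 by ring] at this
      linarith
    have k1 := key_lb (a-c) (by linarith) (by linarith)
    have k2 := key_lb (d-b) (by linarith) (by linarith)
    have hC2 : 2*C^2/π^2 ≤ 4*(a-c)^2/π^2 + 4*(d-b)^2/π^2 := by
      have habs1 : |a-c| = a-c := abs_of_nonneg (by linarith)
      have habs2 : |b-d| = d-b := by rw [abs_sub_comm]; exact abs_of_nonneg (by linarith)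
      rw [habs1, habs2] at hsep'
      have hsq : C^2 ≤ ((a-c)+(d-b))^2 := pow_le_pow_left₀ hC.le hsep' 2
      have hnum : 2*C^2 ≤ 4*(a-c)^2 + 4*(d-b)^2 := by
        nlinarith [hsq, sq_nonneg ((a-c)-(d-b))]
      rw [← add_div]
      gcongr
    have hpos : E.im ≤ ‖E‖ := (le_abs_self _).trans hIm
    rw [him] at hpos
    linarith
  · -- a ≤ c, d ≤ b : use imaginary part, negative
    have g1 := sin_gap c a hc0 hc1 ha0 ha1 h1
    have g2 : 2 * Real.sin ((b-d)/2)^2 ≤ Real.sin d - Real.sin b := by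
      have := sin_gap (π-d) (π-b) (by linarith) (by linarith) (by linarith) (by linarith)
        (by linarith)
      rw [Real.sin_pi_sub, Real.sin_pi_sub, show ((π-d)-(π-b))/2 = (b-d)/2 by ring] at this
      linarith
    have k1 := key_lb (c-a) (by linarith) (by linarith)
    have k2 := key_lb (b-d) (by linarith) (by linarith)
    have hC2 : 2*C^2/π^2 ≤ 4*(c-a)^2/π^2 + 4*(b-d)^2/π^2 := by
      have habs1 : |a-c| = c-a := by rw [abs_sub_comm]; exact abs_of_nonneg (by linarith)
      have habs2 : |b-d| = b-d := abs_of_nonneg (by linarith)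
      rw [habs1, habs2] at hsep'
      have hsq : C^2 ≤ ((c-a)+(b-d))^2 := pow_le_pow_left₀ hC.le hsep' 2
      have hnum : 2*C^2 ≤ 4*(c-a)^2 + 4*(b-d)^2 := by
        nlinarith [hsq, sq_nonneg ((c-a)-(b-d))]
      rw [← add_div]
      gcongr
    have hneg : -E.im ≤ ‖E‖ := (neg_le_abs _).trans hIm
    rw [him] at hneg
    linarith
  · -- a ≤ c, b ≤ d : use real part, positive
    have g1 := cos_gap c a hc0 hc1 ha0 ha1 h1
    have g2 : 2 * Real.sin ((d-b)/2)^2 ≤ Real.cos b - Real.cos d := by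
      have := cos_gap (π-b) (π-d) (by linarith) (by linarith) (by linarith) (by linarith)
        (by linarith)
      rw [Real.cos_pi_sub, Real.cos_pi_sub, show ((π-b)-(π-d))/2 = (d-b)/2 by ring] at this
      linarith
    have k1 := key_lb (c-a) (by linarith) (by linarith)
    have k2 := key_lb (d-b) (by linarith) (by linarith)
    have hC2 : 2*C^2/π^2 ≤ 4*(c-a)^2/π^2 + 4*(d-b)^2/π^2 := by
      have habs1 : |a-c| = c-a := by rw [abs_sub_comm]; exact abs_of_nonneg (by linarith)
      have habs2 : |b-d| = d-b := by rw [abs_sub_comm]; exact abs_of_nonneg (by linarith)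
      rw [habs1, habs2] at hsep'
      have hsq : C^2 ≤ ((c-a)+(d-b))^2 := pow_le_pow_left₀ hC.le hsep' 2
      have hnum : 2*C^2 ≤ 4*(c-a)^2 + 4*(d-b)^2 := by
        nlinarith [hsq, sq_nonneg ((c-a)-(d-b))]
      rw [← add_div]
      gcongr
    have hpos : E.re ≤ ‖E‖ := (le_abs_self _).trans hRe
    rw [hre] at hpos
    linarith
end

section
/- Let d_1, ..., d_k be k pairwise distinct complex numbers and let V_{k−1}(k) be the k×k Vandermonde matrix with entries (V_{k−1}(k))_{i,j} = d_j^{i−1} for 1 ≤ i, j ≤ k. Then V_{k−1}(k) is invertible and ‖V_{k−1}(k)^{-1}‖_∞ ≤ max_{1≤i≤k} ∏_{1≤p≤k, p≠i} (1 + |d_p|)/|d_i − d_p|, where ‖M‖_∞ denotes the maximum absolute row sum of the matrix M (the operator norm induced by the sup-norm on vectors). -/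
open Finset Matrix Polynomial

noncomputable def l1 (p : Polynomial ℂ) : ℝ := ∑ j ∈ p.support, ‖p.coeff j‖

lemma l1_eq_sum {p : Polynomial ℂ} {t : Finset ℕ} (h : p.support ⊆ t) :
    l1 p = ∑ j ∈ t, ‖p.coeff j‖ := by
  refine Finset.sum_subset h fun x _ hx => ?_
  simp [Polynomial.notMem_support_iff.mp hx]

lemma l1_C_mul (a : ℂ) (q : Polynomial ℂ) : l1 (C a * q) = ‖a‖ * l1 q := by
  rw [l1_eq_sum (t := q.support) (by rw [← Polynomial.smul_eq_C_mul]; exact Polynomial.support_smul a q)]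
  simp [l1, Finset.mul_sum, Polynomial.coeff_C_mul]

lemma l1_X_mul (q : Polynomial ℂ) : l1 (X * q) = l1 q := by
  rw [l1_eq_sum (t := q.support.map ⟨Nat.succ, Nat.succ_injective⟩)]
  · rw [Finset.sum_map]
    simp [l1, Polynomial.coeff_X_mul]
  · intro j hj
    have hj' := Polynomial.notMem_support_iff.not.mp (by simpa using hj)
    push_neg at hj'
    rcases j with _ | m
    · simp at hj'
    · simp only [Polynomial.coeff_X_mul] at hj'
      simp only [Finset.mem_map, Function.Embedding.coeFn_mk]
      exact ⟨m, Polynomial.mem_support_iff.mpr hj', rfl⟩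

lemma l1_sub_le (p q : Polynomial ℂ) : l1 (p - q) ≤ l1 p + l1 q := by
  have hsub : (p - q).support ⊆ p.support ∪ q.support := by
    intro j hj
    by_contra hc
    simp only [Finset.mem_union, Polynomial.mem_support_iff, not_or, not_not] at hc
    exact Polynomial.mem_support_iff.mp hj (by simp [Polynomial.coeff_sub, hc.1, hc.2])
  rw [l1_eq_sum (t := p.support ∪ q.support) hsub,
    l1_eq_sum (t := p.support ∪ q.support) Finset.subset_union_left,
    l1_eq_sum (t := p.support ∪ q.support) Finset.subset_union_right, ← Finset.sum_add_distrib]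
  refine Finset.sum_le_sum fun j _ => ?_
  simpa [Polynomial.coeff_sub] using norm_sub_le (p.coeff j) (q.coeff j)

lemma l1_nonneg (p : Polynomial ℂ) : 0 ≤ l1 p :=
  Finset.sum_nonneg fun _ _ => norm_nonneg _

lemma l1_one : l1 (1 : Polynomial ℂ) = 1 := by
  have h : (1 : Polynomial ℂ).support = {0} := by
    rw [← Polynomial.C_1]; exact Polynomial.support_C one_ne_zero
  simp [l1, h]

lemma l1_X_sub_C_mul (a : ℂ) (q : Polynomial ℂ) :
    l1 ((X - C a) * q) ≤ (1 + ‖a‖) * l1 q := by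
  have h : (X - C a) * q = X * q - C a * q := by ring
  rw [h]
  calc l1 (X * q - C a * q) ≤ l1 (X * q) + l1 (C a * q) := l1_sub_le _ _
    _ = (1 + ‖a‖) * l1 q := by rw [l1_X_mul, l1_C_mul]; ring

lemma l1_prod_le {ι : Type*} (s : Finset ι) (c a : ι → ℂ) :
    l1 (∏ p ∈ s, C (c p) * (X - C (a p))) ≤
      ∏ p ∈ s, ‖c p‖ * (1 + ‖a p‖) := by
  induction s using Finset.cons_induction with
  | empty => simp [l1_one]
  | cons i s hi ih =>
    rw [Finset.prod_cons, Finset.prod_cons, mul_assoc, l1_C_mul, mul_assoc]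
    refine mul_le_mul_of_nonneg_left ?_ (norm_nonneg _)
    calc l1 ((X - C (a i)) * ∏ p ∈ s, C (c p) * (X - C (a p)))
        ≤ (1 + ‖a i‖) * l1 (∏ p ∈ s, C (c p) * (X - C (a p))) :=
          l1_X_sub_C_mul _ _
      _ ≤ (1 + ‖a i‖) * ∏ p ∈ s, ‖c p‖ * (1 + ‖a p‖) := by
          refine mul_le_mul_of_nonneg_left ih (by positivity)

/-- The matrix norm induced by the sup-norm on vectors: the maximum absolute row sum. -/
noncomputable def rowSumNorm {m n : ℕ} (M : Matrix (Fin m) (Fin n) ℂ) : ℝ :=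
  ⨆ i, ∑ j, ‖M i j‖

theorem stmt8 (k : ℕ) (hk : 0 < k) (d : Fin k → ℂ) (hd : Function.Injective d)
    (V : Matrix (Fin k) (Fin k) ℂ) (hV : ∀ i j, V i j = d j ^ (i : ℕ)) :
    IsUnit V.det ∧
      rowSumNorm V⁻¹ ≤
        ⨆ i : Fin k, ∏ p ∈ Finset.univ.erase i,
          (1 + ‖d p‖) / ‖d i - d p‖ := by
  have hne : Nonempty (Fin k) := ⟨⟨0, hk⟩⟩
  set L : Fin k → Polynomial ℂ := fun i => Lagrange.basis Finset.univ d i with hL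
  have hinj : Set.InjOn d ↑(Finset.univ : Finset (Fin k)) := hd.injOn
  have hdeg : ∀ i, (L i).natDegree < k := fun i => by
    have := Lagrange.natDegree_basis hinj (Finset.mem_univ i)
    rw [hL]
    simp only [this, Finset.card_univ, Fintype.card_fin]
    exact Nat.sub_lt hk one_pos
  set W : Matrix (Fin k) (Fin k) ℂ := fun i j => (L i).coeff j with hW
  have hWV : W * V = 1 := by
    ext i m
    rw [Matrix.mul_apply]
    have heval : ∑ j, W i j * V j m = (L i).eval (d m) := by
      rw [Polynomial.eval_eq_sum_range' (hdeg i) (d m),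
        ← Fin.sum_univ_eq_sum_range (fun j => (L i).coeff j * d m ^ j) k]
      exact Finset.sum_congr rfl fun j _ => by rw [hW, hV]
    rw [heval]
    by_cases him : i = m
    · subst him
      rw [Lagrange.eval_basis_self hinj (Finset.mem_univ i), Matrix.one_apply_eq]
    · rw [Lagrange.eval_basis_of_ne him (Finset.mem_univ m), Matrix.one_apply_ne him]
  refine ⟨Matrix.isUnit_det_of_left_inverse hWV, ?_⟩
  rw [Matrix.inv_eq_left_inv hWV, rowSumNorm]
  refine ciSup_le fun i => ?_
  refine le_trans ?_ (le_ciSup (Set.Finite.bddAbove (Set.finite_range _)) i)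
  -- pointwise bound
  have hsum : ∑ j, ‖W i j‖ = l1 (L i) := by
    rw [l1_eq_sum (t := Finset.range k)
      (fun j hj => Finset.mem_range.mpr (Nat.lt_of_le_of_lt (Nat.lt_succ_iff.mp
        (Finset.mem_range.mp (Polynomial.supp_subset_range_natDegree_succ hj))) (hdeg i))),
      ← Fin.sum_univ_eq_sum_range (fun j => ‖(L i).coeff j‖) k]
  rw [hsum]
  have hform : L i = ∏ p ∈ Finset.univ.erase i, C ((d i - d p)⁻¹) * (X - C (d p)) := by
    rw [hL]
    rfl
  rw [hform]
  refine (l1_prod_le _ _ _).trans (le_of_eq ?_)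
  refine Finset.prod_congr rfl fun p _ => ?_
  rw [norm_inv, div_eq_mul_inv, mul_comm]
end

section
/- Let d_1, ..., d_k be k pairwise distinct complex numbers with max_i |d_i| ≤ d, and set d_min = min_{i≠j} |d_i − d_j|. Let V_{k−1}(k) be the k×k Vandermonde matrix with entries d_j^{i−1}. Then ‖V_{k−1}(k)^{-1}‖_∞ ≤ (1+d)^{k−1} / d_min^{k−1}, where ‖M‖_∞ denotes the maximum absolute row sum of M. -/
open Finset Matrix Polynomial

lemma step_lemma (p : ℂ[X]) (n : ℕ) (hn : p.natDegree ≤ n) (cc : ℂ) :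
    ∑ m ∈ Finset.range (n + 2), ‖((X - C cc) * p).coeff m‖
      ≤ (1 + ‖cc‖) * ∑ m ∈ Finset.range (n + 1), ‖p.coeff m‖ := by
  have hcoefftop : p.coeff (n + 1) = 0 :=
    Polynomial.coeff_eq_zero_of_natDegree_lt (by omega)
  have h1 : ∑ m ∈ Finset.range (n + 2), ‖((X - C cc) * p).coeff m‖
      ≤ ∑ m ∈ Finset.range (n + 2),
          (‖(X * p).coeff m‖ + ‖cc * p.coeff m‖) := by
    apply Finset.sum_le_sum
    intro m _
    have hcoeff : ((X - C cc) * p).coeff m = (X * p).coeff m - cc * p.coeff m := by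
      rw [sub_mul, Polynomial.coeff_sub, Polynomial.coeff_C_mul]
    rw [hcoeff]
    exact norm_sub_le _ _
  have h2 : ∑ m ∈ Finset.range (n + 2), ‖(X * p).coeff m‖
      = ∑ m ∈ Finset.range (n + 1), ‖p.coeff m‖ := by
    have e2 := Finset.sum_range_succ' (fun m => ‖(X * p).coeff m‖) (n + 1)
    simp only [Polynomial.coeff_X_mul, Polynomial.mul_coeff_zero, Polynomial.coeff_X_zero,
      zero_mul, norm_zero, add_zero] at e2
    exact e2
  have h3 : ∑ m ∈ Finset.range (n + 2), ‖cc * p.coeff m‖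
      = ‖cc‖ * ∑ m ∈ Finset.range (n + 1), ‖p.coeff m‖ := by
    rw [Finset.sum_range_succ, hcoefftop]
    simp [norm_mul, Finset.mul_sum]
  rw [Finset.sum_add_distrib, h2, h3] at h1
  linarith

lemma sum_abs_coeff_prod {ι : Type*} [DecidableEq ι] (s : Finset ι) (a : ι → ℂ) :
    ∑ m ∈ Finset.range (s.card + 1),
      ‖(∏ j ∈ s, (X - C (a j))).coeff m‖ ≤ ∏ j ∈ s, (1 + ‖a j‖) := by
  induction s using Finset.induction_on with
  | empty => simp
  | @insert i s his ih =>
    have hdeg : (∏ j ∈ s, (X - C (a j))).natDegree ≤ s.card := by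
      refine le_trans (Polynomial.natDegree_prod_le _ _) ?_
      apply le_of_eq
      simp [Polynomial.natDegree_X_sub_C]
    rw [Finset.card_insert_of_notMem his, Finset.prod_insert his, Finset.prod_insert his]
    refine le_trans (step_lemma _ s.card hdeg (a i)) ?_
    apply mul_le_mul_of_nonneg_left ih
    positivity

set_option maxHeartbeats 800000 in
theorem stmt9 (k : ℕ) (hk : 0 < k) (d : Fin k → ℂ) (hd : Function.Injective d)
    (dd : ℝ) (hdd : ∀ i, ‖d i‖ ≤ dd)
    (dmin : ℝ) (hdminpos : 0 < dmin)
    (hdmin : ∀ i j, i ≠ j → dmin ≤ ‖d i - d j‖)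
    (V : Matrix (Fin k) (Fin k) ℂ) (hV : ∀ i j, V i j = d j ^ (i : ℕ)) :
    rowSumNorm V⁻¹ ≤ (1 + dd) ^ (k - 1) / dmin ^ (k - 1) := by
  haveI : NeZero k := ⟨hk.ne'⟩
  have hinj : Set.InjOn d (Finset.univ : Finset (Fin k)) := hd.injOn
  set L : Fin k → Polynomial ℂ := fun i => Lagrange.basis Finset.univ d i with hL
  have hdegL : ∀ i, (L i).natDegree = k - 1 := by
    intro i
    rw [hL]
    rw [Lagrange.natDegree_basis hinj (Finset.mem_univ i)]
    simp
  set B : Matrix (Fin k) (Fin k) ℂ := fun i m => (L i).coeff m with hB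
  have hBV : B * V = 1 := by
    ext i j
    rw [Matrix.mul_apply]
    have step : ∑ m : Fin k, B i m * V m j = ∑ m ∈ Finset.range k, (L i).coeff m * d j ^ m :=
      calc ∑ m : Fin k, B i m * V m j
          = ∑ m : Fin k, (L i).coeff (m : ℕ) * d j ^ (m : ℕ) := by
            apply Finset.sum_congr rfl
            intro m _
            rw [hV]
        _ = ∑ m ∈ Finset.range k, (L i).coeff m * d j ^ m :=
            Fin.sum_univ_eq_sum_range (fun m => (L i).coeff m * d j ^ m) k
    rw [step, ← Polynomial.eval_eq_sum_range' (by rw [hdegL i]; omega) (d j)]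
    rcases eq_or_ne i j with rfl | hij
    · rw [Lagrange.eval_basis_self hinj (Finset.mem_univ i), Matrix.one_apply_eq]
    · rw [Lagrange.eval_basis_of_ne hij (Finset.mem_univ j), Matrix.one_apply_ne hij]
  have hVinv : V⁻¹ = B := Matrix.inv_eq_left_inv hBV
  rw [hVinv, rowSumNorm]
  have hdd0 : 0 ≤ dd := le_trans (norm_nonneg _) (hdd ⟨0, hk⟩)
  apply ciSup_le
  intro i
  set s : Finset (Fin k) := Finset.univ.erase i with hs
  have hcard : s.card = k - 1 := by simp [hs]
  set c : ℂ := ∏ j ∈ s, (d i - d j)⁻¹ with hc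
  set P : Polynomial ℂ := ∏ j ∈ s, (X - C (d j)) with hP
  have hLi : L i = C c * P := by
    have : L i = ∏ j ∈ s, (C (d i - d j)⁻¹ * (X - C (d j))) := rfl
    rw [this, Finset.prod_mul_distrib, hc, hP, map_prod]
  have hcat : ∀ j : Fin k, ‖B i j‖ = ‖c‖ * ‖P.coeff j‖ := by
    intro j
    show ‖(L i).coeff j‖ = _
    rw [hLi, Polynomial.coeff_C_mul, norm_mul]
  have h1 : ∑ j : Fin k, ‖B i j‖
      = ‖c‖ * ∑ m ∈ Finset.range k, ‖P.coeff m‖ :=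
    calc ∑ j : Fin k, ‖B i j‖
        = ∑ j : Fin k, ‖c‖ * ‖P.coeff (j : ℕ)‖ :=
          Finset.sum_congr rfl (fun j _ => hcat j)
      _ = ∑ m ∈ Finset.range k, ‖c‖ * ‖P.coeff m‖ :=
          Fin.sum_univ_eq_sum_range (fun m => ‖c‖ * ‖P.coeff m‖) k
      _ = ‖c‖ * ∑ m ∈ Finset.range k, ‖P.coeff m‖ := by
          rw [Finset.mul_sum]
  have h2 : ∑ m ∈ Finset.range k, ‖P.coeff m‖ ≤ ∏ j ∈ s, (1 + ‖d j‖) := by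
    have h := sum_abs_coeff_prod s d
    have e : s.card + 1 = k := by omega
    rwa [e] at h
  have h3 : ∏ j ∈ s, (1 + ‖d j‖) ≤ (1 + dd) ^ (k - 1) := by
    rw [← hcard, ← Finset.prod_const]
    apply Finset.prod_le_prod
    · intro j _; positivity
    · intro j _; linarith [hdd j]
  have h4 : ‖c‖ ≤ (dmin ^ (k - 1))⁻¹ := by
    rw [hc, norm_prod, ← hcard, ← Finset.prod_const, ← Finset.prod_inv_distrib]
    apply Finset.prod_le_prod
    · intro j _; positivity
    · intro j hj
      rw [norm_inv]
      apply inv_anti₀ hdminpos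
      exact hdmin i j (by rw [hs] at hj; exact (Finset.ne_of_mem_erase hj).symm)
  rw [h1, div_eq_mul_inv, mul_comm ((1 + dd) ^ (k - 1))]
  apply mul_le_mul h4 (le_trans h2 h3) (by positivity) (by positivity)
end

section
/- Let d_1, ..., d_k be pairwise distinct complex numbers. For an integer s ≥ 0 let V_s(k) be the (s+1)×k matrix with entries (V_s(k))_{i,j} = d_j^{i−1}. Then √(det(V_k(k)*V_k(k)) / det(V_{k−1}(k)*V_{k−1}(k))) = √(Σ_{j=0}^{k} |e_j(d_1,...,d_k)|²), where e_j(d_1,...,d_k) = Σ over all j-element subsets {τ_1,...,τ_j} of {1,...,k} of d_{τ_1}···d_{τ_j} is the j-th elementary symmetric polynomial (with e_0 = 1). In particular, if |d_j| < d for all j, then this quantity is at most (1+d)^k. -/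
open Finset Matrix

/-- The `j`-th elementary symmetric polynomial of `d 0, ..., d (k-1)` (with `esym d 0 = 1`). -/
noncomputable def esym {k : ℕ} (d : Fin k → ℂ) (j : ℕ) : ℂ :=
  ∑ t ∈ Finset.univ.powersetCard j, ∏ i ∈ t, d i

section aux
open Polynomial
variable {k : ℕ} (d : Fin k → ℂ)

noncomputable def pp : ℂ[X] := ∏ j : Fin k, (X - C (d j))

noncomputable def yy (i : Fin k) : ℂ := - (pp d).coeff i

lemma pp_monic : (pp d).Monic := monic_prod_of_monic _ _ fun j _ => monic_X_sub_C (d j)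

lemma pp_natDegree : (pp d).natDegree = k := by
  rw [pp, natDegree_prod_of_monic _ _ fun j _ => monic_X_sub_C (d j)]
  simp [natDegree_X_sub_C]

lemma pp_eq : pp d = ((Finset.univ.val.map d).map fun t => X - C t).prod := by
  rw [pp, Finset.prod, Multiset.map_map]; rfl

lemma yy_key (j : Fin k) : ∑ i : Fin k, d j ^ (i : ℕ) * yy d i = d j ^ k := by
  have hev : (pp d).eval (d j) = 0 := by
    rw [pp, eval_prod]
    exact Finset.prod_eq_zero (Finset.mem_univ j) (by simp)
  rw [eval_eq_sum_range, pp_natDegree, Finset.sum_range_succ] at hev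
  have hck : (pp d).coeff k = 1 := by
    have := (pp_monic d).coeff_natDegree
    rwa [pp_natDegree] at this
  rw [hck, one_mul] at hev
  calc ∑ i : Fin k, d j ^ (i : ℕ) * yy d i
      = ∑ i ∈ Finset.range k, d j ^ i * (- (pp d).coeff i) :=
        Fin.sum_univ_eq_sum_range (fun i => d j ^ i * (- (pp d).coeff i)) k
    _ = d j ^ k := by
        have : ∑ i ∈ Finset.range k, d j ^ i * (- (pp d).coeff i)
            = - ∑ i ∈ Finset.range k, (pp d).coeff i * d j ^ i := by
          rw [← Finset.sum_neg_distrib]; exact Finset.sum_congr rfl (by intros; ring)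
        rw [this]; linear_combination -hev

lemma yy_abs (i : Fin k) : ‖yy d i‖ = ‖esym d (k - i)‖ := by
  have hcard : Multiset.card (Finset.univ.val.map d) = k := by simp
  have hcoeff := Multiset.prod_X_sub_C_coeff (Finset.univ.val.map d)
    (k := (i : ℕ)) (by rw [hcard]; exact le_of_lt i.isLt)
  rw [← pp_eq, hcard] at hcoeff
  have hes : (Finset.univ.val.map d).esymm (k - i) = esym d (k - i) :=
    Finset.esymm_map_val d Finset.univ (k - i)
  rw [yy, norm_neg, hcoeff, hes]
  simp [map_pow]

end aux

theorem stmt12 (k : ℕ) (d : Fin k → ℂ) (hd : Function.Injective d)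
    (Vk : Matrix (Fin (k + 1)) (Fin k) ℂ) (hVk : ∀ i j, Vk i j = d j ^ (i : ℕ))
    (Vk1 : Matrix (Fin k) (Fin k) ℂ) (hVk1 : ∀ i j, Vk1 i j = d j ^ (i : ℕ)) :
    Real.sqrt
        (((Vk.conjTranspose * Vk).det / (Vk1.conjTranspose * Vk1).det).re) =
      Real.sqrt (∑ j ∈ Finset.range (k + 1), ‖esym d j‖ ^ 2) ∧
    ∀ dd : ℝ, (∀ j, ‖d j‖ < dd) →
      Real.sqrt
          (((Vk.conjTranspose * Vk).det / (Vk1.conjTranspose * Vk1).det).re) ≤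
        (1 + dd) ^ k := by
  have h1 : replicateRow Unit (yy d) * Vk1 = replicateRow Unit (fun b => d b ^ k) := by
    ext u b
    simp only [Matrix.mul_apply, Matrix.replicateRow_apply, hVk1]
    rw [← yy_key d b]
    exact Finset.sum_congr rfl fun i _ => mul_comm _ _
  have h2 : Vk1.conjTranspose * replicateCol Unit (star (yy d)) = replicateCol Unit (fun a => star (d a ^ k)) := by
    ext a u
    simp only [Matrix.mul_apply, Matrix.replicateCol_apply, conjTranspose_apply, hVk1, Pi.star_apply]
    rw [← yy_key d a, star_sum]
    exact Finset.sum_congr rfl fun i _ => by rw [star_mul']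
  have hM : Vk.conjTranspose * Vk
      = Vk1.conjTranspose * ((1 : Matrix (Fin k) (Fin k) ℂ)
          + replicateCol Unit (star (yy d)) * replicateRow Unit (yy d)) * Vk1 := by
    rw [Matrix.mul_add, Matrix.mul_one, Matrix.add_mul, ← Matrix.mul_assoc,
      Matrix.mul_assoc (Vk1.conjTranspose * replicateCol Unit (star (yy d))), h1,
      Matrix.mul_assoc Vk1.conjTranspose, ← Matrix.mul_assoc, h2]
    ext a b
    simp only [Matrix.add_apply, Matrix.mul_apply, conjTranspose_apply, hVk, hVk1,
      Matrix.replicateCol_apply, Matrix.replicateRow_apply, Finset.univ_unique, Finset.sum_singleton,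
      Fin.sum_univ_castSucc, Fin.coe_castSucc, Fin.val_last]
  have hdet : (Vk.conjTranspose * Vk).det
      = (Vk1.conjTranspose * Vk1).det * (1 + yy d ⬝ᵥ star (yy d)) := by
    rw [hM, det_mul, det_mul, det_one_add_replicateCol_mul_replicateRow, det_mul]
    ring
  have hne : (Vk1.conjTranspose * Vk1).det ≠ 0 := by
    have hV : Vk1 = (Matrix.vandermonde d).transpose := by
      ext i j; rw [hVk1, transpose_apply, vandermonde_apply]
    have hvd : (Matrix.vandermonde d).det ≠ 0 := Matrix.det_vandermonde_ne_zero_iff.mpr hd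
    rw [det_mul, det_conjTranspose, hV, det_transpose]
    exact mul_ne_zero (star_ne_zero.mpr hvd) hvd
  have hr : ((Vk.conjTranspose * Vk).det / (Vk1.conjTranspose * Vk1).det)
      = 1 + yy d ⬝ᵥ star (yy d) := by
    rw [hdet, mul_comm, mul_div_assoc, div_self hne, mul_one]
  have hdot : yy d ⬝ᵥ star (yy d) = ((∑ i : Fin k, ‖yy d i‖ ^ 2 : ℝ) : ℂ) := by
    rw [dotProduct]
    push_cast
    exact Finset.sum_congr rfl fun i _ => by
      rw [Pi.star_apply, Complex.star_def, Complex.mul_conj, ← Complex.sq_norm]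
      norm_cast
  have hsum : ∑ j ∈ Finset.range (k + 1), ‖esym d j‖ ^ 2
      = 1 + ∑ i : Fin k, ‖yy d i‖ ^ 2 := by
    have he0 : esym d 0 = 1 := by simp [esym]
    rw [Finset.sum_range_succ' (fun j => ‖esym d j‖ ^ 2) k, he0,
      show ‖(1:ℂ)‖ ^ 2 = 1 by simp, add_comm]
    congr 1
    have : ∀ i : Fin k, ‖yy d i‖ ^ 2 = ‖esym d (k - i)‖ ^ 2 :=
      fun i => by rw [yy_abs]
    rw [Finset.sum_congr rfl fun i _ => this i,
      Fin.sum_univ_eq_sum_range (fun i => ‖esym d (k - i)‖ ^ 2) k,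
      ← Finset.sum_range_reflect (fun i => ‖esym d (i + 1)‖ ^ 2) k]
    refine Finset.sum_congr rfl fun j hj => ?_
    have hj' : j < k := Finset.mem_range.mp hj
    rw [show k - 1 - j + 1 = k - j from by omega]
  have hre : ((Vk.conjTranspose * Vk).det / (Vk1.conjTranspose * Vk1).det).re
      = ∑ j ∈ Finset.range (k + 1), ‖esym d j‖ ^ 2 := by
    rw [hr, hdot, hsum, Complex.add_re, Complex.one_re, Complex.ofReal_re]
  constructor
  · rw [hre]
  · intro dd hdd
    rw [hre]
    rcases Nat.eq_zero_or_pos k with hk | hk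
    · subst hk
      simp [esym]
    · have hdd0 : 0 < dd := lt_of_le_of_lt (norm_nonneg _) (hdd ⟨0, hk⟩)
      have habs : ∀ j, ‖esym d j‖ ≤ dd ^ j * (k.choose j) := by
        intro j
        calc ‖esym d j‖
            ≤ ∑ t ∈ Finset.univ.powersetCard j, ‖∏ i ∈ t, d i‖ :=
              norm_sum_le _ _
          _ ≤ ∑ t ∈ Finset.univ.powersetCard j, dd ^ j := by
              refine Finset.sum_le_sum fun t ht => ?_
              rw [norm_prod]
              have hcard := (Finset.mem_powersetCard.mp ht).2
              calc ∏ i ∈ t, ‖d i‖ ≤ ∏ i ∈ t, dd :=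
                    Finset.prod_le_prod (fun i _ => norm_nonneg _)
                      (fun i _ => (hdd i).le)
                _ = dd ^ j := by rw [Finset.prod_const, hcard]
          _ = dd ^ j * (k.choose j) := by
              rw [Finset.sum_const, nsmul_eq_mul, Finset.card_powersetCard,
                Finset.card_univ, Fintype.card_fin, mul_comm]
      have hS : ∑ j ∈ Finset.range (k + 1), ‖esym d j‖ ^ 2
          ≤ ((1 + dd) ^ k) ^ 2 := by
        calc ∑ j ∈ Finset.range (k + 1), ‖esym d j‖ ^ 2
            ≤ (∑ j ∈ Finset.range (k + 1), ‖esym d j‖) ^ 2 :=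
              Finset.sum_sq_le_sq_sum_of_nonneg fun j _ => norm_nonneg _
          _ ≤ ((1 + dd) ^ k) ^ 2 := by
              refine pow_le_pow_left₀ (Finset.sum_nonneg fun j _ => norm_nonneg _) ?_ 2
              calc ∑ j ∈ Finset.range (k + 1), ‖esym d j‖
                  ≤ ∑ j ∈ Finset.range (k + 1), dd ^ j * (k.choose j) :=
                    Finset.sum_le_sum fun j _ => habs j
                _ = (dd + 1) ^ k := by
                    rw [add_pow]
                    exact Finset.sum_congr rfl fun j _ => by ring
                _ = (1 + dd) ^ k := by rw [add_comm]
      calc Real.sqrt (∑ j ∈ Finset.range (k + 1), ‖esym d j‖ ^ 2)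
          ≤ Real.sqrt (((1 + dd) ^ k) ^ 2) := Real.sqrt_le_sqrt hS
        _ = (1 + dd) ^ k := Real.sqrt_sq (by positivity)
end

section
/- Let k ≥ 1 and let d_1, ..., d_{k+1} be pairwise distinct complex numbers with d_min = min_{j≠p} |d_j − d_p|, and let d̂_1, ..., d̂_k be arbitrary complex numbers. Then max_{1≤j≤k+1} ∏_{q=1}^{k} |d_j − d̂_q| ≥ (d_min/2)^k. Equivalently, ‖η_{k+1,k}(d_1,...,d_{k+1}, d̂_1,...,d̂_k)‖_∞ ≥ (d_min/2)^k. -/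
open Finset

theorem stmt13 (k : ℕ) (hk : 1 ≤ k) (d : Fin (k + 1) → ℂ) (hd : Function.Injective d)
    (dhat : Fin k → ℂ)
    (dmin : ℝ)
    (hdmin : IsLeast {r : ℝ | ∃ p q, p ≠ q ∧ r = ‖d p - d q‖} dmin) :
    ∃ j : Fin (k + 1), (dmin / 2) ^ k ≤ ∏ q, ‖d j - dhat q‖ := by
  classical
  obtain ⟨hmem, hlb⟩ := hdmin
  obtain ⟨p0, q0, hpq0, heq0⟩ := hmem
  have hdmin_nonneg : 0 ≤ dmin := heq0 ▸ norm_nonneg _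
  -- define g : Fin k → Fin (k+1) choosing a close point if any
  set g : Fin k → Fin (k + 1) := fun q =>
    if h : ∃ j : Fin (k + 1), ‖d j - dhat q‖ < dmin / 2 then h.choose else 0 with hg
  -- there is j not in the range of g
  have hcard : (Finset.image g Finset.univ).card < Fintype.card (Fin (k + 1)) := by
    calc (Finset.image g Finset.univ).card ≤ (Finset.univ : Finset (Fin k)).card :=
          Finset.card_image_le
      _ = k := by simp
      _ < k + 1 := Nat.lt_succ_self k
      _ = Fintype.card (Fin (k + 1)) := by simp
  obtain ⟨j, hj⟩ : ∃ j : Fin (k + 1), j ∉ Finset.image g Finset.univ := by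
    by_contra h
    push_neg at h
    have : (Finset.univ : Finset (Fin (k + 1))) ⊆ Finset.image g Finset.univ :=
      fun x _ => h x
    have := Finset.card_le_card this
    simp only [Finset.card_univ] at this
    omega
  refine ⟨j, ?_⟩
  -- for all q, dmin/2 ≤ |d j - dhat q|
  have key : ∀ q : Fin k, dmin / 2 ≤ ‖d j - dhat q‖ := by
    intro q
    by_contra h
    push_neg at h
    have hex : ∃ j' : Fin (k + 1), ‖d j' - dhat q‖ < dmin / 2 := ⟨j, h⟩
    have hgq : ‖d (g q) - dhat q‖ < dmin / 2 := by
      rw [hg]; simp only [dif_pos hex]; exact hex.choose_spec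
    have hne : g q ≠ j := by
      intro he
      exact hj (Finset.mem_image.mpr ⟨q, Finset.mem_univ q, he⟩)
    have : dmin ≤ ‖d (g q) - d j‖ := hlb ⟨g q, j, hne, rfl⟩
    have htri : ‖d (g q) - d j‖ ≤
        ‖d (g q) - dhat q‖ + ‖d j - dhat q‖ := by
      have := norm_sub_le_norm_sub_add_norm_sub (d (g q)) (dhat q) (d j)
      calc ‖d (g q) - d j‖
          ≤ ‖d (g q) - dhat q‖ + ‖dhat q - d j‖ := this
        _ = ‖d (g q) - dhat q‖ + ‖d j - dhat q‖ := by
            rw [norm_sub_rev (dhat q) (d j)]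
    linarith
  calc (dmin / 2) ^ k = ∏ _q : Fin k, dmin / 2 := by
        rw [Finset.prod_const, Finset.card_univ, Fintype.card_fin]
    _ ≤ ∏ q, ‖d j - dhat q‖ :=
        Finset.prod_le_prod (fun _ _ => by linarith) (fun q _ => key q)
end

section
/- Let k ≥ 1, d > 0, ε > 0, and let d_1, ..., d_k, d̂_1, ..., d̂_k ∈ ℂ with |d_j| ≤ d and |d̂_j| ≤ d for all j. Assume ‖η_{k,k}(d_1,...,d_k, d̂_1,...,d̂_k)‖_∞ < ε, i.e. ∏_{q=1}^{k} |d_j − d̂_q| < ε for every j, and assume d_min = min_{p≠q} |d_p − d_q| ≥ 2 ε^{1/k}. Then there exists a permutation π of {1,...,k} such that for every j, |d̂_{π(j)} − d_j| < d_min/2 and |d̂_{π(j)} − d_j| ≤ (2/d_min)^{k−1}·ε. -/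
open Finset

theorem stmt14 (k : ℕ) (hk : 1 ≤ k) (d ε : ℝ) (hd : 0 < d) (hε : 0 < ε)
    (dv dhat : Fin k → ℂ)
    (hdv : ∀ j, ‖dv j‖ ≤ d) (hdhat : ∀ j, ‖dhat j‖ ≤ d)
    (hη : ∀ j, ∏ q, ‖dv j - dhat q‖ < ε)
    (dmin : ℝ) (hdmin : ∀ p q, p ≠ q → dmin ≤ ‖dv p - dv q‖)
    (hsep : 2 * ε ^ ((1 : ℝ) / k) ≤ dmin) :
    ∃ perm : Equiv.Perm (Fin k), ∀ j,
      ‖dhat (perm j) - dv j‖ < dmin / 2 ∧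
      ‖dhat (perm j) - dv j‖ ≤ (2 / dmin) ^ (k - 1) * ε := by
  set ρ := ε ^ ((1 : ℝ) / k) with hρdef
  have hρpos : 0 < ρ := Real.rpow_pos_of_pos hε _
  have hρle : ρ ≤ dmin / 2 := by linarith
  have hdminpos : 0 < dmin := by linarith
  have hρk : ρ ^ k = ε := by
    rw [hρdef, ← Real.rpow_natCast (ε ^ ((1:ℝ)/k)) k, ← Real.rpow_mul hε.le]
    have : (1:ℝ)/k * k = 1 := by
      field_simp
    rw [this, Real.rpow_one]
  -- existence of a close dhat for each j
  have h1 : ∀ j, ∃ q, ‖dv j - dhat q‖ < ρ := by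
    intro j
    by_contra h
    push_neg at h
    have : ε ≤ ∏ q, ‖dv j - dhat q‖ := by
      calc ε = ρ ^ k := hρk.symm
        _ = ∏ _q : Fin k, ρ := by simp
        _ ≤ ∏ q, ‖dv j - dhat q‖ :=
          Finset.prod_le_prod (fun _ _ => hρpos.le) (fun q _ => h q)
    exact absurd (hη j) (not_lt.mpr this)
  choose f hf using h1
  have hinj : Function.Injective f := by
    intro j1 j2 hEq
    by_contra hne
    have h12 := hdmin j1 j2 hne
    have t : ‖dv j1 - dv j2‖ ≤
        ‖dv j1 - dhat (f j1)‖ + ‖dv j2 - dhat (f j2)‖ := by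
      rw [hEq]
      calc ‖dv j1 - dv j2‖
          = ‖(dv j1 - dhat (f j2)) + (dhat (f j2) - dv j2)‖ := by rw [sub_add_sub_cancel]
        _ ≤ ‖dv j1 - dhat (f j2)‖ + ‖dhat (f j2) - dv j2‖ :=
            norm_add_le _ _
        _ = ‖dv j1 - dhat (f j2)‖ + ‖dv j2 - dhat (f j2)‖ := by
            rw [norm_sub_rev (dhat (f j2)) (dv j2)]
    have := hf j1
    have := hf j2
    linarith
  have hbij : Function.Bijective f := Finite.injective_iff_bijective.mp hinj
  refine ⟨Equiv.ofBijective f hbij, fun j => ?_⟩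
  have hperm : (Equiv.ofBijective f hbij) j = f j := rfl
  rw [hperm, norm_sub_rev]
  constructor
  · exact lt_of_lt_of_le (hf j) hρle
  -- second bound
  · have hfar : ∀ q ∈ Finset.univ.erase (f j), dmin / 2 ≤ ‖dv j - dhat q‖ := by
      intro q hq
      obtain ⟨j', hj'⟩ := hbij.2 q
      have hne : j' ≠ j := by
        intro h
        subst h
        exact (Finset.mem_erase.mp hq).1 hj'.symm
      have h12 := hdmin j j' (Ne.symm hne)
      have hc := hf j'
      rw [hj'] at hc
      have t : ‖dv j - dv j'‖ ≤
          ‖dv j - dhat q‖ + ‖dv j' - dhat q‖ := by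
        calc ‖dv j - dv j'‖
            = ‖(dv j - dhat q) + (dhat q - dv j')‖ := by rw [sub_add_sub_cancel]
          _ ≤ ‖dv j - dhat q‖ + ‖dhat q - dv j'‖ :=
              norm_add_le _ _
          _ = _ := by rw [norm_sub_rev (dhat q) (dv j')]
      linarith
    have hcard : (Finset.univ.erase (f j)).card = k - 1 := by
      rw [Finset.card_erase_of_mem (Finset.mem_univ _), Finset.card_univ, Fintype.card_fin]
    have hprod : (dmin / 2) ^ (k - 1) ≤ ∏ q ∈ Finset.univ.erase (f j),
        ‖dv j - dhat q‖ := by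
      calc (dmin / 2) ^ (k - 1) = ∏ _q ∈ Finset.univ.erase (f j), dmin / 2 := by
            rw [Finset.prod_const, hcard]
        _ ≤ _ := Finset.prod_le_prod (fun _ _ => by linarith) hfar
    have hsplit : ‖dv j - dhat (f j)‖ *
        ∏ q ∈ Finset.univ.erase (f j), ‖dv j - dhat q‖
        = ∏ q, ‖dv j - dhat q‖ :=
      Finset.mul_prod_erase Finset.univ (fun q => ‖dv j - dhat q‖) (Finset.mem_univ (f j))
    have hkey : ‖dv j - dhat (f j)‖ * (dmin / 2) ^ (k - 1) ≤ ε := by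
      calc ‖dv j - dhat (f j)‖ * (dmin / 2) ^ (k - 1)
          ≤ ‖dv j - dhat (f j)‖ *
            ∏ q ∈ Finset.univ.erase (f j), ‖dv j - dhat q‖ :=
            mul_le_mul_of_nonneg_left hprod (norm_nonneg _)
        _ = ∏ q, ‖dv j - dhat q‖ := hsplit
        _ ≤ ε := (hη j).le
    have hpow : (0:ℝ) < (dmin / 2) ^ (k - 1) := pow_pos (by linarith) _
    rw [show (2 / dmin) ^ (k - 1) * ε = ε / (dmin / 2) ^ (k - 1) by
      rw [div_pow, div_pow]
      field_simp]
    rw [le_div_iff₀ hpow]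
    exact hkey
end

section
/- Let k ≥ 1, d̂ > 0, and let d̂_1, ..., d̂_k be k pairwise distinct complex numbers with |d̂_j| ≤ d̂ for all j. Let A be the (k+1)×k matrix whose j-th column is φ_k(d̂_j) = (1, d̂_j, ..., d̂_j^k)ᵀ. Then for any x ∈ ℂ, min_{a ∈ ℂ^k} ‖Aa − φ_k(x)‖₂ ≥ (1/(1+d̂)^k)·|∏_{j=1}^{k} (x − d̂_j)|. -/
open Finset Matrix Polynomial

set_option maxHeartbeats 1000000

/-- The Euclidean (`ℓ²`) norm of a complex vector. -/
noncomputable def enorm' {m : ℕ} (v : Fin m → ℂ) : ℝ :=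
  Real.sqrt (∑ i, ‖v i‖ ^ 2)

/-- The Vandermonde vector `φ_s(z) = (1, z, z², ..., z^s)ᵀ`. -/
noncomputable def phiVec (s : ℕ) (z : ℂ) : Fin (s + 1) → ℂ := fun i => z ^ (i : ℕ)

lemma abs_coeff_step (c : ℂ) (q : Polynomial ℂ) (n : ℕ) (hq : q.natDegree ≤ n) (B : ℝ)
    (ih : ∑ i ∈ Finset.range (n + 1), ‖q.coeff i‖ ≤ B) :
    ∑ i ∈ Finset.range (n + 2), ‖((X - C c) * q).coeff i‖ ≤
      (1 + ‖c‖) * B := by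
  have hB : 0 ≤ B := le_trans (Finset.sum_nonneg fun i _ => norm_nonneg _) ih
  have hsplit : ∀ i, ((X - C c) * q).coeff i = (X * q).coeff i - c * q.coeff i := by
    intro i
    rw [sub_mul, Polynomial.coeff_sub]
    simp [Polynomial.coeff_C_mul]
  have key : ∀ i, ‖((X - C c) * q).coeff i‖ ≤
      ‖(X * q).coeff i‖ + ‖c‖ * ‖q.coeff i‖ := by
    intro i
    have h2 : ‖c * q.coeff i‖ = ‖c‖ * ‖q.coeff i‖ :=
      norm_mul _ _
    rw [hsplit i, ← h2]
    exact norm_sub_le _ _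
  have h1 : ∑ i ∈ Finset.range (n + 2), ‖((X - C c) * q).coeff i‖ ≤
      ∑ i ∈ Finset.range (n + 2),
        (‖(X * q).coeff i‖ + ‖c‖ * ‖q.coeff i‖) :=
    Finset.sum_le_sum fun i _ => key i
  have h2 : ∑ i ∈ Finset.range (n + 2),
        (‖(X * q).coeff i‖ + ‖c‖ * ‖q.coeff i‖) =
      (∑ i ∈ Finset.range (n + 2), ‖(X * q).coeff i‖) +
        ‖c‖ * ∑ i ∈ Finset.range (n + 2), ‖q.coeff i‖ := by
    rw [Finset.sum_add_distrib, Finset.mul_sum]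
  have h3 : ∑ i ∈ Finset.range (n + 2), ‖(X * q).coeff i‖ =
      ∑ i ∈ Finset.range (n + 1), ‖q.coeff i‖ := by
    rw [Finset.sum_range_succ' _ (n + 1)]
    simp [Polynomial.coeff_X_mul]
  have h4 : ∑ i ∈ Finset.range (n + 2), ‖q.coeff i‖ =
      ∑ i ∈ Finset.range (n + 1), ‖q.coeff i‖ := by
    rw [Finset.sum_range_succ]
    have : q.coeff (n + 1) = 0 := Polynomial.coeff_eq_zero_of_natDegree_lt (by omega)
    simp [this]
  rw [h2, h3, h4] at h1
  nlinarith [norm_nonneg c, ih, h1]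

lemma abs_coeff_sum (l : List ℂ) :
    ∑ i ∈ Finset.range (l.length + 1),
        ‖(l.map (fun c => X - C c)).prod.coeff i‖ ≤
      (l.map (fun c => 1 + ‖c‖)).prod := by
  induction l with
  | nil => simp [Polynomial.coeff_one]
  | cons c l ih =>
    have hq : ((l.map (fun c => X - C c)).prod).natDegree ≤ l.length := by
      refine (Polynomial.natDegree_list_prod_le _).trans ?_
      simp only [List.map_map]
      calc ((l.map (Polynomial.natDegree ∘ fun c => X - C c)).sum)
          ≤ (l.map (fun _ => 1)).sum := by
            apply List.sum_le_sum
            intro a _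
            simp [Polynomial.natDegree_X_sub_C]
        _ = l.length := by simp
    have := abs_coeff_step c _ l.length hq _ ih
    simpa using this

theorem stmt15 (k : ℕ) (hk : 1 ≤ k) (dhatBound : ℝ) (hdhatBound : 0 < dhatBound)
    (dhat : Fin k → ℂ) (hinj : Function.Injective dhat)
    (hdhat : ∀ j, ‖dhat j‖ ≤ dhatBound)
    (A : Matrix (Fin (k + 1)) (Fin k) ℂ) (hA : ∀ i j, A i j = phiVec k (dhat j) i)
    (x : ℂ) :
    ∀ a : Fin k → ℂ,
      1 / (1 + dhatBound) ^ k * ‖∏ j, (x - dhat j)‖ ≤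
        enorm' (A.mulVec a - phiVec k x) := by
  intro a
  set q : Polynomial ℂ := ∏ j, (X - C (dhat j)) with hqdef
  set r : Fin (k + 1) → ℂ := A.mulVec a - phiVec k x with hrdef
  have hdeg : q.natDegree = k := by
    rw [hqdef]
    rw [Polynomial.natDegree_prod _ _ (fun j _ => Polynomial.X_sub_C_ne_zero (dhat j))]
    simp [Polynomial.natDegree_X_sub_C]
  -- evaluation as a finite sum over Fin (k+1)
  have heval : ∀ z : ℂ, ∑ i : Fin (k + 1), q.coeff i * z ^ (i : ℕ) = q.eval z := by
    intro z
    rw [Polynomial.eval_eq_sum_range' (n := k + 1) (by omega) z]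
    rw [Fin.sum_univ_eq_sum_range (fun i => q.coeff i * z ^ i)]
  -- roots
  have hroot : ∀ j, q.eval (dhat j) = 0 := by
    intro j
    rw [hqdef, Polynomial.eval_prod]
    exact Finset.prod_eq_zero (Finset.mem_univ j) (by simp)
  -- the weighted sum equals -q.eval x
  have hsum : ∑ i : Fin (k + 1), q.coeff i * r i = -q.eval x := by
    have step : ∑ i : Fin (k + 1), q.coeff i * (A.mulVec a) i =
        ∑ j : Fin k, a j * ∑ i : Fin (k + 1), q.coeff i * (dhat j) ^ (i : ℕ) := by
      calc ∑ i : Fin (k + 1), q.coeff i * (A.mulVec a) i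
          = ∑ i : Fin (k + 1), ∑ j : Fin k, q.coeff i * (A i j * a j) := by
            simp [Matrix.mulVec, dotProduct, Finset.mul_sum]
        _ = ∑ j : Fin k, ∑ i : Fin (k + 1), q.coeff i * (A i j * a j) := Finset.sum_comm
        _ = ∑ j : Fin k, a j * ∑ i : Fin (k + 1), q.coeff i * (dhat j) ^ (i : ℕ) := by
            refine Finset.sum_congr rfl fun j _ => ?_
            rw [Finset.mul_sum]
            refine Finset.sum_congr rfl fun i _ => ?_
            rw [hA i j]
            simp only [phiVec]
            ring
    have : ∑ i : Fin (k + 1), q.coeff i * r i =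
        (∑ j : Fin k, a j * ∑ i : Fin (k + 1), q.coeff i * (dhat j) ^ (i : ℕ)) -
          ∑ i : Fin (k + 1), q.coeff i * x ^ (i : ℕ) := by
      simp only [hrdef, Pi.sub_apply, mul_sub, Finset.sum_sub_distrib, step, phiVec]
    rw [this, heval x]
    simp [heval, hroot]
  -- ℓ¹ bound on the coefficients
  have hl1 : ∑ i : Fin (k + 1), ‖q.coeff i‖ ≤ (1 + dhatBound) ^ k := by
    have hlist : q = ((List.ofFn dhat).map (fun c => X - C c)).prod := by
      rw [hqdef, ← List.prod_ofFn]
      congr 1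
      rw [List.map_ofFn]
      rfl
    calc ∑ i : Fin (k + 1), ‖q.coeff i‖
        = ∑ i ∈ Finset.range (k + 1), ‖q.coeff i‖ :=
          Fin.sum_univ_eq_sum_range (fun i => ‖q.coeff i‖) (k + 1)
      _ ≤ ((List.ofFn dhat).map (fun c => 1 + ‖c‖)).prod := by
          have := abs_coeff_sum (List.ofFn dhat)
          rw [List.length_ofFn] at this
          rw [hlist]
          exact this
      _ = ∏ j : Fin k, (1 + ‖dhat j‖) := by
          rw [List.map_ofFn, List.prod_ofFn]; rfl
      _ ≤ ∏ j : Fin k, (1 + dhatBound) := by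
          apply Finset.prod_le_prod
          · intro j _; positivity
          · intro j _; linarith [hdhat j]
      _ = (1 + dhatBound) ^ k := by simp
  -- Cauchy-Schwarz
  have hCS : ‖q.eval x‖ ≤ (1 + dhatBound) ^ k * enorm' r := by
    calc ‖q.eval x‖
        = ‖∑ i : Fin (k + 1), q.coeff i * r i‖ := by rw [hsum]; simp
      _ ≤ ∑ i : Fin (k + 1), ‖q.coeff i * r i‖ :=
          norm_sum_le _ _
      _ = ∑ i : Fin (k + 1), ‖q.coeff i‖ * ‖r i‖ := by
          simp [_root_.map_mul]
      _ ≤ Real.sqrt (∑ i : Fin (k + 1), ‖q.coeff i‖ ^ 2) *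
            Real.sqrt (∑ i : Fin (k + 1), ‖r i‖ ^ 2) :=
          Real.sum_mul_le_sqrt_mul_sqrt _ _ _
      _ ≤ (∑ i : Fin (k + 1), ‖q.coeff i‖) * enorm' r := by
          apply mul_le_mul_of_nonneg_right _ (Real.sqrt_nonneg _)
          rw [show (∑ i : Fin (k+1), ‖q.coeff i‖) =
              Real.sqrt ((∑ i : Fin (k+1), ‖q.coeff i‖) ^ 2) by
            rw [Real.sqrt_sq (Finset.sum_nonneg fun i _ => norm_nonneg _)]]
          apply Real.sqrt_le_sqrt
          exact Finset.sum_sq_le_sq_sum_of_nonneg fun i _ => norm_nonneg _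
      _ ≤ (1 + dhatBound) ^ k * enorm' r := by
          apply mul_le_mul_of_nonneg_right hl1 (Real.sqrt_nonneg _)
  have hB : (0:ℝ) < (1 + dhatBound) ^ k := by positivity
  have hqx : ‖∏ j, (x - dhat j)‖ = ‖q.eval x‖ := by
    rw [hqdef, Polynomial.eval_prod]
    simp
  rw [hqx, div_mul_eq_mul_div, one_mul, div_le_iff₀ hB]
  calc ‖q.eval x‖ ≤ (1 + dhatBound) ^ k * enorm' r := hCS
    _ = enorm' r * (1 + dhatBound) ^ k := mul_comm _ _
end

section
/- Let k ≥ 1, d > 0, d̂ > 0, m_min > 0. Let d_1, ..., d_{k+1} ∈ ℂ be pairwise distinct with |d_j| ≤ d for all j, set d_min = min_{j≠p} |d_j − d_p|, and let a_1, ..., a_{k+1} ∈ ℂ with |a_j| ≥ m_min. Let A be the (2k+1)×(k+1) matrix whose j-th column is φ_{2k}(d_j), and a = (a_1, ..., a_{k+1})ᵀ. Then for every integer q ≤ k, every choice of d̂_1, ..., d̂_q ∈ ℂ with |d̂_p| ≤ d̂ and every â_1, ..., â_q ∈ ℂ, one has ‖Σ_{p=1}^{q} â_p φ_{2k}(d̂_p)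 − Aa‖₂ ≥ m_min·d_min^{2k} / (2^k (1+d)^k (1+d̂)^k). -/
open Finset Matrix

/-- The Euclidean (`ℓ²`) norm of a complex vector. -/
noncomputable def enorm {m : ℕ} (v : Fin m → ℂ) : ℝ :=
  Real.sqrt (∑ i, ‖v i‖ ^ 2)

set_option maxHeartbeats 1000000 in
open Polynomial in
/-- ℓ¹ bound on coefficients of a product of linear factors. -/
lemma l1_coeff_prod {ι : Type*} [DecidableEq ι] (z : ι → ℂ) (s : Finset ι) :
    ∀ N, ∑ i ∈ Finset.range N, ‖(∏ l ∈ s, (X - C (z l))).coeff i‖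
      ≤ ∏ l ∈ s, (1 + ‖z l‖) := by
  induction s using Finset.induction with
  | empty =>
    intro N
    cases N with
    | zero => simp
    | succ M =>
      have : ∀ i ∈ Finset.range (M + 1),
          ‖(∏ l ∈ (∅ : Finset ι), (X - C (z l))).coeff i‖
            = if i = 0 then 1 else 0 := by
        intro i _
        simp [Polynomial.coeff_one]
        split <;> simp_all
      rw [Finset.sum_congr rfl this]
      simp
  | @insert a s ha ih =>
    intro N
    have hprodnn : (0:ℝ) ≤ ∏ l ∈ s, (1 + ‖z l‖) := by
      apply Finset.prod_nonneg; intro l _; positivity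
    have key : ∏ l ∈ insert a s, (X - C (z l))
        = X * (∏ l ∈ s, (X - C (z l))) - C (z a) * (∏ l ∈ s, (X - C (z l))) := by
      rw [Finset.prod_insert ha, sub_mul]
    set P := ∏ l ∈ s, (X - C (z l)) with hP
    have hsplit : ∀ i, ‖(∏ l ∈ insert a s, (X - C (z l))).coeff i‖
        ≤ ‖(X * P).coeff i‖ + ‖z a‖ * ‖P.coeff i‖ := by
      intro i
      rw [key, Polynomial.coeff_sub]
      have h1 : ‖(X * P).coeff i - (C (z a) * P).coeff i‖
          ≤ ‖(X * P).coeff i‖ + ‖(C (z a) * P).coeff i‖ :=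
        norm_sub_le _ _
      have h2 : ‖(C (z a) * P).coeff i‖
          = ‖z a‖ * ‖P.coeff i‖ := by
        rw [Polynomial.coeff_C_mul, norm_mul]
      linarith
    have step1 : ∑ i ∈ Finset.range N, ‖(∏ l ∈ insert a s, (X - C (z l))).coeff i‖
        ≤ ∑ i ∈ Finset.range N,
            (‖(X * P).coeff i‖ + ‖z a‖ * ‖P.coeff i‖) :=
      Finset.sum_le_sum fun i _ => hsplit i
    have step2 : ∑ i ∈ Finset.range N,
          (‖(X * P).coeff i‖ + ‖z a‖ * ‖P.coeff i‖)
        = (∑ i ∈ Finset.range N, ‖(X * P).coeff i‖)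
            + ‖z a‖ * ∑ i ∈ Finset.range N, ‖P.coeff i‖ := by
      rw [Finset.sum_add_distrib, Finset.mul_sum]
    have step3 : ∑ i ∈ Finset.range N, ‖(X * P).coeff i‖
        ≤ ∏ l ∈ s, (1 + ‖z l‖) := by
      cases N with
      | zero => simpa using hprodnn
      | succ M =>
        rw [Finset.sum_range_succ']
        simp only [Polynomial.coeff_X_mul]
        simpa using ih M
    have hza : (0:ℝ) ≤ ‖z a‖ := norm_nonneg _
    have step5 : ‖z a‖ * ∑ i ∈ Finset.range N, ‖P.coeff i‖
        ≤ ‖z a‖ * ∏ l ∈ s, (1 + ‖z l‖) :=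
      mul_le_mul_of_nonneg_left (ih N) hza
    rw [show ∏ l ∈ insert a s, (1 + ‖z l‖)
        = (1 + ‖z a‖) * ∏ l ∈ s, (1 + ‖z l‖) from
      Finset.prod_insert ha]
    have expand : (1 + ‖z a‖) * ∏ l ∈ s, (1 + ‖z l‖)
        = (∏ l ∈ s, (1 + ‖z l‖))
          + ‖z a‖ * ∏ l ∈ s, (1 + ‖z l‖) := by ring
    linarith

set_option maxHeartbeats 1000000 in
theorem stmt16 (k : ℕ) (hk : 1 ≤ k) (d dhatBound mmin : ℝ)
    (hd : 0 < d) (hdhatBound : 0 < dhatBound) (hmmin : 0 < mmin)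
    (dv : Fin (k + 1) → ℂ) (hinj : Function.Injective dv)
    (hdv : ∀ j, ‖dv j‖ ≤ d)
    (dmin : ℝ)
    (hdmin : IsLeast {r : ℝ | ∃ p q, p ≠ q ∧ r = ‖dv p - dv q‖} dmin)
    (a : Fin (k + 1) → ℂ) (ha : ∀ j, mmin ≤ ‖a j‖) :
    ∀ q : ℕ, q ≤ k → ∀ (dhat : Fin q → ℂ), (∀ p, ‖dhat p‖ ≤ dhatBound) →
      ∀ ahat : Fin q → ℂ,
        mmin * dmin ^ (2 * k) / (2 ^ k * (1 + d) ^ k * (1 + dhatBound) ^ k) ≤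
          _root_.enorm (fun i : Fin (2 * k + 1) =>
            (∑ p, ahat p * phiVec (2 * k) (dhat p) i) -
              ∑ j, a j * phiVec (2 * k) (dv j) i) := by
  classical
  intro q hq dhat hdhat ahat
  open Polynomial in
  -- positivity of dmin
  have hdmin_pos : 0 < dmin := by
    obtain ⟨p, p', hpq, hval⟩ := hdmin.1
    rw [hval]
    exact norm_pos_iff.mpr (sub_ne_zero.mpr fun h => hpq (hinj h))
  have hdmin_le : ∀ p p' : Fin (k+1), p ≠ p' → dmin ≤ ‖dv p - dv p'‖ := by
    intro p p' h
    exact hdmin.2 ⟨p, p', h, rfl⟩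
  -- the extended perturbation nodes
  set e : Fin k → ℂ := fun p => if h : (p : ℕ) < q then dhat ⟨p, h⟩ else 0 with he
  have hebound : ∀ p, ‖e p‖ ≤ dhatBound := by
    intro p
    rw [he]
    dsimp only
    split
    · exact hdhat _
    · simpa using hdhatBound.le
  -- pigeonhole: a node far away from all e p
  have hj0 : ∃ j0 : Fin (k+1), ∀ p : Fin k, dmin / 2 ≤ ‖dv j0 - e p‖ := by
    by_contra hcon
    push_neg at hcon
    choose f hf using hcon
    obtain ⟨j, j', hne, hfe⟩ := Fintype.exists_ne_map_eq_of_card_lt f (by simp)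
    have h1 := hf j
    have h2 := hf j'
    rw [hfe] at h1
    have := hdmin_le j j' hne
    have htri : ‖dv j - dv j'‖
        ≤ ‖dv j - e (f j')‖ + ‖dv j' - e (f j')‖ := by
      calc ‖dv j - dv j'‖
          = ‖(dv j - e (f j')) - (dv j' - e (f j'))‖ := by ring_nf
        _ ≤ _ := norm_sub_le _ _
    linarith
  obtain ⟨j0, hj0⟩ := hj0
  -- the polynomial
  set S : Finset (Fin (k+1) ⊕ Fin k) := (Finset.univ.erase j0).disjSum Finset.univ with hS
  set w : Fin (k+1) ⊕ Fin k → ℂ := Sum.elim dv e with hw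
  set P : ℂ[X] := ∏ l ∈ S, (X - C (w l)) with hPdef
  have hcardS : S.card = 2 * k := by
    rw [hS, Finset.card_disjSum, Finset.card_erase_of_mem (Finset.mem_univ _)]
    simp; omega
  have hdeg : P.natDegree = 2 * k := by
    rw [hPdef, Polynomial.natDegree_prod_of_monic _ _ (fun l _ => monic_X_sub_C _)]
    simp [hcardS]
  have heval : ∀ x : ℂ, P.eval x = ∑ i : Fin (2*k+1), P.coeff i * x ^ (i : ℕ) := by
    intro x
    rw [Fin.sum_univ_eq_sum_range (fun i => P.coeff i * x ^ i)]
    exact Polynomial.eval_eq_sum_range' (by omega) x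
  have hevalprod : ∀ x : ℂ, P.eval x = ∏ l ∈ S, (x - w l) := by
    intro x; rw [hPdef, Polynomial.eval_prod]; simp
  -- roots
  have hroot_dhat : ∀ p : Fin q, P.eval (dhat p) = 0 := by
    intro p
    rw [hevalprod]
    apply Finset.prod_eq_zero (i := Sum.inr ⟨(p : ℕ), lt_of_lt_of_le p.2 hq⟩)
    · rw [hS]; simp [Finset.inr_mem_disjSum]
    · rw [hw]
      simp only [Sum.elim_inr, he]
      rw [dif_pos p.2]
      simp [sub_eq_zero]
  have hroot_dv : ∀ j : Fin (k+1), j ≠ j0 → P.eval (dv j) = 0 := by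
    intro j hne
    rw [hevalprod]
    apply Finset.prod_eq_zero (i := Sum.inl j)
    · rw [hS]; simp [Finset.inl_mem_disjSum, hne]
    · simp [hw]
  -- the residual
  set r : Fin (2*k+1) → ℂ := fun i =>
      (∑ p, ahat p * phiVec (2 * k) (dhat p) i) - ∑ j, a j * phiVec (2 * k) (dv j) i with hr
  -- pairing identity
  have hpair : ∑ i : Fin (2*k+1), P.coeff i * r i = - (a j0 * P.eval (dv j0)) := by
    have swap : ∀ {n : ℕ} (g : Fin n → ℂ) (zz : Fin n → ℂ),
        ∑ i : Fin (2*k+1), P.coeff i * ∑ p, g p * zz p ^ (i : ℕ)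
          = ∑ p, g p * P.eval (zz p) := by
      intro n g zz
      simp only [Finset.mul_sum]
      rw [Finset.sum_comm]
      apply Finset.sum_congr rfl
      intro p _
      rw [heval, Finset.mul_sum]
      apply Finset.sum_congr rfl
      intro i _
      ring
    have expand : ∑ i : Fin (2*k+1), P.coeff i * r i
        = (∑ p, ahat p * P.eval (dhat p)) - ∑ j, a j * P.eval (dv j) := by
      rw [hr]
      simp only [phiVec, mul_sub, Finset.sum_sub_distrib]
      rw [swap ahat dhat, swap a dv]
    rw [expand]
    have h1 : ∑ p, ahat p * P.eval (dhat p) = 0 := by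
      apply Finset.sum_eq_zero; intro p _; rw [hroot_dhat p, mul_zero]
    have h2 : ∑ j, a j * P.eval (dv j) = a j0 * P.eval (dv j0) := by
      apply Finset.sum_eq_single
      · intro j _ hne; rw [hroot_dv j hne, mul_zero]
      · intro h; exact absurd (Finset.mem_univ j0) h
    rw [h1, h2]; ring
  -- lower bound on |P(dv j0)|
  have hlow : dmin ^ k * (dmin / 2) ^ k ≤ ‖P.eval (dv j0)‖ := by
    rw [hevalprod, norm_prod]
    rw [hS, Finset.prod_disjSum]
    have b1 : dmin ^ k ≤ ∏ j ∈ Finset.univ.erase j0, ‖dv j0 - w (Sum.inl j)‖ := by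
      have : dmin ^ k = ∏ _j ∈ Finset.univ.erase j0, dmin := by
        rw [Finset.prod_const, Finset.card_erase_of_mem (Finset.mem_univ _)]
        simp
      rw [this]
      apply Finset.prod_le_prod (fun _ _ => hdmin_pos.le)
      intro j hj
      rw [hw]
      exact hdmin_le j0 j (Ne.symm (Finset.ne_of_mem_erase hj))
    have b2 : (dmin / 2) ^ k ≤ ∏ p : Fin k, ‖dv j0 - w (Sum.inr p)‖ := by
      have : (dmin / 2) ^ k = ∏ _p : Fin k, (dmin / 2) := by
        rw [Finset.prod_const, Finset.card_univ, Fintype.card_fin]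
      rw [this]
      apply Finset.prod_le_prod (fun _ _ => by positivity)
      intro p _
      rw [hw]
      exact hj0 p
    calc dmin ^ k * (dmin / 2) ^ k
        ≤ (∏ j ∈ Finset.univ.erase j0, ‖dv j0 - w (Sum.inl j)‖)
          * ∏ p : Fin k, ‖dv j0 - w (Sum.inr p)‖ := by
          apply mul_le_mul b1 b2 (by positivity)
          exact Finset.prod_nonneg fun _ _ => norm_nonneg _
      _ = _ := rfl
  -- upper bound on ℓ¹ norm of coefficients
  have hl1 : ∑ i : Fin (2*k+1), ‖P.coeff i‖
      ≤ (1 + d) ^ k * (1 + dhatBound) ^ k := by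
    rw [Fin.sum_univ_eq_sum_range (fun i => ‖P.coeff i‖) (2*k+1)]
    calc ∑ i ∈ Finset.range (2*k+1), ‖P.coeff i‖
        ≤ ∏ l ∈ S, (1 + ‖w l‖) := l1_coeff_prod w S (2*k+1)
      _ = (∏ j ∈ Finset.univ.erase j0, (1 + ‖dv j‖))
            * ∏ p : Fin k, (1 + ‖e p‖) := by
          rw [hS, Finset.prod_disjSum]; rfl
      _ ≤ (1 + d) ^ k * (1 + dhatBound) ^ k := by
          apply mul_le_mul
          · calc ∏ j ∈ Finset.univ.erase j0, (1 + ‖dv j‖)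
                ≤ ∏ _j ∈ Finset.univ.erase j0, (1 + d) := by
                  apply Finset.prod_le_prod (fun _ _ => by positivity)
                  intro j _; linarith [hdv j]
              _ = (1 + d) ^ k := by
                  rw [Finset.prod_const, Finset.card_erase_of_mem (Finset.mem_univ _)]
                  simp
          · calc ∏ p : Fin k, (1 + ‖e p‖)
                ≤ ∏ _p : Fin k, (1 + dhatBound) := by
                  apply Finset.prod_le_prod (fun _ _ => by positivity)
                  intro p _; linarith [hebound p]
              _ = (1 + dhatBound) ^ k := by simp
          · exact Finset.prod_nonneg fun _ _ => by positivity
          · positivity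
  -- each |r i| ≤ _root_.enorm r
  have hri : ∀ i, ‖r i‖ ≤ _root_.enorm r := by
    intro i
    rw [_root_.enorm]
    have : ‖r i‖ = Real.sqrt (‖r i‖ ^ 2) := by
      rw [Real.sqrt_sq (norm_nonneg _)]
    rw [this]
    apply Real.sqrt_le_sqrt
    exact Finset.single_le_sum (f := fun j => ‖r j‖ ^ 2)
      (fun j _ => by positivity) (Finset.mem_univ i)
  have henorm_nonneg : 0 ≤ _root_.enorm r := Real.sqrt_nonneg _
  -- main chain
  have hchain : mmin * (dmin ^ k * (dmin / 2) ^ k)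
      ≤ (1 + d) ^ k * (1 + dhatBound) ^ k * _root_.enorm r := by
    calc mmin * (dmin ^ k * (dmin / 2) ^ k)
        ≤ ‖a j0‖ * ‖P.eval (dv j0)‖ := by
          apply mul_le_mul (ha j0) hlow (by positivity) (norm_nonneg _)
      _ = ‖∑ i : Fin (2*k+1), P.coeff i * r i‖ := by
          rw [hpair, norm_neg, norm_mul]
      _ ≤ ∑ i : Fin (2*k+1), ‖P.coeff i * r i‖ :=
          norm_sum_le _ _
      _ = ∑ i : Fin (2*k+1), ‖P.coeff i‖ * ‖r i‖ := by
          simp only [norm_mul]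
      _ ≤ ∑ i : Fin (2*k+1), ‖P.coeff i‖ * _root_.enorm r := by
          apply Finset.sum_le_sum
          intro i _
          exact mul_le_mul_of_nonneg_left (hri i) (norm_nonneg _)
      _ = (∑ i : Fin (2*k+1), ‖P.coeff i‖) * _root_.enorm r := by
          rw [Finset.sum_mul]
      _ ≤ (1 + d) ^ k * (1 + dhatBound) ^ k * _root_.enorm r := by
          exact mul_le_mul_of_nonneg_right hl1 henorm_nonneg
  -- final arithmetic
  have hD : (0:ℝ) < 2 ^ k * (1 + d) ^ k * (1 + dhatBound) ^ k := by positivity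
  rw [div_le_iff₀ hD]
  have key : dmin ^ k * (dmin / 2) ^ k = dmin ^ (2*k) / 2 ^ k := by
    rw [div_pow, pow_mul, sq, mul_pow]
    field_simp
  rw [key] at hchain
  have h2k : (0:ℝ) < 2 ^ k := by positivity
  calc mmin * dmin ^ (2*k)
      = (mmin * (dmin ^ (2*k) / 2 ^ k)) * 2 ^ k := by field_simp
    _ ≤ ((1 + d) ^ k * (1 + dhatBound) ^ k * _root_.enorm r) * 2 ^ k := by
        exact mul_le_mul_of_nonneg_right hchain h2k.le
    _ = _root_.enorm r * (2 ^ k * (1 + d) ^ k * (1 + dhatBound) ^ k) := by ring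
end

section
/- Let k ≥ 1, d > 0, m_min > 0, σ > 0. Let d_1, ..., d_k ∈ ℂ be pairwise distinct with |d_j| ≤ d, set d_min = min_{p≠q} |d_p − d_q|, and let a_1, ..., a_k ∈ ℂ with |a_j| ≥ m_min. Suppose d̂_1, ..., d̂_k ∈ ℂ with |d̂_j| ≤ d and â_1, ..., â_k ∈ ℂ satisfy ‖Σ_{j=1}^{k} â_j φ_{2k−1}(d̂_j) − Σ_{j=1}^{k} a_j φ_{2k−1}(d_j)‖₂ < σ. Then ‖η_{k,k}(d_1,...,d_k, d̂_1,...,d̂_k)‖_∞ < ((1+d)^{2k−1} / d_min^{k−1})·(σ/m_min), i.e. for every j, ∏_{q=1}^{k} |d_j − d̂_q| < ((1+d)^{2k−1}/d_min^{k−1})·(σ/m_min). -/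
open Finset Matrix

/-- The Euclidean (`ℓ²`) norm of a complex vector. -/
noncomputable def enorm₂ {m : ℕ} (v : Fin m → ℂ) : ℝ :=
  Real.sqrt (∑ i, ‖v i‖ ^ 2)

open Polynomial in
lemma l1_step (P : Polynomial ℂ) (r : ℂ) (n : ℕ) (hdeg : P.natDegree ≤ n) :
    ∑ i ∈ Finset.range (n + 1 + 1), ‖((X - C r) * P).coeff i‖ ≤
      (1 + ‖r‖) * ∑ i ∈ Finset.range (n + 1), ‖P.coeff i‖ := by
  have h1 : ∀ i, ‖((X - C r) * P).coeff i‖ ≤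
      ‖(X * P).coeff i‖ + ‖r‖ * ‖P.coeff i‖ := by
    intro i
    have hsplit : (X - C r) * P = X * P - C r * P := by ring
    rw [hsplit, Polynomial.coeff_sub, Polynomial.coeff_C_mul]
    exact (norm_sub_le _ _).trans (by rw [norm_mul])
  have h2 : ∑ i ∈ Finset.range (n + 1 + 1), ‖(X * P).coeff i‖ =
      ∑ i ∈ Finset.range (n + 1), ‖P.coeff i‖ := by
    rw [Finset.sum_range_succ']
    simp [Polynomial.coeff_X_mul, Polynomial.mul_coeff_zero]
  have h3 : ∑ i ∈ Finset.range (n + 1 + 1), ‖P.coeff i‖ =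
      ∑ i ∈ Finset.range (n + 1), ‖P.coeff i‖ := by
    rw [Finset.sum_range_succ]
    have : P.coeff (n + 1) = 0 := Polynomial.coeff_eq_zero_of_natDegree_lt (by omega)
    simp [this]
  have step : ∑ i ∈ Finset.range (n + 1 + 1), ‖((X - C r) * P).coeff i‖ ≤
      ∑ i ∈ Finset.range (n + 1 + 1),
        (‖(X * P).coeff i‖ + ‖r‖ * ‖P.coeff i‖) := by
    apply Finset.sum_le_sum
    intro i _
    exact h1 i
  refine step.trans ?_
  rw [Finset.sum_add_distrib, ← Finset.mul_sum, h2, h3]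
  exact le_of_eq (by ring)

open Polynomial in
lemma l1_coeff_bound {ι : Type*} (s : Finset ι) (f : ι → ℂ) :
    ∑ i ∈ Finset.range (s.card + 1),
      ‖(∏ t ∈ s, (X - C (f t))).coeff i‖ ≤
    ∏ t ∈ s, (1 + ‖f t‖) := by
  classical
  induction s using Finset.induction_on with
  | empty => simp
  | insert b s ha ih =>
    have hdeg : (∏ t ∈ s, (X - C (f t))).natDegree ≤ s.card := by
      refine (Polynomial.natDegree_prod_le _ _).trans ?_
      simp [Polynomial.natDegree_X_sub_C]
    rw [Finset.prod_insert ha, Finset.prod_insert ha, Finset.card_insert_of_notMem ha]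
    refine (l1_step _ _ _ hdeg).trans ?_
    refine mul_le_mul_of_nonneg_left ih ?_
    positivity

open Polynomial in
lemma swap_sum {k N : ℕ} (P : Polynomial ℂ) (hdeg : P.natDegree < N)
    (b z : Fin k → ℂ) :
    ∑ i ∈ Finset.range N, P.coeff i * ∑ q, b q * z q ^ i =
      ∑ q, b q * P.eval (z q) := by
  have h : ∀ i ∈ Finset.range N,
      P.coeff i * ∑ q, b q * z q ^ i = ∑ q, b q * (P.coeff i * z q ^ i) := by
    intro i _
    rw [Finset.mul_sum]
    exact Finset.sum_congr rfl fun q _ => by ring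
  rw [Finset.sum_congr rfl h, Finset.sum_comm]
  refine Finset.sum_congr rfl fun q _ => ?_
  rw [← Finset.mul_sum, ← Polynomial.eval_eq_sum_range' hdeg]

theorem stmt17 (k : ℕ) (hk : 1 ≤ k) (d mmin σ : ℝ)
    (hd : 0 < d) (hmmin : 0 < mmin) (hσ : 0 < σ)
    (dv : Fin k → ℂ) (hinj : Function.Injective dv)
    (hdv : ∀ j, ‖dv j‖ ≤ d)
    (dmin : ℝ) (hdminpos : 0 < dmin)
    (hdmin : ∀ p q, p ≠ q → dmin ≤ ‖dv p - dv q‖)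
    (a : Fin k → ℂ) (ha : ∀ j, mmin ≤ ‖a j‖)
    (dhat : Fin k → ℂ) (hdhat : ∀ j, ‖dhat j‖ ≤ d)
    (ahat : Fin k → ℂ)
    (happrox : enorm₂ (fun i : Fin (2 * k - 1 + 1) =>
        (∑ j, ahat j * phiVec (2 * k - 1) (dhat j) i) -
          ∑ j, a j * phiVec (2 * k - 1) (dv j) i) < σ) :
    ∀ j, ∏ q, ‖dv j - dhat q‖ <
      (1 + d) ^ (2 * k - 1) / dmin ^ (k - 1) * (σ / mmin) := by
  classical
  intro j
  open Polynomial in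
  set N := 2 * k - 1 + 1 with hN
  -- the error vector and its norm
  set v : Fin N → ℂ := fun i : Fin N =>
      (∑ j, ahat j * phiVec (2 * k - 1) (dhat j) i) -
        ∑ j, a j * phiVec (2 * k - 1) (dv j) i with hv
  set ε : ℝ := enorm₂ v with hε
  have hεnonneg : 0 ≤ ε := Real.sqrt_nonneg _
  have hεσ : ε < σ := happrox
  -- component bound
  have hcomp : ∀ i : Fin N, ‖v i‖ ≤ ε := by
    intro i
    have h1 : ‖v i‖ ^ 2 ≤ ∑ t, ‖v t‖ ^ 2 :=
      Finset.single_le_sum (f := fun t => ‖v t‖ ^ 2)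
        (fun t _ => sq_nonneg _) (Finset.mem_univ i)
    have := Real.sqrt_le_sqrt h1
    rwa [Real.sqrt_sq (norm_nonneg _)] at this
  -- the polynomial
  set s : Finset (Fin k ⊕ Fin k) :=
      Finset.univ.disjSum (Finset.univ.erase j) with hs
  set f : Fin k ⊕ Fin k → ℂ := Sum.elim dhat dv with hf
  set P : Polynomial ℂ := ∏ t ∈ s, (X - C (f t)) with hP
  have hcard : s.card = 2 * k - 1 := by
    rw [hs, Finset.card_disjSum, Finset.card_erase_of_mem (Finset.mem_univ j)]
    simp only [Finset.card_univ, Fintype.card_fin]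
    omega
  have hdeg : P.natDegree ≤ 2 * k - 1 := by
    rw [hP, ← hcard]
    refine (Polynomial.natDegree_prod_le _ _).trans ?_
    simp [Polynomial.natDegree_X_sub_C]
  have hdegN : P.natDegree < N := by omega
  -- evaluation facts
  have hevalhat : ∀ q : Fin k, P.eval (dhat q) = 0 := by
    intro q
    rw [hP, Polynomial.eval_prod]
    refine Finset.prod_eq_zero (i := Sum.inl q) ?_ ?_
    · rw [hs]; exact Finset.inl_mem_disjSum.mpr (Finset.mem_univ q)
    · simp [hf]
  have hevaldv : ∀ p : Fin k, p ≠ j → P.eval (dv p) = 0 := by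
    intro p hp
    rw [hP, Polynomial.eval_prod]
    refine Finset.prod_eq_zero (i := Sum.inr p) ?_ ?_
    · rw [hs]; exact Finset.inr_mem_disjSum.mpr (Finset.mem_erase.mpr ⟨hp, Finset.mem_univ p⟩)
    · simp [hf]
  -- key identity
  have hEv : ∀ i : Fin N, v i = (∑ q, ahat q * dhat q ^ (i : ℕ)) -
      ∑ p, a p * dv p ^ (i : ℕ) := by
    intro i
    simp [hv, phiVec]
  have hkey : ∑ i ∈ Finset.range N, P.coeff i *
      ((∑ q, ahat q * dhat q ^ i) - ∑ p, a p * dv p ^ i) =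
      - (a j * P.eval (dv j)) := by
    have e1 : ∑ i ∈ Finset.range N, P.coeff i *
        ((∑ q, ahat q * dhat q ^ i) - ∑ p, a p * dv p ^ i) =
        (∑ i ∈ Finset.range N, P.coeff i * ∑ q, ahat q * dhat q ^ i) -
          ∑ i ∈ Finset.range N, P.coeff i * ∑ p, a p * dv p ^ i := by
      rw [← Finset.sum_sub_distrib]
      exact Finset.sum_congr rfl fun i _ => by ring
    rw [e1, swap_sum P hdegN, swap_sum P hdegN]
    have e2 : ∑ q, ahat q * P.eval (dhat q) = 0 := by
      refine Finset.sum_eq_zero fun q _ => ?_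
      rw [hevalhat q, mul_zero]
    have e3 : ∑ p, a p * P.eval (dv p) = a j * P.eval (dv j) := by
      refine Finset.sum_eq_single j (fun p _ hp => ?_) (fun h => absurd (Finset.mem_univ j) h)
      rw [hevaldv p hp, mul_zero]
    rw [e2, e3, zero_sub]
  -- upper bound on |a j * P.eval (dv j)|
  have hub : ‖a j * P.eval (dv j)‖ < (1 + d) ^ (2 * k - 1) * σ := by
    have habs : ‖a j * P.eval (dv j)‖ =
        ‖∑ i ∈ Finset.range N, P.coeff i *
          ((∑ q, ahat q * dhat q ^ i) - ∑ p, a p * dv p ^ i)‖ := by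
      rw [hkey, norm_neg]
    rw [habs]
    have tri : ‖∑ i ∈ Finset.range N, P.coeff i *
        ((∑ q, ahat q * dhat q ^ i) - ∑ p, a p * dv p ^ i)‖ ≤
        ∑ i ∈ Finset.range N, ‖P.coeff i‖ *
          ‖(∑ q, ahat q * dhat q ^ i) - ∑ p, a p * dv p ^ i‖ := by
      refine (norm_sum_le _ _).trans ?_
      apply Finset.sum_le_sum
      intro i _
      rw [norm_mul]
    have term : ∀ i ∈ Finset.range N, ‖P.coeff i‖ *
        ‖(∑ q, ahat q * dhat q ^ i) - ∑ p, a p * dv p ^ i‖ ≤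
        ‖P.coeff i‖ * ε := by
      intro i hi
      have hiN : i < N := Finset.mem_range.mp hi
      have := hcomp ⟨i, hiN⟩
      rw [hEv ⟨i, hiN⟩] at this
      exact mul_le_mul_of_nonneg_left this (norm_nonneg _)
    have hl1 : ∑ i ∈ Finset.range N, ‖P.coeff i‖ ≤ (1 + d) ^ (2 * k - 1) := by
      have h0 := l1_coeff_bound s f
      rw [hcard] at h0
      rw [← hP] at h0
      refine h0.trans ?_
      have hb : ∀ t ∈ s, 1 + ‖f t‖ ≤ 1 + d := by
        intro t _
        rcases t with q | p
        · simpa [hf] using hdhat q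
        · simpa [hf] using hdv p
      calc ∏ t ∈ s, (1 + ‖f t‖) ≤ ∏ _t ∈ s, (1 + d) :=
            Finset.prod_le_prod (fun t _ => by positivity) hb
        _ = (1 + d) ^ (2 * k - 1) := by rw [Finset.prod_const, hcard]
    calc ‖∑ i ∈ Finset.range N, P.coeff i *
          ((∑ q, ahat q * dhat q ^ i) - ∑ p, a p * dv p ^ i)‖
        ≤ ∑ i ∈ Finset.range N, ‖P.coeff i‖ *
            ‖(∑ q, ahat q * dhat q ^ i) - ∑ p, a p * dv p ^ i‖ := tri
      _ ≤ ∑ i ∈ Finset.range N, ‖P.coeff i‖ * ε := Finset.sum_le_sum term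
      _ = (∑ i ∈ Finset.range N, ‖P.coeff i‖) * ε := by
          rw [Finset.sum_mul]
      _ ≤ (1 + d) ^ (2 * k - 1) * ε :=
          mul_le_mul_of_nonneg_right hl1 hεnonneg
      _ < (1 + d) ^ (2 * k - 1) * σ := by
          refine mul_lt_mul_of_pos_left hεσ ?_
          positivity
  -- lower bound
  have hsplit : ‖a j * P.eval (dv j)‖ =
      ‖a j‖ * ((∏ q, ‖dv j - dhat q‖) *
        ∏ p ∈ Finset.univ.erase j, ‖dv j - dv p‖) := by
    rw [norm_mul]
    congr 1
    rw [hP, hs, Polynomial.eval_prod]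
    rw [Finset.prod_disjSum]
    rw [norm_mul, norm_prod, norm_prod]
    simp [hf]
  have hprodlb : dmin ^ (k - 1) ≤ ∏ p ∈ Finset.univ.erase j, ‖dv j - dv p‖ := by
    have hc : (Finset.univ.erase j).card = k - 1 := by
      rw [Finset.card_erase_of_mem (Finset.mem_univ j)]
      simp
    calc dmin ^ (k - 1) = ∏ _p ∈ Finset.univ.erase j, dmin := by
          rw [Finset.prod_const, hc]
      _ ≤ ∏ p ∈ Finset.univ.erase j, ‖dv j - dv p‖ := by
          refine Finset.prod_le_prod (fun _ _ => le_of_lt hdminpos) ?_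
          intro p hp
          exact hdmin j p (Ne.symm (Finset.mem_erase.mp hp).1)
  have hTnonneg : 0 ≤ ∏ q, ‖dv j - dhat q‖ :=
    Finset.prod_nonneg fun q _ => norm_nonneg _
  have hlb : mmin * (dmin ^ (k - 1) * ∏ q, ‖dv j - dhat q‖) ≤
      ‖a j * P.eval (dv j)‖ := by
    rw [hsplit]
    refine mul_le_mul (ha j) ?_ ?_ (norm_nonneg _)
    · rw [mul_comm (dmin ^ (k - 1))]
      exact mul_le_mul_of_nonneg_left hprodlb hTnonneg
    · exact mul_nonneg (pow_nonneg hdminpos.le _) hTnonneg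
  have hfinal : mmin * (dmin ^ (k - 1) * ∏ q, ‖dv j - dhat q‖) <
      (1 + d) ^ (2 * k - 1) * σ := lt_of_le_of_lt hlb hub
  rw [div_mul_div_comm, lt_div_iff₀ (mul_pos (pow_pos hdminpos _) hmmin)]
  calc (∏ q, ‖dv j - dhat q‖) * (dmin ^ (k - 1) * mmin)
      = mmin * (dmin ^ (k - 1) * ∏ q, ‖dv j - dhat q‖) := by ring
    _ < (1 + d) ^ (2 * k - 1) * σ := hfinal
end
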